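/- arXiv:2301.08106 — 10 statements merged into one kernel-verified Lean document; each statement's English description precedes it below -/
import Mathlib

section
/- For n ≥ 4, and any (a,b) with 1 ≤ a,b ≤ n-3, the vector X_n^{(a,b)} is an eigenvector of the adjacency matrix of the n-Queens graph Q(n) associated with the eigenvalue -4. -/
open Finset Matrix

def queensGraph (n : ℕ) : SimpleGraph (Fin n × Fin n) where
  Adj v w := v ≠ w ∧ ((v.1 : ℤ) = w.1 ∨ (v.2 : ℤ) = w.2 ∨
    (v.1 : ℤ) + v.2 = w.1 + w.2 ∨ (v.1 : ℤ) - v.2 = w.1 - w.2)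
  symm := ⟨by rintro v w ⟨h1, h2⟩; exact ⟨h1.symm, by omega⟩⟩
  loopless := ⟨by rintro v ⟨h1, _⟩; exact h1 rfl⟩

instance (n : ℕ) : DecidableRel (queensGraph n).Adj := fun v w =>
  inferInstanceAs (Decidable (_ ∧ _))

/-- The entry of the vector `X₄` at 1-based position `(i, j)`. -/
noncomputable def X4ent (i j : ℤ) : ℝ :=
  if (i = 1 ∧ j = 2) ∨ (i = 2 ∧ j = 4) ∨ (i = 3 ∧ j = 1) ∨ (i = 4 ∧ j = 3) then 1
  else if (i = 1 ∧ j = 3) ∨ (i = 2 ∧ j = 1) ∨ (i = 3 ∧ j = 4) ∨ (i = 4 ∧ j = 2) then -1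
  else 0

/-- The vector `X_n^{(a,b)}`, where `a, b` are 1-based and the board square of the
vertex `v : Fin n × Fin n` has 1-based coordinates `(v.1 + 1, v.2 + 1)`. -/
noncomputable def Xvec (n : ℕ) (a b : ℤ) (v : Fin n × Fin n) : ℝ :=
  let i : ℤ := (v.1 : ℤ) + 1
  let j : ℤ := (v.2 : ℤ) + 1
  if a ≤ i ∧ i ≤ a + 3 ∧ b ≤ j ∧ j ≤ b + 3 then X4ent (i - a + 1) (j - b + 1) else 0

/-! ### Auxiliary lemmas -/

lemma X4ent_zero_left (i j : ℤ) (h : i < 1 ∨ 4 < i) : X4ent i j = 0 := by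
  unfold X4ent; split_ifs <;> first | rfl | (exfalso; rcases h with h|h <;> omega)

lemma X4ent_zero_right (i j : ℤ) (h : j < 1 ∨ 4 < j) : X4ent i j = 0 := by
  unfold X4ent; split_ifs <;> first | rfl | (exfalso; rcases h with h|h <;> omega)

lemma X4Lrow (i : ℤ) : X4ent i 1 + X4ent i 2 + X4ent i 3 + X4ent i 4 = 0 := by
  have h : i = 1 ∨ i = 2 ∨ i = 3 ∨ i = 4 ∨ (i < 1 ∨ 4 < i) := by omega
  rcases h with h|h|h|h|h <;>
    first
    | (subst h; norm_num [X4ent])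
    | (rw [X4ent_zero_left i 1 h, X4ent_zero_left i 2 h, X4ent_zero_left i 3 h,
        X4ent_zero_left i 4 h]; ring)

lemma X4Lcol (j : ℤ) : X4ent 1 j + X4ent 2 j + X4ent 3 j + X4ent 4 j = 0 := by
  have h : j = 1 ∨ j = 2 ∨ j = 3 ∨ j = 4 ∨ (j < 1 ∨ 4 < j) := by omega
  rcases h with h|h|h|h|h <;>
    first
    | (subst h; norm_num [X4ent])
    | (rw [X4ent_zero_right 1 j h, X4ent_zero_right 2 j h, X4ent_zero_right 3 j h,
        X4ent_zero_right 4 j h]; ring)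

lemma X4Ldiag (s : ℤ) : X4ent 1 (s-1) + X4ent 2 (s-2) + X4ent 3 (s-3) + X4ent 4 (s-4) = 0 := by
  have h : s = 2 ∨ s = 3 ∨ s = 4 ∨ s = 5 ∨ s = 6 ∨ s = 7 ∨ s = 8 ∨ (s < 2 ∨ 8 < s) := by omega
  rcases h with h|h|h|h|h|h|h|h <;>
    first
    | (subst h; norm_num [X4ent])
    | (rw [X4ent_zero_right 1 (s-1) (by omega), X4ent_zero_right 2 (s-2) (by omega),
        X4ent_zero_right 3 (s-3) (by omega), X4ent_zero_right 4 (s-4) (by omega)]; ring)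

lemma X4Lanti (d : ℤ) : X4ent 1 (1-d) + X4ent 2 (2-d) + X4ent 3 (3-d) + X4ent 4 (4-d) = 0 := by
  have h : d = -3 ∨ d = -2 ∨ d = -1 ∨ d = 0 ∨ d = 1 ∨ d = 2 ∨ d = 3 ∨ (d < -3 ∨ 3 < d) := by omega
  rcases h with h|h|h|h|h|h|h|h <;>
    first
    | (subst h; norm_num [X4ent])
    | (rw [X4ent_zero_right 1 (1-d) (by omega), X4ent_zero_right 2 (2-d) (by omega),
        X4ent_zero_right 3 (3-d) (by omega), X4ent_zero_right 4 (4-d) (by omega)]; ring)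

/-- Pure-integer version of `Xvec` with 1-based coordinates. -/
noncomputable def Xz (a b i j : ℤ) : ℝ :=
  if a ≤ i ∧ i ≤ a + 3 ∧ b ≤ j ∧ j ≤ b + 3 then X4ent (i - a + 1) (j - b + 1) else 0

lemma Xz_eval (a b i j : ℤ) : Xz a b i j = X4ent (i - a + 1) (j - b + 1) := by
  unfold Xz; split_ifs with h
  · rfl
  · rcases not_and_or.mp h with h1 | h1
    · exact (X4ent_zero_left _ _ (by omega)).symm
    rcases not_and_or.mp h1 with h2 | h2
    · exact (X4ent_zero_left _ _ (by omega)).symm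
    rcases not_and_or.mp h2 with h3 | h3
    · exact (X4ent_zero_right _ _ (by omega)).symm
    · exact (X4ent_zero_right _ _ (by omega)).symm

lemma Xz_zero_row (a b i j : ℤ) (h : i < a ∨ a + 3 < i) : Xz a b i j = 0 := by
  rw [Xz_eval]; exact X4ent_zero_left _ _ (by omega)

lemma Xz_zero_col (a b i j : ℤ) (h : j < b ∨ b + 3 < j) : Xz a b i j = 0 := by
  rw [Xz_eval]; exact X4ent_zero_right _ _ (by omega)

lemma Xz_row' (a b i : ℤ) :
    Xz a b i (b-1+1) + Xz a b i (b-1+1+1) + Xz a b i (b-1+2+1) + Xz a b i (b-1+3+1) = 0 := by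
  simp only [Xz_eval]
  rw [show b-1+1 - b + 1 = (1:ℤ) by ring, show b-1+1+1 - b + 1 = (2:ℤ) by ring,
    show b-1+2+1 - b + 1 = (3:ℤ) by ring, show b-1+3+1 - b + 1 = (4:ℤ) by ring]
  exact X4Lrow _

lemma Xz_col' (a b j : ℤ) :
    Xz a b (a-1+1) j + Xz a b (a-1+1+1) j + Xz a b (a-1+2+1) j + Xz a b (a-1+3+1) j = 0 := by
  simp only [Xz_eval]
  rw [show a-1+1 - a + 1 = (1:ℤ) by ring, show a-1+1+1 - a + 1 = (2:ℤ) by ring,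
    show a-1+2+1 - a + 1 = (3:ℤ) by ring, show a-1+3+1 - a + 1 = (4:ℤ) by ring]
  exact X4Lcol _

lemma Xz_diag' (a b s : ℤ) :
    Xz a b (a-1+1) (s-(a-1)+1) + Xz a b (a-1+1+1) (s-(a-1+1)+1)
    + Xz a b (a-1+2+1) (s-(a-1+2)+1) + Xz a b (a-1+3+1) (s-(a-1+3)+1) = 0 := by
  simp only [Xz_eval]
  rw [show a-1+1 - a + 1 = (1:ℤ) by ring, show a-1+1+1 - a + 1 = (2:ℤ) by ring,
    show a-1+2+1 - a + 1 = (3:ℤ) by ring, show a-1+3+1 - a + 1 = (4:ℤ) by ring,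
    show s-(a-1)+1 - b + 1 = (s-a-b+4) - 1 by ring, show s-(a-1+1)+1 - b + 1 = (s-a-b+4) - 2 by ring,
    show s-(a-1+2)+1 - b + 1 = (s-a-b+4) - 3 by ring, show s-(a-1+3)+1 - b + 1 = (s-a-b+4) - 4 by ring]
  exact X4Ldiag _

lemma Xz_anti' (a b d : ℤ) :
    Xz a b (a-1+1) (a-1 - d + 1) + Xz a b (a-1+1+1) (a-1+1 - d + 1)
    + Xz a b (a-1+2+1) (a-1+2 - d + 1) + Xz a b (a-1+3+1) (a-1+3 - d + 1) = 0 := by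
  simp only [Xz_eval]
  rw [show a-1+1 - a + 1 = (1:ℤ) by ring, show a-1+1+1 - a + 1 = (2:ℤ) by ring,
    show a-1+2+1 - a + 1 = (3:ℤ) by ring, show a-1+3+1 - a + 1 = (4:ℤ) by ring,
    show a-1 - d + 1 - b + 1 = 1 - (d + b - a) by ring,
    show a-1+1 - d + 1 - b + 1 = 2 - (d + b - a) by ring,
    show a-1+2 - d + 1 - b + 1 = 3 - (d + b - a) by ring,
    show a-1+3 - d + 1 - b + 1 = 4 - (d + b - a) by ring]
  exact X4Lanti _

lemma sum_fin_support4 {n : ℕ} (F : ℤ → ℝ) (c : ℤ) (h0 : 0 ≤ c) (hn : c + 4 ≤ (n:ℤ))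
    (hs : ∀ j : ℤ, j < c ∨ c + 4 ≤ j → F j = 0) :
    ∑ j : Fin n, F (j:ℤ) = F c + F (c+1) + F (c+2) + F (c+3) := by
  have h1 : ∑ j : Fin n, F (j:ℤ) = ∑ j ∈ Finset.range n, F (j:ℤ) :=
    Fin.sum_univ_eq_sum_range (fun m : ℕ => F (m:ℤ)) n
  rw [h1]
  set m : ℕ := c.toNat with hm
  have hmc : (m : ℤ) = c := Int.toNat_of_nonneg h0
  have hsub : Finset.Ico m (m+4) ⊆ Finset.range n := by
    intro x hx
    simp only [Finset.mem_Ico] at hx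
    simp only [Finset.mem_range]
    omega
  have h2 : ∑ j ∈ Finset.range n, F (j:ℤ) = ∑ j ∈ Finset.Ico m (m+4), F (j:ℤ) := by
    refine (Finset.sum_subset hsub ?_).symm
    intro x _ hx
    simp only [Finset.mem_Ico, not_and_or, not_le, not_lt] at hx
    apply hs
    omega
  rw [h2, Finset.sum_Ico_eq_sum_range]
  have h4 : m + 4 - m = 4 := by omega
  rw [h4, Finset.sum_range_succ, Finset.sum_range_succ, Finset.sum_range_succ,
    Finset.sum_range_one]
  have g : ∀ k : ℕ, ((m + k : ℕ) : ℤ) = c + k := by intro k; push_cast [hmc]; omega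
  rw [show ((m + 0 : ℕ) : ℤ) = c by simpa using g 0, show ((m + 1 : ℕ) : ℤ) = c + 1 from g 1,
    show ((m + 2 : ℕ) : ℤ) = c + 2 from g 2, show ((m + 3 : ℕ) : ℤ) = c + 3 from g 3]

lemma pick_diag (g : ℤ → ℝ) (c s i0 : ℤ) (hg : ∀ t, t < c ∨ c + 4 ≤ t → g t = 0) :
    (if s = i0 + c then g c else 0) + (if s = i0 + (c+1) then g (c+1) else 0)
    + (if s = i0 + (c+2) then g (c+2) else 0) + (if s = i0 + (c+3) then g (c+3) else 0)
    = g (s - i0) := by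
  split_ifs <;>
    first
    | (exfalso; omega)
    | (rw [show s - i0 = c by omega]; ring)
    | (rw [show s - i0 = c + 1 by omega]; ring)
    | (rw [show s - i0 = c + 2 by omega]; ring)
    | (rw [show s - i0 = c + 3 by omega]; ring)
    | (rw [hg (s - i0) (by omega)]; ring)

lemma pick_anti (g : ℤ → ℝ) (c d i0 : ℤ) (hg : ∀ t, t < c ∨ c + 4 ≤ t → g t = 0) :
    (if d = i0 - c then g c else 0) + (if d = i0 - (c+1) then g (c+1) else 0)
    + (if d = i0 - (c+2) then g (c+2) else 0) + (if d = i0 - (c+3) then g (c+3) else 0)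
    = g (i0 - d) := by
  split_ifs <;>
    first
    | (exfalso; omega)
    | (rw [show i0 - d = c by omega]; ring)
    | (rw [show i0 - d = c + 1 by omega]; ring)
    | (rw [show i0 - d = c + 2 by omega]; ring)
    | (rw [show i0 - d = c + 3 by omega]; ring)
    | (rw [hg (i0 - d) (by omega)]; ring)

/-- for `n ≥ 4` and `(a,b) ∈ [n-3]²`, `X_n^{(a,b)}` is an eigenvector of the
adjacency matrix of `Q(n)` for the eigenvalue `-4`. -/
theorem stmt0 (n : ℕ) (hn : 4 ≤ n) (a b : ℤ) (ha1 : 1 ≤ a) (ha2 : a ≤ (n : ℤ) - 3)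
    (hb1 : 1 ≤ b) (hb2 : b ≤ (n : ℤ) - 3) :
    (queensGraph n).adjMatrix ℝ *ᵥ Xvec n a b = (-4 : ℝ) • Xvec n a b ∧ Xvec n a b ≠ 0 := by
  have hX : ∀ w : Fin n × Fin n, Xvec n a b w = Xz a b ((w.1:ℤ)+1) ((w.2:ℤ)+1) := fun w => rfl
  have hnz : (n:ℤ) - 3 ≤ (n:ℤ) := by omega
  -- row sums over a full board row vanish
  have rowFin : ∀ i0 : ℤ, (∑ j : Fin n, Xz a b (i0+1) ((j:ℤ)+1)) = 0 := by
    intro i0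
    have h := sum_fin_support4 (n := n) (fun t => Xz a b (i0+1) (t+1)) (b-1) (by omega) (by omega)
      (fun t ht => Xz_zero_col a b _ _ (by omega))
    rw [h]
    exact Xz_row' a b (i0+1)
  have colFin : ∀ j0 : ℤ, (∑ i : Fin n, Xz a b ((i:ℤ)+1) (j0+1)) = 0 := by
    intro j0
    have h := sum_fin_support4 (n := n) (fun t => Xz a b (t+1) (j0+1)) (a-1) (by omega) (by omega)
      (fun t ht => Xz_zero_row a b _ _ (by omega))
    rw [h]
    exact Xz_col' a b (j0+1)
  constructor
  · funext v
    have hprod : ∀ w : Fin n × Fin n, (v.1:ℤ) = (w.1:ℤ) → (v.2:ℤ) = (w.2:ℤ) → v = w := by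
      intro w h1 h2
      have e1 : v.1 = w.1 := Fin.ext (by exact_mod_cast h1)
      have e2 : v.2 = w.2 := Fin.ext (by exact_mod_cast h2)
      exact Prod.ext e1 e2
    have hpt : ∀ w : Fin n × Fin n,
        (if (queensGraph n).Adj v w then (1:ℝ) else 0) * Xvec n a b w
        = (if (v.1:ℤ) = (w.1:ℤ) then Xvec n a b w else 0)
        + (if (v.2:ℤ) = (w.2:ℤ) then Xvec n a b w else 0)
        + (if (v.1:ℤ) + (v.2:ℤ) = (w.1:ℤ) + (w.2:ℤ) then Xvec n a b w else 0)
        + (if (v.1:ℤ) - (v.2:ℤ) = (w.1:ℤ) - (w.2:ℤ) then Xvec n a b w else 0)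
        - (if w = v then 4 * Xvec n a b v else 0) := by
      intro w
      by_cases hw : w = v
      · subst hw
        have : ¬ (queensGraph n).Adj w w := (queensGraph n).irrefl
        simp [this]
        ring
      · have hne : v ≠ w := fun h => hw h.symm
        have hA : (queensGraph n).Adj v w ↔ ((v.1:ℤ) = (w.1:ℤ) ∨ (v.2:ℤ) = (w.2:ℤ) ∨
            (v.1:ℤ) + (v.2:ℤ) = (w.1:ℤ) + (w.2:ℤ) ∨
            (v.1:ℤ) - (v.2:ℤ) = (w.1:ℤ) - (w.2:ℤ)) := by
          simp [queensGraph, hne]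
        by_cases h1 : (v.1:ℤ) = (w.1:ℤ) <;> by_cases h2 : (v.2:ℤ) = (w.2:ℤ) <;>
          by_cases h3 : (v.1:ℤ) + (v.2:ℤ) = (w.1:ℤ) + (w.2:ℤ) <;>
          by_cases h4 : (v.1:ℤ) - (v.2:ℤ) = (w.1:ℤ) - (w.2:ℤ) <;>
          first
          | (exact absurd (hprod w (by omega) (by omega)) hne)
          | (simp only [hA, h1, h2, h3, h4, hw, if_true, if_false, iff_true, iff_false];
             simp [h1, h2, h3, h4, hw]; try ring)
    -- the main computation
    have lhs_eq : ((queensGraph n).adjMatrix ℝ *ᵥ Xvec n a b) v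
        = ∑ w : Fin n × Fin n, (if (queensGraph n).Adj v w then (1:ℝ) else 0) * Xvec n a b w := by
      simp [Matrix.mulVec, dotProduct, SimpleGraph.adjMatrix_apply]
    rw [lhs_eq, Finset.sum_congr rfl (fun w _ => hpt w)]
    rw [Finset.sum_sub_distrib, Finset.sum_add_distrib, Finset.sum_add_distrib,
      Finset.sum_add_distrib]
    have S5 : (∑ w : Fin n × Fin n, if w = v then 4 * Xvec n a b v else 0)
        = 4 * Xvec n a b v := by
      rw [Finset.sum_ite_eq' Finset.univ v (fun _ => 4 * Xvec n a b v)]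
      simp
    have S1 : (∑ w : Fin n × Fin n, if (v.1:ℤ) = (w.1:ℤ) then Xvec n a b w else 0) = 0 := by
      simp only [hX]
      rw [Fintype.sum_prod_type]
      have inner : ∀ i : Fin n,
          (∑ j : Fin n, if (v.1:ℤ) = (i:ℤ) then Xz a b ((i:ℤ)+1) ((j:ℤ)+1) else 0) = 0 := by
        intro i
        by_cases h : (v.1:ℤ) = (i:ℤ)
        · simp only [if_pos h]
          exact rowFin (i:ℤ)
        · simp only [if_neg h, Finset.sum_const_zero]
      rw [Finset.sum_congr rfl (fun i _ => inner i)]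
      simp
    have S2 : (∑ w : Fin n × Fin n, if (v.2:ℤ) = (w.2:ℤ) then Xvec n a b w else 0) = 0 := by
      simp only [hX]
      rw [Fintype.sum_prod_type_right]
      have inner : ∀ j : Fin n,
          (∑ i : Fin n, if (v.2:ℤ) = (j:ℤ) then Xz a b ((i:ℤ)+1) ((j:ℤ)+1) else 0) = 0 := by
        intro j
        by_cases h : (v.2:ℤ) = (j:ℤ)
        · simp only [if_pos h]
          exact colFin (j:ℤ)
        · simp only [if_neg h, Finset.sum_const_zero]
      rw [Finset.sum_congr rfl (fun j _ => inner j)]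
      simp
    have S3 : (∑ w : Fin n × Fin n,
        if (v.1:ℤ) + (v.2:ℤ) = (w.1:ℤ) + (w.2:ℤ) then Xvec n a b w else 0) = 0 := by
      simp only [hX]
      rw [Fintype.sum_prod_type]
      set s : ℤ := (v.1:ℤ) + (v.2:ℤ) with hs
      have inner : ∀ i : Fin n,
          (∑ j : Fin n, if s = (i:ℤ) + (j:ℤ) then Xz a b ((i:ℤ)+1) ((j:ℤ)+1) else 0)
          = Xz a b ((i:ℤ)+1) (s - (i:ℤ) + 1) := by
        intro i
        have h := sum_fin_support4 (n := n)
          (fun t => if s = (i:ℤ) + t then Xz a b ((i:ℤ)+1) (t+1) else 0) (b-1)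
          (by omega) (by omega)
          (fun t ht => by
            split_ifs
            · exact Xz_zero_col a b _ _ (by omega)
            · rfl)
        rw [h]
        exact pick_diag (fun t => Xz a b ((i:ℤ)+1) (t+1)) (b-1) s (i:ℤ)
          (fun t ht => Xz_zero_col a b _ _ (by omega))
      rw [Finset.sum_congr rfl (fun i _ => inner i)]
      have h2 := sum_fin_support4 (n := n) (fun t => Xz a b (t+1) (s - t + 1)) (a-1)
        (by omega) (by omega) (fun t ht => Xz_zero_row a b _ _ (by omega))
      rw [h2]
      exact Xz_diag' a b s
    have S4 : (∑ w : Fin n × Fin n,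
        if (v.1:ℤ) - (v.2:ℤ) = (w.1:ℤ) - (w.2:ℤ) then Xvec n a b w else 0) = 0 := by
      simp only [hX]
      rw [Fintype.sum_prod_type]
      set d : ℤ := (v.1:ℤ) - (v.2:ℤ) with hd
      have inner : ∀ i : Fin n,
          (∑ j : Fin n, if d = (i:ℤ) - (j:ℤ) then Xz a b ((i:ℤ)+1) ((j:ℤ)+1) else 0)
          = Xz a b ((i:ℤ)+1) ((i:ℤ) - d + 1) := by
        intro i
        have h := sum_fin_support4 (n := n)
          (fun t => if d = (i:ℤ) - t then Xz a b ((i:ℤ)+1) (t+1) else 0) (b-1)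
          (by omega) (by omega)
          (fun t ht => by
            split_ifs
            · exact Xz_zero_col a b _ _ (by omega)
            · rfl)
        rw [h]
        exact pick_anti (fun t => Xz a b ((i:ℤ)+1) (t+1)) (b-1) d (i:ℤ)
          (fun t ht => Xz_zero_col a b _ _ (by omega))
      rw [Finset.sum_congr rfl (fun i _ => inner i)]
      have h2 := sum_fin_support4 (n := n) (fun t => Xz a b (t+1) (t - d + 1)) (a-1)
        (by omega) (by omega) (fun t ht => Xz_zero_row a b _ _ (by omega))
      rw [h2]
      exact Xz_anti' a b d
    rw [S1, S2, S3, S4, S5]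
    simp [Pi.smul_apply, smul_eq_mul]
    try ring
  · intro hzero
    have hv1 : (a - 1).toNat < n := by omega
    have hv2 : b.toNat < n := by omega
    set v0 : Fin n × Fin n := (⟨(a-1).toNat, hv1⟩, ⟨b.toNat, hv2⟩) with hv0
    have h1 : ((v0.1 : ℕ) : ℤ) = a - 1 := Int.toNat_of_nonneg (by omega)
    have h2 : ((v0.2 : ℕ) : ℤ) = b := Int.toNat_of_nonneg (by omega)
    have hval : Xvec n a b v0 = 1 := by
      rw [hX v0, h1, h2, Xz_eval]
      rw [show a - 1 + 1 - a + 1 = (1:ℤ) by ring, show b + 1 - b + 1 = (2:ℤ) by ring]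
      norm_num [X4ent]
    have : Xvec n a b v0 = 0 := congrFun hzero v0
    rw [hval] at this
    exact one_ne_zero this
end

section
/- For n ≥ 4, the family of vectors {X_n^{(a,b)} : (a,b) ∈ [n-3]²} is linearly independent in ℝ^{[n]×[n]}; in particular, the eigenvalue -4 of the n-Queens graph Q(n) has multiplicity at least (n-3)². -/
open Finset Matrix

lemma X4ent_support {i j : ℤ} (h : X4ent i j ≠ 0) :
    (i = 1 ∧ j = 2) ∨ (i = 2 ∧ j = 4) ∨ (i = 3 ∧ j = 1) ∨ (i = 4 ∧ j = 3) ∨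
    (i = 1 ∧ j = 3) ∨ (i = 2 ∧ j = 1) ∨ (i = 3 ∧ j = 4) ∨ (i = 4 ∧ j = 2) := by
  by_contra hc
  apply h
  rw [X4ent, if_neg, if_neg] <;> tauto

lemma measure_lt {n a a' b b' : ℕ} (hb' : b' < n) (h : a' < a ∨ (a' = a ∧ b' < b)) :
    a' * n + b' < a * n + b := by
  rcases h with h | ⟨rfl, h⟩
  · nlinarith
  · omega

lemma linIndep (n : ℕ) (hn : 4 ≤ n) :
    LinearIndependent ℝ
      (fun ab : Fin (n - 3) × Fin (n - 3) => Xvec n ((ab.1 : ℤ) + 1) ((ab.2 : ℤ) + 1)) := by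
  rw [Fintype.linearIndependent_iff]
  intro g hg
  have key : ∀ k : ℕ, ∀ ab : Fin (n - 3) × Fin (n - 3),
      ab.1.val * n + ab.2.val = k → g ab = 0 := by
    intro k
    induction k using Nat.strong_induction_on with
    | _ k IH =>
      intro ab hab
      have ha : ab.1.val < n - 3 := ab.1.isLt
      have hb : ab.2.val < n - 3 := ab.2.isLt
      have hp1 : ab.1.val < n := by omega
      have hp2 : ab.2.val + 1 < n := by omega
      set p : Fin n × Fin n := (⟨ab.1.val, hp1⟩, ⟨ab.2.val + 1, hp2⟩) with hpdef
      have hc1 : (p.1 : ℤ) = (ab.1.val : ℤ) := by simp [hpdef]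
      have hc2 : (p.2 : ℤ) = (ab.2.val : ℤ) + 1 := by simp [hpdef]
      have hsum := congrFun hg p
      simp only [Finset.sum_apply, Pi.smul_apply, smul_eq_mul, Pi.zero_apply] at hsum
      have hval : ∀ ab' : Fin (n - 3) × Fin (n - 3),
          Xvec n ((ab'.1 : ℤ) + 1) ((ab'.2 : ℤ) + 1) p ≠ 0 →
          ab' = ab ∨ ab'.1.val * n + ab'.2.val < k := by
        intro ab' hne
        simp only [Xvec] at hne
        by_cases hg' : ((ab'.1 : ℤ) + 1 ≤ (p.1 : ℤ) + 1 ∧ (p.1 : ℤ) + 1 ≤ (ab'.1 : ℤ) + 1 + 3 ∧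
            (ab'.2 : ℤ) + 1 ≤ (p.2 : ℤ) + 1 ∧ (p.2 : ℤ) + 1 ≤ (ab'.2 : ℤ) + 1 + 3)
        · have hs := X4ent_support (by
            intro h0
            apply hne
            rw [if_pos hg', h0])
          rw [hc1, hc2] at hs
          have hA' : ((ab'.1 : ℤ)) = (ab'.1.val : ℤ) := by simp
          have hB' : ((ab'.2 : ℤ)) = (ab'.2.val : ℤ) := by simp
          rw [hA', hB'] at hs
          have hfin : (ab'.1.val = ab.1.val ∧ ab'.2.val = ab.2.val) ∨
              ab'.1.val < ab.1.val ∨ (ab'.1.val = ab.1.val ∧ ab'.2.val < ab.2.val) := by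
            omega
          rcases hfin with ⟨h1, h2⟩ | h
          · left
            exact Prod.ext (Fin.ext h1) (Fin.ext h2)
          · right
            rw [← hab]
            exact measure_lt (by omega) (by omega)
        · exact absurd (if_neg hg') hne
      have hzero : ∀ ab' ∈ Finset.univ, ab' ≠ ab →
          g ab' * Xvec n ((ab'.1 : ℤ) + 1) ((ab'.2 : ℤ) + 1) p = 0 := by
        intro ab' _ hne
        by_cases hx : Xvec n ((ab'.1 : ℤ) + 1) ((ab'.2 : ℤ) + 1) p = 0
        · rw [hx, mul_zero]
        · rcases hval ab' hx with rfl | hlt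
          · exact absurd rfl hne
          · rw [IH _ hlt ab' rfl, zero_mul]
      rw [Finset.sum_eq_single ab hzero (fun h => absurd (Finset.mem_univ ab) h)] at hsum
      have hone : Xvec n ((ab.1 : ℤ) + 1) ((ab.2 : ℤ) + 1) p = 1 := by
        have hA : ((ab.1 : ℤ)) = (ab.1.val : ℤ) := by simp
        have hB : ((ab.2 : ℤ)) = (ab.2.val : ℤ) := by simp
        simp only [Xvec, hc1, hc2, hA, hB]
        rw [if_pos (by omega)]
        have e1 : (ab.1.val : ℤ) + 1 - ((ab.1.val : ℤ) + 1) + 1 = 1 := by ring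
        have e2 : (ab.2.val : ℤ) + 1 + 1 - ((ab.2.val : ℤ) + 1) + 1 = 2 := by ring
        rw [e1, e2, X4ent]
        norm_num
      rw [hone, mul_one] at hsum
      exact hsum
  intro i
  exact key _ i rfl

lemma adj_entry (n : ℕ) (v w : Fin n × Fin n) :
    (queensGraph n).adjMatrix ℝ v w =
    if (¬((v.1 : ℤ) = w.1 ∧ (v.2 : ℤ) = w.2)) ∧ ((v.1 : ℤ) = w.1 ∨ (v.2 : ℤ) = w.2 ∨
      (v.1 : ℤ) + v.2 = w.1 + w.2 ∨ (v.1 : ℤ) - v.2 = w.1 - w.2) then 1 else 0 := by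
  rw [SimpleGraph.adjMatrix_apply]
  apply if_congr _ rfl rfl
  show (v ≠ w ∧ _) ↔ _
  apply and_congr_left'
  rw [ne_eq, Prod.ext_iff, Fin.ext_iff, Fin.ext_iff]
  constructor
  · intro h ⟨h1, h2⟩; exact h ⟨by omega, by omega⟩
  · intro h ⟨h1, h2⟩; exact h ⟨by omega, by omega⟩

/-- indicator decomposition -/
lemma ind (i j p q : ℤ) :
    (if (¬(i = p ∧ j = q)) ∧ (i = p ∨ j = q ∨ i + j = p + q ∨ i - j = p - q)
      then (1:ℝ) else 0) =
    (if i = p then (1:ℝ) else 0) + (if j = q then (1:ℝ) else 0) +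
    (if i + j = p + q then (1:ℝ) else 0) + (if i - j = p - q then (1:ℝ) else 0) -
    4 * (if i = p ∧ j = q then (1:ℝ) else 0) := by
  split_ifs <;> (first | (exfalso; omega) | norm_num | (exfalso; tauto))

set_option maxHeartbeats 1000000 in
lemma eig (n a b : ℕ) (ha : a + 4 ≤ n) (hb : b + 4 ≤ n) :
    (queensGraph n).adjMatrix ℝ *ᵥ Xvec n ((a : ℤ) + 1) ((b : ℤ) + 1) =
    (-4 : ℝ) • Xvec n ((a : ℤ) + 1) ((b : ℤ) + 1) := by
  set X := Xvec n ((a : ℤ) + 1) ((b : ℤ) + 1) with hX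
  funext v
  have hemb : ∀ rc : Fin 4 × Fin 4, a + rc.1.val < n ∧ b + rc.2.val < n := by
    intro rc
    have := rc.1.isLt
    have := rc.2.isLt
    omega
  set emb : Fin 4 × Fin 4 → Fin n × Fin n :=
    fun rc => (⟨a + rc.1.val, (hemb rc).1⟩, ⟨b + rc.2.val, (hemb rc).2⟩) with hembdef
  have hXemb : ∀ rc : Fin 4 × Fin 4, X (emb rc) = X4ent ((rc.1.val : ℤ) + 1) ((rc.2.val : ℤ) + 1) := by
    intro rc
    have h1 := rc.1.isLt
    have h2 := rc.2.isLt
    rw [hX, Xvec]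
    simp only [hembdef]
    rw [if_pos (by push_cast; omega)]
    congr 1 <;> push_cast <;> ring
  have hXzero : ∀ w : Fin n × Fin n, w ∉ Finset.univ.image emb → X w = 0 := by
    intro w hw
    rw [hX, Xvec]
    rw [if_neg]
    rintro ⟨h1, h2, h3, h4⟩
    apply hw
    have hw1 : a ≤ w.1.val ∧ w.1.val ≤ a + 3 := by omega
    have hw2 : b ≤ w.2.val ∧ w.2.val ≤ b + 3 := by omega
    refine Finset.mem_image.mpr ⟨(⟨w.1.val - a, by omega⟩, ⟨w.2.val - b, by omega⟩),
      Finset.mem_univ _, ?_⟩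
    simp only [hembdef]
    exact Prod.ext (Fin.ext (by simp; omega)) (Fin.ext (by simp; omega))
  have hgen : ∀ c : Fin n × Fin n → ℝ, ∑ w, c w * X w =
      ∑ rc : Fin 4 × Fin 4, c (emb rc) * X4ent ((rc.1.val : ℤ) + 1) ((rc.2.val : ℤ) + 1) := by
    intro c
    have hinj : ∀ x ∈ Finset.univ, ∀ y ∈ Finset.univ, emb x = emb y → x = y := by
      intro x _ y _ hxy
      simp only [hembdef, Prod.ext_iff, Fin.ext_iff] at hxy
      exact Prod.ext (Fin.ext (by omega)) (Fin.ext (by omega))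
    rw [← Finset.sum_subset (Finset.subset_univ (Finset.univ.image emb))
      (fun w _ hw => by rw [hXzero w hw, mul_zero])]
    rw [Finset.sum_image hinj]
    exact Finset.sum_congr rfl fun rc _ => by rw [hXemb]
  have e0n : (0 : Fin 4).val = 0 := rfl
  have e1n : (1 : Fin 4).val = 1 := rfl
  have e2n : (2 : Fin 4).val = 2 := rfl
  have e3n : (3 : Fin 4).val = 3 := rfl
  have hco1 : ∀ rc : Fin 4 × Fin 4, (((emb rc).1 : Fin n) : ℤ) = (a : ℤ) + (rc.1.val : ℤ) := by
    intro rc; simp [hembdef]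
  have hco2 : ∀ rc : Fin 4 × Fin 4, (((emb rc).2 : Fin n) : ℤ) = (b : ℤ) + (rc.2.val : ℤ) := by
    intro rc; simp [hembdef]
  have hrow : ∑ w : Fin n × Fin n, (if (v.1 : ℤ) = (w.1 : ℤ) then (1:ℝ) else 0) * X w = 0 := by
    rw [hgen, Fintype.sum_prod_type]
    simp only [Fin.sum_univ_four, e0n, e1n, e2n, e3n, hco1, hco2]
    norm_num [X4ent]
  have hcol : ∑ w : Fin n × Fin n, (if (v.2 : ℤ) = (w.2 : ℤ) then (1:ℝ) else 0) * X w = 0 := by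
    rw [hgen, Fintype.sum_prod_type]
    simp only [Fin.sum_univ_four, e0n, e1n, e2n, e3n, hco1, hco2]
    norm_num [X4ent]
    ring
  have hdiag : ∑ w : Fin n × Fin n,
      (if (v.1 : ℤ) + (v.2 : ℤ) = (w.1 : ℤ) + (w.2 : ℤ) then (1:ℝ) else 0) * X w = 0 := by
    rw [hgen, Fintype.sum_prod_type]
    simp only [Fin.sum_univ_four, e0n, e1n, e2n, e3n, hco1, hco2]
    norm_num [X4ent]
    try ring
  have hanti : ∑ w : Fin n × Fin n,
      (if (v.1 : ℤ) - (v.2 : ℤ) = (w.1 : ℤ) - (w.2 : ℤ) then (1:ℝ) else 0) * X w = 0 := by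
    rw [hgen, Fintype.sum_prod_type]
    simp only [Fin.sum_univ_four, e0n, e1n, e2n, e3n, hco1, hco2]
    norm_num [X4ent]
    try ring
  have heqs : ∑ w : Fin n × Fin n,
      (if (v.1 : ℤ) = (w.1 : ℤ) ∧ (v.2 : ℤ) = (w.2 : ℤ) then (1:ℝ) else 0) * X w = X v := by
    have hiff : ∀ w : Fin n × Fin n, ((v.1 : ℤ) = (w.1 : ℤ) ∧ (v.2 : ℤ) = (w.2 : ℤ)) ↔ v = w := by
      intro w
      rw [Prod.ext_iff, Fin.ext_iff, Fin.ext_iff]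
      omega
    calc ∑ w : Fin n × Fin n, (if (v.1 : ℤ) = (w.1 : ℤ) ∧ (v.2 : ℤ) = (w.2 : ℤ) then (1:ℝ) else 0) * X w
        = ∑ w : Fin n × Fin n, (if v = w then X w else 0) := by
          refine Finset.sum_congr rfl fun w _ => ?_
          rw [if_congr (hiff w) rfl rfl]
          split_ifs <;> simp
      _ = X v := by rw [Finset.sum_ite_eq]; simp
  have hlhs : ((queensGraph n).adjMatrix ℝ *ᵥ X) v =
      ∑ w : Fin n × Fin n, ((if (v.1 : ℤ) = (w.1 : ℤ) then (1:ℝ) else 0) +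
        (if (v.2 : ℤ) = (w.2 : ℤ) then (1:ℝ) else 0) +
        (if (v.1 : ℤ) + (v.2 : ℤ) = (w.1 : ℤ) + (w.2 : ℤ) then (1:ℝ) else 0) +
        (if (v.1 : ℤ) - (v.2 : ℤ) = (w.1 : ℤ) - (w.2 : ℤ) then (1:ℝ) else 0) -
        4 * (if (v.1 : ℤ) = (w.1 : ℤ) ∧ (v.2 : ℤ) = (w.2 : ℤ) then (1:ℝ) else 0)) * X w := by
    rw [Matrix.mulVec, dotProduct]
    exact Finset.sum_congr rfl fun w _ => by rw [adj_entry, ind]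
  rw [hlhs]
  simp only [add_mul, sub_mul, Finset.sum_add_distrib, Finset.sum_sub_distrib, mul_assoc,
    ← Finset.mul_sum]
  rw [hrow, hcol, hdiag, hanti, heqs]
  simp only [Pi.smul_apply, smul_eq_mul]
  ring

/-- for `n ≥ 4` the family `{X_n^{(a,b)} : (a,b) ∈ [n-3]²}` is linearly
independent; in particular the eigenvalue `-4` of `Q(n)` has multiplicity at least `(n-3)²`. -/
theorem stmt1 (n : ℕ) (hn : 4 ≤ n) :
    LinearIndependent ℝ
      (fun ab : Fin (n - 3) × Fin (n - 3) => Xvec n ((ab.1 : ℤ) + 1) ((ab.2 : ℤ) + 1)) ∧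
    (n - 3) ^ 2 ≤ Module.finrank ℝ
      (Module.End.eigenspace (Matrix.toLin' ((queensGraph n).adjMatrix ℝ)) (-4 : ℝ)) := by
  have hli := linIndep n hn
  refine ⟨hli, ?_⟩
  have hmem : ∀ ab : Fin (n - 3) × Fin (n - 3),
      (fun ab : Fin (n - 3) × Fin (n - 3) => Xvec n ((ab.1 : ℤ) + 1) ((ab.2 : ℤ) + 1)) ab ∈
      Module.End.eigenspace (Matrix.toLin' ((queensGraph n).adjMatrix ℝ)) (-4 : ℝ) := by
    intro ab
    rw [Module.End.mem_eigenspace_iff, Matrix.toLin'_apply]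
    have h1 : ab.1.val + 4 ≤ n := by have := ab.1.isLt; omega
    have h2 : ab.2.val + 4 ≤ n := by have := ab.2.isLt; omega
    have heq := eig n ab.1.val ab.2.val h1 h2
    have c1 : ((ab.1.val : ℕ) : ℤ) = (ab.1 : ℤ) := by simp
    have c2 : ((ab.2.val : ℕ) : ℤ) = (ab.2 : ℤ) := by simp
    rw [c1, c2] at heq
    exact heq
  set E := Module.End.eigenspace (Matrix.toLin' ((queensGraph n).adjMatrix ℝ)) (-4 : ℝ) with hE
  set Y : Fin (n - 3) × Fin (n - 3) → E := fun ab => ⟨_, hmem ab⟩ with hY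
  have hliY : LinearIndependent ℝ Y := by
    apply LinearIndependent.of_comp E.subtype
    exact hli
  have hcard := hliY.fintype_card_le_finrank
  simpa [Fintype.card_prod, Fintype.card_fin, pow_two] using hcard
end

section
/- For odd n ≥ 4 and integer λ with 1 ≤ λ+4 ≤ n, every row sum and every column sum of the vector E_{n,λ} = P_{n,λ} + Q_{n,λ} is zero; i.e., for each ℓ ∈ [n], ∑_{j=1}^n E_{n,λ}(ℓ,j) = 0 and ∑_{i=1}^n E_{n,λ}(i,ℓ) = 0. -/
/-! `Q` is `P` reflected in the first coordinate, `i ↦ n + 1 - i`, which swaps `i ⊖ j` and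
`i ⊕ j`. Since `P` depends only on `i ⊖ j` and `i ⊕ j`, it is invariant under the point
reflection `(i, j) ↦ (n + 1 - i, n + 1 - j)`; so reflecting a line of `P` in either coordinate
only permutes its entries, and every line of `Q` sums to minus the corresponding line of `P`. -/

open Finset Matrix

/-- The vector `P_{n,λ}`; the vertex `v : Fin n × Fin n` has 1-based coordinates
`(i, j) = (v.1 + 1, v.2 + 1)`, `i ⊖ j = |i - j|`, `i ⊕ j = |i + j - (n+1)|`, and
`k = (λ + 4) - (n-1)/2`. -/
noncomputable def Pvec (n : ℕ) (lam : ℤ) (v : Fin n × Fin n) : ℝ :=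
  let i : ℤ := (v.1 : ℤ) + 1
  let j : ℤ := (v.2 : ℤ) + 1
  let k : ℤ := (lam + 4) - ((n : ℤ) - 1) / 2
  if |i - j| = (n : ℤ) - (lam + 4) then (k : ℝ)
  else if |i - j| < (n : ℤ) - (lam + 4) ∧ |i + j - ((n : ℤ) + 1)| < lam + 4 ∧
      |i - j| % 2 = ((n : ℤ) - (lam + 4)) % 2 then 1
  else 0

/-- The vector `Q_{n,λ}`. -/
noncomputable def Qvec (n : ℕ) (lam : ℤ) (v : Fin n × Fin n) : ℝ :=
  let i : ℤ := (v.1 : ℤ) + 1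
  let j : ℤ := (v.2 : ℤ) + 1
  let k : ℤ := (lam + 4) - ((n : ℤ) - 1) / 2
  if |i + j - ((n : ℤ) + 1)| = (n : ℤ) - (lam + 4) then (-k : ℝ)
  else if |i + j - ((n : ℤ) + 1)| < (n : ℤ) - (lam + 4) ∧ |i - j| < lam + 4 ∧
      |i + j - ((n : ℤ) + 1)| % 2 = ((n : ℤ) - (lam + 4)) % 2 then -1
  else 0

/-- The vector `E_{n,λ} = P_{n,λ} + Q_{n,λ}`. -/
noncomputable def Evec (n : ℕ) (lam : ℤ) (v : Fin n × Fin n) : ℝ :=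
  Pvec n lam v + Qvec n lam v

lemma Fin.intCast_rev_add_one {n : ℕ} (i : Fin n) :
    ((i.rev : ℕ) : ℤ) + 1 = (n : ℤ) + 1 - ((i : ℤ) + 1) := by
  have := i.isLt
  rw [Fin.val_rev]
  omega

lemma Qvec_eq_neg_Pvec_rev (n : ℕ) (lam : ℤ) (i j : Fin n) :
    Qvec n lam (i, j) = -Pvec n lam (i.rev, j) := by
  have hdiff : |((i.rev : ℕ) : ℤ) + 1 - ((j : ℤ) + 1)|
      = |(i : ℤ) + 1 + ((j : ℤ) + 1) - ((n : ℤ) + 1)| := by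
    rw [Fin.intCast_rev_add_one, ← abs_neg]; ring_nf
  have hsum : |((i.rev : ℕ) : ℤ) + 1 + ((j : ℤ) + 1) - ((n : ℤ) + 1)|
      = |(i : ℤ) + 1 - ((j : ℤ) + 1)| := by
    rw [Fin.intCast_rev_add_one, ← abs_neg]; ring_nf
  simp only [Pvec, Qvec, hdiff, hsum]
  split_ifs <;> simp

lemma Pvec_rev_rev (n : ℕ) (lam : ℤ) (i j : Fin n) :
    Pvec n lam (i.rev, j.rev) = Pvec n lam (i, j) := by
  have hdiff : |((i.rev : ℕ) : ℤ) + 1 - (((j.rev : ℕ) : ℤ) + 1)|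
      = |(i : ℤ) + 1 - ((j : ℤ) + 1)| := by
    rw [Fin.intCast_rev_add_one, Fin.intCast_rev_add_one, ← abs_neg]; ring_nf
  have hsum : |((i.rev : ℕ) : ℤ) + 1 + (((j.rev : ℕ) : ℤ) + 1) - ((n : ℤ) + 1)|
      = |(i : ℤ) + 1 + ((j : ℤ) + 1) - ((n : ℤ) + 1)| := by
    rw [Fin.intCast_rev_add_one, Fin.intCast_rev_add_one, ← abs_neg]; ring_nf
  simp only [Pvec, hdiff, hsum]

lemma sum_Qvec_row (n : ℕ) (lam : ℤ) (l : Fin n) :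
    ∑ j : Fin n, Qvec n lam (l, j) = -∑ j : Fin n, Pvec n lam (l, j) := by
  simp only [Qvec_eq_neg_Pvec_rev, sum_neg_distrib, neg_inj]
  rw [← Equiv.sum_comp Fin.revPerm]
  simp only [Fin.revPerm_apply, Pvec_rev_rev]

lemma sum_Qvec_col (n : ℕ) (lam : ℤ) (l : Fin n) :
    ∑ i : Fin n, Qvec n lam (i, l) = -∑ i : Fin n, Pvec n lam (i, l) := by
  simp only [Qvec_eq_neg_Pvec_rev, sum_neg_distrib, neg_inj]
  exact Equiv.sum_comp Fin.revPerm (fun i => Pvec n lam (i, l))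

theorem stmt2_general (n : ℕ) (lam : ℤ) (l : Fin n) :
    (∑ j : Fin n, Evec n lam (l, j)) = 0 ∧ (∑ i : Fin n, Evec n lam (i, l)) = 0 := by
  simp only [Evec, sum_add_distrib, sum_Qvec_row, sum_Qvec_col, add_neg_cancel, and_self]

/-- every row sum and every column sum of `E_{n,λ}` is zero. -/
theorem stmt2 (n : ℕ) (hn : 4 ≤ n) (hodd : Odd n) (lam : ℤ)
    (h1 : 1 ≤ lam + 4) (h2 : lam + 4 ≤ (n : ℤ)) (l : Fin n) :
    (∑ j : Fin n, Evec n lam (l, j)) = 0 ∧ (∑ i : Fin n, Evec n lam (i, l)) = 0 :=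
  stmt2_general n lam l
end

section
/- For odd n ≥ 4 and integer λ with 1 ≤ λ+4 ≤ n, the vector E_{n,λ} = P_{n,λ} + Q_{n,λ} satisfies A·E_{n,λ} = λ·E_{n,λ}, where A is the adjacency matrix of the n-Queens graph Q(n). -/
open Finset Matrix

namespace Stmt7A

/-- `P` as a function of the diagonal coordinate `c = i - j` and the antidiagonal
coordinate `s = i + j - (n+1)`. -/
noncomputable def Pcs (n : ℕ) (lam : ℤ) (c s : ℤ) : ℝ :=
  if |c| = (n : ℤ) - (lam + 4) then (((lam + 4) - ((n : ℤ) - 1) / 2 : ℤ) : ℝ)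
  else if |c| < (n : ℤ) - (lam + 4) ∧ |s| < lam + 4 ∧
      |c| % 2 = ((n : ℤ) - (lam + 4)) % 2 then 1
  else 0

noncomputable def Ecs (n : ℕ) (lam : ℤ) (c s : ℤ) : ℝ :=
  Pcs n lam c s - Pcs n lam s c

/-- The diagonal sums of `E`. -/
noncomputable def Ff (n : ℕ) (lam : ℤ) (t : ℤ) : ℝ :=
  (if |t| = (n : ℤ) - (lam + 4) then
      ((lam + 4 : ℤ) : ℝ) * (((lam + 4) - ((n : ℤ) - 1) / 2 : ℤ) : ℝ)
    else if |t| < (n : ℤ) - (lam + 4) ∧ |t| % 2 = ((n : ℤ) - (lam + 4)) % 2 then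
      ((lam + 4 : ℤ) : ℝ)
    else 0)
  + (if |t| ≤ lam + 3 ∧ |t| % 2 = ((n : ℤ) - (lam + 4)) % 2 then
      (if (n : ℤ) - (lam + 4) = 0 then -(((lam + 4) - ((n : ℤ) - 1) / 2 : ℤ) : ℝ)
       else -((lam + 4 : ℤ) : ℝ))
     else 0)

lemma pcs_negl (n : ℕ) (lam c s : ℤ) : Pcs n lam (-c) s = Pcs n lam c s := by
  simp [Pcs, abs_neg]

lemma pcs_negr (n : ℕ) (lam c s : ℤ) : Pcs n lam c (-s) = Pcs n lam c s := by
  simp [Pcs, abs_neg]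

lemma ecs_swap (n : ℕ) (lam c s : ℤ) : Ecs n lam s c = - Ecs n lam c s := by
  simp [Ecs]

lemma ecs_neg (n : ℕ) (lam c s : ℤ) : Ecs n lam (-s) (-c) = - Ecs n lam c s := by
  simp [Ecs, pcs_negl, pcs_negr]

lemma evec_eq (n : ℕ) (lam : ℤ) (v : Fin n × Fin n) :
    Evec n lam v = Ecs n lam ((v.1 : ℤ) - v.2) ((v.1 : ℤ) + v.2 - ((n : ℤ) - 1)) := by
  simp only [Evec, Pvec, Qvec, Ecs, Pcs]
  rw [show ((v.1 : ℤ) + 1) - ((v.2 : ℤ) + 1) = (v.1 : ℤ) - v.2 by ring,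
    show ((v.1 : ℤ) + 1) + ((v.2 : ℤ) + 1) - ((n : ℤ) + 1)
      = (v.1 : ℤ) + v.2 - ((n : ℤ) - 1) by ring]
  split_ifs <;> push_cast <;> ring

lemma rev_cast {n : ℕ} (j : Fin n) : ((j.rev : Fin n) : ℤ) = (n : ℤ) - 1 - (j : ℤ) := by
  have h := Fin.val_rev j
  have h2 := j.isLt
  omega

lemma sum_ind (n : ℕ) (a : ℤ) (f : ℤ → ℝ) :
    ∑ x : Fin n, (if (x : ℤ) = a then f x else 0) = if 0 ≤ a ∧ a < n then f a else 0 := by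
  by_cases h : 0 ≤ a ∧ a < n
  · obtain ⟨ha1, ha2⟩ := h
    rw [if_pos ⟨ha1, ha2⟩]
    rw [Finset.sum_eq_single (⟨a.toNat, by omega⟩ : Fin n)]
    · rw [if_pos (by simp; omega)]
      congr 1; simp; omega
    · intro b _ hb
      rw [if_neg]
      intro hba
      exact hb (by ext; simp at hba ⊢; omega)
    · simp
  · rw [if_neg h]
    apply Finset.sum_eq_zero
    intro x _
    rw [if_neg]
    intro hx
    exact h ⟨by omega, by rw [← hx]; exact_mod_cast x.isLt⟩

lemma sum_ite_count (n : ℕ) (c : ℝ) (P : ℤ → Prop) [DecidablePred P] (lo hi : ℤ)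
    (h : ∀ x : ℤ, (0 ≤ x ∧ x < n ∧ P x) ↔ (lo ≤ x ∧ x ≤ hi)) :
    ∑ x : Fin n, (if P (x : ℤ) then c else 0) = ((hi + 1 - lo).toNat : ℝ) * c := by
  rw [Finset.sum_ite, Finset.sum_const, Finset.sum_const_zero, add_zero]
  have hcard : (Finset.univ.filter (fun x : Fin n => P (x : ℤ))).card
      = (Finset.Icc lo hi).card := by
    refine Finset.card_nbij (fun x => (x : ℤ)) ?_ ?_ ?_
    · intro a ha
      replace ha : P (a : ℤ) := by simpa using ha
      simp only [Finset.coe_Icc, Set.mem_Icc]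
      exact ((h a).mp ⟨by positivity, by exact_mod_cast a.isLt, ha⟩)
    · intro a _ b _ hab
      simp only at hab
      ext
      exact_mod_cast hab
    · intro b hb
      simp only [Finset.coe_Icc, Set.mem_Icc] at hb
      obtain ⟨h0, h1, h2⟩ := (h b).mpr hb
      refine ⟨⟨b.toNat, by omega⟩, ?_, show ((b.toNat : ℕ) : ℤ) = b by omega⟩
      have : ((⟨b.toNat, by omega⟩ : Fin n) : ℤ) = b := show ((b.toNat : ℕ) : ℤ) = b by omega
      simp only [Finset.coe_filter, Set.mem_setOf_eq, Finset.mem_univ, true_and, this]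
      exact h2
  rw [hcard, Int.card_Icc]
  simp [mul_comm]

/-- Row sums of `E` vanish. -/
lemma rowsum (n : ℕ) (lam : ℤ) (a : ℤ) :
    ∑ w : Fin n × Fin n, (if (w.1 : ℤ) = a then
      Ecs n lam ((w.1 : ℤ) - w.2) ((w.1 : ℤ) + w.2 - ((n : ℤ) - 1)) else 0) = 0 := by
  set f : Fin n × Fin n → ℝ := fun w => if (w.1 : ℤ) = a then
      Ecs n lam ((w.1 : ℤ) - w.2) ((w.1 : ℤ) + w.2 - ((n : ℤ) - 1)) else 0 with hf
  have hneg : ∀ w : Fin n × Fin n,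
      f (((Equiv.refl (Fin n)).prodCongr Fin.revPerm) w) = - f w := by
    intro w
    simp only [hf, Equiv.prodCongr_apply, Equiv.refl_apply, Prod.map, Fin.revPerm_apply,
      rev_cast]
    by_cases hc : (w.1 : ℤ) = a
    · rw [if_pos hc, if_pos hc,
        show (w.1 : ℤ) - ((n : ℤ) - 1 - (w.2 : ℤ)) = (w.1 : ℤ) + w.2 - ((n : ℤ) - 1) by ring,
        show (w.1 : ℤ) + ((n : ℤ) - 1 - (w.2 : ℤ)) - ((n : ℤ) - 1) = (w.1 : ℤ) - w.2 by ring,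
        ecs_swap]
    · rw [if_neg hc, if_neg hc, neg_zero]
  have h := Equiv.sum_comp ((Equiv.refl (Fin n)).prodCongr Fin.revPerm) f
  rw [Finset.sum_congr rfl (fun w _ => hneg w), Finset.sum_neg_distrib] at h
  linarith

/-- Column sums of `E` vanish. -/
lemma colsum (n : ℕ) (lam : ℤ) (a : ℤ) :
    ∑ w : Fin n × Fin n, (if (w.2 : ℤ) = a then
      Ecs n lam ((w.1 : ℤ) - w.2) ((w.1 : ℤ) + w.2 - ((n : ℤ) - 1)) else 0) = 0 := by
  set f : Fin n × Fin n → ℝ := fun w => if (w.2 : ℤ) = a then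
      Ecs n lam ((w.1 : ℤ) - w.2) ((w.1 : ℤ) + w.2 - ((n : ℤ) - 1)) else 0 with hf
  have hneg : ∀ w : Fin n × Fin n,
      f ((Fin.revPerm.prodCongr (Equiv.refl (Fin n))) w) = - f w := by
    intro w
    simp only [hf, Equiv.prodCongr_apply, Equiv.refl_apply, Prod.map, Fin.revPerm_apply,
      rev_cast]
    by_cases hc : (w.2 : ℤ) = a
    · rw [if_pos hc, if_pos hc,
        show ((n : ℤ) - 1 - (w.1 : ℤ)) - w.2 = -((w.1 : ℤ) + w.2 - ((n : ℤ) - 1)) by ring,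
        show ((n : ℤ) - 1 - (w.1 : ℤ)) + w.2 - ((n : ℤ) - 1) = -((w.1 : ℤ) - w.2) by ring,
        ecs_neg]
    · rw [if_neg hc, if_neg hc, neg_zero]
  have h := Equiv.sum_comp (Fin.revPerm.prodCongr (Equiv.refl (Fin n))) f
  rw [Finset.sum_congr rfl (fun w _ => hneg w), Finset.sum_neg_distrib] at h
  linarith

/-- Reduce a diagonal sum of a `(c,s)`-function over the board to a single sum. -/
lemma diag_reduce (n : ℕ) (t : ℤ) (g : ℤ → ℤ → ℝ) :
    ∑ w : Fin n × Fin n, (if (w.1 : ℤ) - w.2 = t then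
        g ((w.1 : ℤ) - w.2) ((w.1 : ℤ) + w.2 - ((n : ℤ) - 1)) else 0)
    = ∑ b : Fin n, (if 0 ≤ (b : ℤ) + t ∧ (b : ℤ) + t < n then
        g t (2 * (b : ℤ) + t - ((n : ℤ) - 1)) else 0) := by
  rw [Fintype.sum_prod_type, Finset.sum_comm]
  apply Finset.sum_congr rfl
  intro b _
  have step : ∀ a : Fin n, (if (a : ℤ) - b = t then
        g ((a : ℤ) - b) ((a : ℤ) + b - ((n : ℤ) - 1)) else 0)
      = (if (a : ℤ) = (b : ℤ) + t then
        (fun x : ℤ => g (x - b) (x + b - ((n : ℤ) - 1))) (a : ℤ) else 0) := by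
    intro a
    by_cases h : (a : ℤ) - b = t
    · rw [if_pos h, if_pos (by omega)]
    · rw [if_neg h, if_neg (by omega)]
  rw [Finset.sum_congr rfl (fun a _ => step a),
    sum_ind n ((b : ℤ) + t) (fun x : ℤ => g (x - b) (x + b - ((n : ℤ) - 1)))]
  by_cases h : 0 ≤ (b : ℤ) + t ∧ (b : ℤ) + t < n
  · rw [if_pos h, if_pos h]
    show g ((b : ℤ) + t - b) ((b : ℤ) + t + b - ((n : ℤ) - 1)) = _
    rw [show (b : ℤ) + t - b = t by ring, show (b : ℤ) + t + b - ((n : ℤ) - 1)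
      = 2 * (b : ℤ) + t - ((n : ℤ) - 1) by ring]
  · rw [if_neg h, if_neg h]

lemma dsumP (n : ℕ) (lam : ℤ) (h1 : 1 ≤ lam + 4) (h2 : lam + 4 ≤ (n : ℤ)) (t : ℤ) :
    ∑ b : Fin n, (if 0 ≤ (b : ℤ) + t ∧ (b : ℤ) + t < n then
        Pcs n lam t (2 * (b : ℤ) + t - ((n : ℤ) - 1)) else 0)
    = if |t| = (n : ℤ) - (lam + 4) then
        ((lam + 4 : ℤ) : ℝ) * (((lam + 4) - ((n : ℤ) - 1) / 2 : ℤ) : ℝ)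
      else if |t| < (n : ℤ) - (lam + 4) ∧ |t| % 2 = ((n : ℤ) - (lam + 4)) % 2 then
        ((lam + 4 : ℤ) : ℝ)
      else 0 := by
  by_cases hA : |t| = (n : ℤ) - (lam + 4)
  · rw [if_pos hA]
    have habs : t = (n : ℤ) - (lam + 4) ∨ t = -((n : ℤ) - (lam + 4)) := by
      rcases abs_cases t with ⟨h, _⟩ | ⟨h, _⟩ <;> omega
    have hp : ∀ b : Fin n, (if 0 ≤ (b : ℤ) + t ∧ (b : ℤ) + t < n then
        Pcs n lam t (2 * (b : ℤ) + t - ((n : ℤ) - 1)) else 0)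
        = (if 0 ≤ (b : ℤ) + t ∧ (b : ℤ) + t < n then
          (((lam + 4) - ((n : ℤ) - 1) / 2 : ℤ) : ℝ) else 0) := by
      intro b
      rw [Pcs, if_pos hA]
    rw [Finset.sum_congr rfl (fun b _ => hp b),
      sum_ite_count n _ (fun x => 0 ≤ x + t ∧ x + t < n)
        (max 0 (-t)) (min ((n : ℤ) - 1) ((n : ℤ) - 1 - t)) (fun x => by omega)]
    have hc : min ((n : ℤ) - 1) ((n : ℤ) - 1 - t) + 1 - max 0 (-t) = lam + 4 := by omega
    rw [hc, show (((lam + 4 : ℤ).toNat : ℕ) : ℝ) = ((lam + 4 : ℤ) : ℝ) from by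
      exact_mod_cast Int.toNat_of_nonneg (by omega : (0 : ℤ) ≤ lam + 4)]
  · rw [if_neg hA]
    by_cases hB : |t| < (n : ℤ) - (lam + 4) ∧ |t| % 2 = ((n : ℤ) - (lam + 4)) % 2
    · rw [if_pos hB]
      have htlin : -((n : ℤ) - (lam + 4)) < t ∧ t < (n : ℤ) - (lam + 4) := abs_lt.mp hB.1
      have hpar : ((n : ℤ) - (lam + 4) - t) % 2 = 0 := by
        rcases abs_cases t with ⟨h, _⟩ | ⟨h, _⟩ <;> omega
      have hp : ∀ b : Fin n, (if 0 ≤ (b : ℤ) + t ∧ (b : ℤ) + t < n then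
          Pcs n lam t (2 * (b : ℤ) + t - ((n : ℤ) - 1)) else 0)
          = (if 0 ≤ (b : ℤ) + t ∧ (b : ℤ) + t < (n : ℤ) ∧
              -(lam + 3) ≤ 2 * (b : ℤ) + t - ((n : ℤ) - 1) ∧
              2 * (b : ℤ) + t - ((n : ℤ) - 1) ≤ lam + 3 then (1 : ℝ) else 0) := by
        intro b
        by_cases hbb : 0 ≤ (b : ℤ) + t ∧ (b : ℤ) + t < n
        · rw [if_pos hbb, Pcs, if_neg hA]
          by_cases hs : -(lam + 3) ≤ 2 * (b : ℤ) + t - ((n : ℤ) - 1) ∧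
              2 * (b : ℤ) + t - ((n : ℤ) - 1) ≤ lam + 3
          · rw [if_pos ⟨hB.1, by rw [abs_lt]; omega, hB.2⟩,
              if_pos ⟨hbb.1, hbb.2, hs.1, hs.2⟩]
          · rw [if_neg, if_neg]
            · intro hcon; exact hs ⟨by omega, by omega⟩
            · rintro ⟨-, hcon, -⟩
              rw [abs_lt] at hcon
              exact hs ⟨by omega, by omega⟩
        · rw [if_neg hbb, if_neg (by tauto)]
      rw [Finset.sum_congr rfl (fun b _ => hp b),
        sum_ite_count n _ (fun x => 0 ≤ x + t ∧ x + t < (n : ℤ) ∧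
            -(lam + 3) ≤ 2 * x + t - ((n : ℤ) - 1) ∧ 2 * x + t - ((n : ℤ) - 1) ≤ lam + 3)
          (((n : ℤ) - (lam + 4) - t) / 2) ((((n : ℤ) - (lam + 4) - t) / 2) + lam + 3)
          (fun x => by omega)]
      have hc : (((n : ℤ) - (lam + 4) - t) / 2) + lam + 3 + 1
          - (((n : ℤ) - (lam + 4) - t) / 2) = lam + 4 := by ring
      rw [hc, show (((lam + 4 : ℤ).toNat : ℕ) : ℝ) = ((lam + 4 : ℤ) : ℝ) from by
        exact_mod_cast Int.toNat_of_nonneg (by omega : (0 : ℤ) ≤ lam + 4)]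
      rw [mul_one]
    · rw [if_neg hB]
      apply Finset.sum_eq_zero
      intro b _
      rcases eq_or_ne (Pcs n lam t (2 * (b : ℤ) + t - ((n : ℤ) - 1))) 0 with h | h
      · rw [h]; simp
      · exfalso
        rw [Pcs, if_neg hA] at h
        by_cases hcond : |t| < (n : ℤ) - (lam + 4) ∧
            |2 * (b : ℤ) + t - ((n : ℤ) - 1)| < lam + 4 ∧
            |t| % 2 = ((n : ℤ) - (lam + 4)) % 2
        · exact hB ⟨hcond.1, hcond.2.2⟩
        · rw [if_neg hcond] at h; exact h rfl

lemma dsumQ (n : ℕ) (lam : ℤ) (hodd : Odd n) (h1 : 1 ≤ lam + 4) (h2 : lam + 4 ≤ (n : ℤ))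
    (t : ℤ) :
    ∑ b : Fin n, (if 0 ≤ (b : ℤ) + t ∧ (b : ℤ) + t < n then
        -Pcs n lam (2 * (b : ℤ) + t - ((n : ℤ) - 1)) t else 0)
    = if |t| ≤ lam + 3 ∧ |t| % 2 = ((n : ℤ) - (lam + 4)) % 2 then
        (if (n : ℤ) - (lam + 4) = 0 then -(((lam + 4) - ((n : ℤ) - 1) / 2 : ℤ) : ℝ)
         else -((lam + 4 : ℤ) : ℝ))
      else 0 := by
  obtain ⟨r, hr⟩ := hodd
  have hts := abs_choice t
  have htn := abs_nonneg t
  by_cases hP : |t| % 2 = ((n : ℤ) - (lam + 4)) % 2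
  swap
  · rw [if_neg (by tauto)]
    apply Finset.sum_eq_zero
    intro b _
    rcases eq_or_ne (Pcs n lam (2 * (b : ℤ) + t - ((n : ℤ) - 1)) t) 0 with h | h
    · rw [h]; simp
    · exfalso
      have hss := abs_choice (2 * (b : ℤ) + t - ((n : ℤ) - 1))
      rw [Pcs] at h
      by_cases hc1 : |2 * (b : ℤ) + t - ((n : ℤ) - 1)| = (n : ℤ) - (lam + 4)
      · exact hP (by omega)
      · rw [if_neg hc1] at h
        by_cases hc2 : |2 * (b : ℤ) + t - ((n : ℤ) - 1)| < (n : ℤ) - (lam + 4) ∧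
            |t| < lam + 4 ∧
            |2 * (b : ℤ) + t - ((n : ℤ) - 1)| % 2 = ((n : ℤ) - (lam + 4)) % 2
        · exact hP (by omega)
        · rw [if_neg hc2] at h; exact h rfl
  · -- parity holds
    by_cases hm0 : (n : ℤ) - (lam + 4) = 0
    · -- m = 0
      have hp : ∀ b : Fin n, (if 0 ≤ (b : ℤ) + t ∧ (b : ℤ) + t < n then
          -Pcs n lam (2 * (b : ℤ) + t - ((n : ℤ) - 1)) t else 0)
          = (if 0 ≤ (b : ℤ) + t ∧ (b : ℤ) + t < (n : ℤ) ∧ 2 * (b : ℤ) + t - ((n : ℤ) - 1) = 0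
            then -(((lam + 4) - ((n : ℤ) - 1) / 2 : ℤ) : ℝ) else 0) := by
        intro b
        have hss := abs_choice (2 * (b : ℤ) + t - ((n : ℤ) - 1))
        have hsn := abs_nonneg (2 * (b : ℤ) + t - ((n : ℤ) - 1))
        by_cases hbb : 0 ≤ (b : ℤ) + t ∧ (b : ℤ) + t < n
        · rw [if_pos hbb, Pcs]
          by_cases hz : 2 * (b : ℤ) + t - ((n : ℤ) - 1) = 0
          · rw [if_pos (by omega), if_pos ⟨hbb.1, hbb.2, hz⟩]
          · rw [if_neg (by omega), if_neg (by omega), if_neg (by omega), neg_zero]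
        · rw [if_neg hbb, if_neg (by tauto)]
      rw [Finset.sum_congr rfl (fun b _ => hp b)]
      by_cases hT : -((n : ℤ) - 1) ≤ t ∧ t ≤ (n : ℤ) - 1
      · rw [sum_ite_count n _ (fun x => 0 ≤ x + t ∧ x + t < (n : ℤ) ∧
            2 * x + t - ((n : ℤ) - 1) = 0)
            (((n : ℤ) - 1 - t) / 2) (((n : ℤ) - 1 - t) / 2) (fun x => by omega)]
        rw [if_pos ⟨by omega, hP⟩, if_pos hm0]
        norm_num
      · rw [sum_ite_count n _ (fun x => 0 ≤ x + t ∧ x + t < (n : ℤ) ∧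
            2 * x + t - ((n : ℤ) - 1) = 0) 0 (-1) (fun x => by omega)]
        rw [if_neg (by omega)]
        norm_num
    · -- m ≥ 1
      have hm1 : 1 ≤ (n : ℤ) - (lam + 4) := by omega
      have hp : ∀ b : Fin n, (if 0 ≤ (b : ℤ) + t ∧ (b : ℤ) + t < n then
          -Pcs n lam (2 * (b : ℤ) + t - ((n : ℤ) - 1)) t else 0)
          = (if 0 ≤ (b : ℤ) + t ∧ (b : ℤ) + t < (n : ℤ) ∧
              2 * (b : ℤ) + t - ((n : ℤ) - 1) = (n : ℤ) - (lam + 4)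
            then -(((lam + 4) - ((n : ℤ) - 1) / 2 : ℤ) : ℝ) else 0)
          + (if 0 ≤ (b : ℤ) + t ∧ (b : ℤ) + t < (n : ℤ) ∧
              2 * (b : ℤ) + t - ((n : ℤ) - 1) = -((n : ℤ) - (lam + 4))
            then -(((lam + 4) - ((n : ℤ) - 1) / 2 : ℤ) : ℝ) else 0)
          + (if 0 ≤ (b : ℤ) + t ∧ (b : ℤ) + t < (n : ℤ) ∧
              -((n : ℤ) - (lam + 4) - 2) ≤ 2 * (b : ℤ) + t - ((n : ℤ) - 1) ∧
              2 * (b : ℤ) + t - ((n : ℤ) - 1) ≤ (n : ℤ) - (lam + 4) - 2 ∧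
              -(lam + 3) ≤ t ∧ t ≤ lam + 3
            then (-1 : ℝ) else 0) := by
        intro b
        have hss := abs_choice (2 * (b : ℤ) + t - ((n : ℤ) - 1))
        have hsn := abs_nonneg (2 * (b : ℤ) + t - ((n : ℤ) - 1))
        by_cases hbb : 0 ≤ (b : ℤ) + t ∧ (b : ℤ) + t < n
        · rw [if_pos hbb, Pcs]
          split_ifs <;> first | (exfalso; omega) | ring1
        · rw [if_neg hbb, if_neg (by tauto), if_neg (by tauto), if_neg (by tauto)]
          norm_num
      rw [Finset.sum_congr rfl (fun b _ => hp b), Finset.sum_add_distrib,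
        Finset.sum_add_distrib]
      by_cases hT : -(lam + 3) ≤ t ∧ t ≤ lam + 3
      · rw [sum_ite_count n _ (fun x => 0 ≤ x + t ∧ x + t < (n : ℤ) ∧
            2 * x + t - ((n : ℤ) - 1) = (n : ℤ) - (lam + 4))
            (((n : ℤ) - 1 + ((n : ℤ) - (lam + 4)) - t) / 2)
            (((n : ℤ) - 1 + ((n : ℤ) - (lam + 4)) - t) / 2) (fun x => by omega),
          sum_ite_count n _ (fun x => 0 ≤ x + t ∧ x + t < (n : ℤ) ∧
            2 * x + t - ((n : ℤ) - 1) = -((n : ℤ) - (lam + 4)))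
            ((lam + 3 - t) / 2) ((lam + 3 - t) / 2) (fun x => by omega),
          sum_ite_count n _ (fun x => 0 ≤ x + t ∧ x + t < (n : ℤ) ∧
            -((n : ℤ) - (lam + 4) - 2) ≤ 2 * x + t - ((n : ℤ) - 1) ∧
            2 * x + t - ((n : ℤ) - 1) ≤ (n : ℤ) - (lam + 4) - 2 ∧
            -(lam + 3) ≤ t ∧ t ≤ lam + 3)
            ((lam + 5 - t) / 2) (((n : ℤ) - 3 - t + ((n : ℤ) - (lam + 4))) / 2)
            (fun x => by omega)]
        rw [if_pos ⟨by omega, hP⟩, if_neg hm0]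
        have e1 : (((n : ℤ) - 1 + ((n : ℤ) - (lam + 4)) - t) / 2 + 1
            - ((n : ℤ) - 1 + ((n : ℤ) - (lam + 4)) - t) / 2) = 1 := by ring
        have e2 : ((lam + 3 - t) / 2 + 1 - (lam + 3 - t) / 2) = 1 := by ring
        have e3 : (((n : ℤ) - 3 - t + ((n : ℤ) - (lam + 4))) / 2 + 1 - (lam + 5 - t) / 2)
            = (n : ℤ) - (lam + 4) - 1 := by omega
        rw [e1, e2, e3]
        have e4 : ((((n : ℤ) - (lam + 4) - 1).toNat : ℕ) : ℝ)
            = (((n : ℤ) - (lam + 4) - 1 : ℤ) : ℝ) := by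
          exact_mod_cast Int.toNat_of_nonneg (by omega)
        rw [e4]
        have e5 : ((lam + 4 : ℤ) : ℝ) = (((lam + 4) - ((n : ℤ) - 1) / 2 : ℤ) : ℝ)
            + (((lam + 4) - ((n : ℤ) - 1) / 2 : ℤ) : ℝ)
            + (((n : ℤ) - (lam + 4) - 1 : ℤ) : ℝ) := by
          have : (lam + 4 : ℤ) = ((lam + 4) - ((n : ℤ) - 1) / 2)
              + ((lam + 4) - ((n : ℤ) - 1) / 2) + ((n : ℤ) - (lam + 4) - 1) := by omega
          exact_mod_cast this
        rw [e5]
        push_cast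
        ring
      · rw [sum_ite_count n _ (fun x => 0 ≤ x + t ∧ x + t < (n : ℤ) ∧
            2 * x + t - ((n : ℤ) - 1) = (n : ℤ) - (lam + 4)) 0 (-1) (fun x => by omega),
          sum_ite_count n _ (fun x => 0 ≤ x + t ∧ x + t < (n : ℤ) ∧
            2 * x + t - ((n : ℤ) - 1) = -((n : ℤ) - (lam + 4))) 0 (-1) (fun x => by omega),
          sum_ite_count n _ (fun x => 0 ≤ x + t ∧ x + t < (n : ℤ) ∧
            -((n : ℤ) - (lam + 4) - 2) ≤ 2 * x + t - ((n : ℤ) - 1) ∧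
            2 * x + t - ((n : ℤ) - 1) ≤ (n : ℤ) - (lam + 4) - 2 ∧
            -(lam + 3) ≤ t ∧ t ≤ lam + 3) 0 (-1) (fun x => by omega)]
        rw [if_neg (by omega)]
        norm_num

/-- The diagonal sums of `E`. -/
lemma dsumE (n : ℕ) (lam : ℤ) (hodd : Odd n) (h1 : 1 ≤ lam + 4) (h2 : lam + 4 ≤ (n : ℤ))
    (t : ℤ) :
    ∑ w : Fin n × Fin n, (if (w.1 : ℤ) - w.2 = t then
      Ecs n lam ((w.1 : ℤ) - w.2) ((w.1 : ℤ) + w.2 - ((n : ℤ) - 1)) else 0)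
    = Ff n lam t := by
  rw [diag_reduce n t (fun c s => Ecs n lam c s)]
  have hsplit : ∀ b : Fin n, (if 0 ≤ (b : ℤ) + t ∧ (b : ℤ) + t < n then
      Ecs n lam t (2 * (b : ℤ) + t - ((n : ℤ) - 1)) else 0)
      = (if 0 ≤ (b : ℤ) + t ∧ (b : ℤ) + t < n then
        Pcs n lam t (2 * (b : ℤ) + t - ((n : ℤ) - 1)) else 0)
      + (if 0 ≤ (b : ℤ) + t ∧ (b : ℤ) + t < n then
        -Pcs n lam (2 * (b : ℤ) + t - ((n : ℤ) - 1)) t else 0) := by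
    intro b
    rw [Ecs]
    split_ifs <;> ring
  rw [Finset.sum_congr rfl (fun b _ => hsplit b), Finset.sum_add_distrib,
    dsumP n lam h1 h2 t, dsumQ n lam hodd h1 h2 t, Ff]

/-- Antidiagonal sums of `E` are the negated diagonal sums. -/
lemma asum (n : ℕ) (lam : ℤ) (hodd : Odd n) (h1 : 1 ≤ lam + 4) (h2 : lam + 4 ≤ (n : ℤ))
    (t : ℤ) :
    ∑ w : Fin n × Fin n, (if (w.1 : ℤ) + w.2 - ((n : ℤ) - 1) = t then
      Ecs n lam ((w.1 : ℤ) - w.2) ((w.1 : ℤ) + w.2 - ((n : ℤ) - 1)) else 0)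
    = - Ff n lam t := by
  set f : Fin n × Fin n → ℝ := fun w => if (w.1 : ℤ) + w.2 - ((n : ℤ) - 1) = t then
      Ecs n lam ((w.1 : ℤ) - w.2) ((w.1 : ℤ) + w.2 - ((n : ℤ) - 1)) else 0 with hf
  have hneg : ∀ w : Fin n × Fin n,
      f (((Equiv.refl (Fin n)).prodCongr Fin.revPerm) w)
      = - (if (w.1 : ℤ) - w.2 = t then
        Ecs n lam ((w.1 : ℤ) - w.2) ((w.1 : ℤ) + w.2 - ((n : ℤ) - 1)) else 0) := by
    intro w
    simp only [hf, Equiv.prodCongr_apply, Equiv.refl_apply, Prod.map, Fin.revPerm_apply,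
      rev_cast]
    rw [show (w.1 : ℤ) + ((n : ℤ) - 1 - (w.2 : ℤ)) - ((n : ℤ) - 1) = (w.1 : ℤ) - w.2 by ring,
      show (w.1 : ℤ) - ((n : ℤ) - 1 - (w.2 : ℤ)) = (w.1 : ℤ) + w.2 - ((n : ℤ) - 1) by ring]
    by_cases hc : (w.1 : ℤ) - w.2 = t
    · rw [if_pos hc, if_pos hc, ecs_swap]
    · rw [if_neg hc, if_neg hc, neg_zero]
  have h := Equiv.sum_comp ((Equiv.refl (Fin n)).prodCongr Fin.revPerm) f
  rw [Finset.sum_congr rfl (fun w _ => hneg w), Finset.sum_neg_distrib,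
    dsumE n lam hodd h1 h2 t] at h
  rw [← h]

noncomputable def PA (n : ℕ) (lam : ℤ) (a b : ℤ) : ℝ :=
  if a = (n : ℤ) - (lam + 4) then (((lam + 4) - ((n : ℤ) - 1) / 2 : ℤ) : ℝ)
  else if a < (n : ℤ) - (lam + 4) ∧ b < lam + 4 ∧
      a % 2 = ((n : ℤ) - (lam + 4)) % 2 then 1
  else 0

noncomputable def FfA (n : ℕ) (lam : ℤ) (a : ℤ) : ℝ :=
  (if a = (n : ℤ) - (lam + 4) then
      ((lam + 4 : ℤ) : ℝ) * (((lam + 4) - ((n : ℤ) - 1) / 2 : ℤ) : ℝ)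
    else if a < (n : ℤ) - (lam + 4) ∧ a % 2 = ((n : ℤ) - (lam + 4)) % 2 then
      ((lam + 4 : ℤ) : ℝ)
    else 0)
  + (if a ≤ lam + 3 ∧ a % 2 = ((n : ℤ) - (lam + 4)) % 2 then
      (if (n : ℤ) - (lam + 4) = 0 then -(((lam + 4) - ((n : ℤ) - 1) / 2 : ℤ) : ℝ)
       else -((lam + 4 : ℤ) : ℝ))
     else 0)

lemma pcs_eq_PA (n : ℕ) (lam c s : ℤ) : Pcs n lam c s = PA n lam |c| |s| := rfl

lemma ff_eq_FfA (n : ℕ) (lam t : ℤ) : Ff n lam t = FfA n lam |t| := rfl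

set_option maxHeartbeats 1000000 in
lemma keyAB (n : ℕ) (lam : ℤ) (h1 : 1 ≤ lam + 4) (h2 : lam + 4 ≤ (n : ℤ))
    (a b : ℤ) (ha : 0 ≤ a) (hb : 0 ≤ b) (hpar : (a - b) % 2 = 0)
    (hsum : a + b ≤ (n : ℤ) - 1) :
    FfA n lam a - FfA n lam b = ((lam + 4 : ℤ) : ℝ) * (PA n lam a b - PA n lam b a) := by
  rw [FfA, FfA, PA, PA]
  split_ifs <;> first | ring1 | (exfalso; omega)

set_option maxHeartbeats 1000000 in
/-- The key pointwise identity: differences of line sums give `(λ+4) E`. -/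
lemma key (n : ℕ) (lam : ℤ) (hodd : Odd n) (h1 : 1 ≤ lam + 4) (h2 : lam + 4 ≤ (n : ℤ))
    (c s : ℤ) (hpar : (c - s) % 2 = 0) (hsum : |c| + |s| ≤ (n : ℤ) - 1) :
    Ff n lam c - Ff n lam s = ((lam + 4 : ℤ) : ℝ) * Ecs n lam c s := by
  have hpar' : (|c| - |s|) % 2 = 0 := by
    rcases abs_cases c with ⟨e1, -⟩ | ⟨e1, -⟩ <;> rcases abs_cases s with ⟨e2, -⟩ | ⟨e2, -⟩ <;>
      omega
  rw [ff_eq_FfA, ff_eq_FfA, Ecs, pcs_eq_PA, pcs_eq_PA]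
  exact keyAB n lam h1 h2 |c| |s| (abs_nonneg c) (abs_nonneg s) hpar' hsum

end Stmt7A

open Stmt7A in
/-- `A · E_{n,λ} = λ · E_{n,λ}` where `A` is the adjacency matrix of `Q(n)`. -/
theorem stmt7 (n : ℕ) (hn : 4 ≤ n) (hodd : Odd n) (lam : ℤ)
    (h1 : 1 ≤ lam + 4) (h2 : lam + 4 ≤ (n : ℤ)) :
    (queensGraph n).adjMatrix ℝ *ᵥ Evec n lam = (lam : ℝ) • Evec n lam := by
  funext v
  rw [Pi.smul_apply, smul_eq_mul, SimpleGraph.adjMatrix_mulVec_apply,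
    SimpleGraph.neighborFinset_eq_filter, Finset.sum_filter]
  have decomp : ∀ w : Fin n × Fin n,
      (if (queensGraph n).Adj v w then Evec n lam w else 0)
      = (if (w.1 : ℤ) = (v.1 : ℤ) then
          Ecs n lam ((w.1 : ℤ) - w.2) ((w.1 : ℤ) + w.2 - ((n : ℤ) - 1)) else 0)
        + (if (w.2 : ℤ) = (v.2 : ℤ) then
          Ecs n lam ((w.1 : ℤ) - w.2) ((w.1 : ℤ) + w.2 - ((n : ℤ) - 1)) else 0)
        + (if (w.1 : ℤ) - w.2 = (v.1 : ℤ) - v.2 then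
          Ecs n lam ((w.1 : ℤ) - w.2) ((w.1 : ℤ) + w.2 - ((n : ℤ) - 1)) else 0)
        + (if (w.1 : ℤ) + w.2 - ((n : ℤ) - 1) = (v.1 : ℤ) + v.2 - ((n : ℤ) - 1) then
          Ecs n lam ((w.1 : ℤ) - w.2) ((w.1 : ℤ) + w.2 - ((n : ℤ) - 1)) else 0)
        - (if w = v then
          4 * Ecs n lam ((w.1 : ℤ) - w.2) ((w.1 : ℤ) + w.2 - ((n : ℤ) - 1)) else 0) := by
    intro w
    have hadj : (queensGraph n).Adj v w ↔ v ≠ w ∧ ((v.1 : ℤ) = w.1 ∨ (v.2 : ℤ) = w.2 ∨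
        (v.1 : ℤ) + v.2 = w.1 + w.2 ∨ (v.1 : ℤ) - v.2 = w.1 - w.2) := Iff.rfl
    by_cases hw : w = v
    · subst hw
      rw [evec_eq, if_neg (fun h => (queensGraph n).loopless.irrefl w h),
        if_pos rfl, if_pos rfl, if_pos rfl, if_pos rfl, if_pos rfl]
      ring
    · have hvw : ¬((w.1 : ℤ) = v.1 ∧ (w.2 : ℤ) = v.2) := by
        rintro ⟨ha, hb⟩
        refine hw (Prod.ext (Fin.ext (by omega)) (Fin.ext (by omega)))
      rw [evec_eq, if_neg (show ¬ w = v from hw)]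
      have hiff : (queensGraph n).Adj v w ↔ ((w.1 : ℤ) = v.1 ∨ (w.2 : ℤ) = v.2 ∨
          (w.1 : ℤ) - w.2 = (v.1 : ℤ) - v.2 ∨
          (w.1 : ℤ) + w.2 - ((n : ℤ) - 1) = (v.1 : ℤ) + v.2 - ((n : ℤ) - 1)) := by
        rw [hadj]
        constructor
        · rintro ⟨-, h⟩; omega
        · intro h
          exact ⟨fun he => hw he.symm, by omega⟩
      rw [if_congr hiff rfl rfl]
      split_ifs <;> first | (exfalso; omega) | ring1
  rw [Finset.sum_congr rfl (fun w _ => decomp w), Finset.sum_sub_distrib,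
    Finset.sum_add_distrib, Finset.sum_add_distrib, Finset.sum_add_distrib,
    rowsum n lam (v.1 : ℤ), colsum n lam (v.2 : ℤ),
    dsumE n lam hodd h1 h2 ((v.1 : ℤ) - v.2),
    asum n lam hodd h1 h2 ((v.1 : ℤ) + v.2 - ((n : ℤ) - 1)),
    Finset.sum_ite_eq' Finset.univ v
      (fun w => 4 * Ecs n lam ((w.1 : ℤ) - w.2) ((w.1 : ℤ) + w.2 - ((n : ℤ) - 1))),
    if_pos (Finset.mem_univ v), evec_eq]
  have hpar : (((v.1 : ℤ) - v.2) - ((v.1 : ℤ) + v.2 - ((n : ℤ) - 1))) % 2 = 0 := by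
    obtain ⟨r, hr⟩ := hodd
    omega
  have hsum : |(v.1 : ℤ) - v.2| + |(v.1 : ℤ) + v.2 - ((n : ℤ) - 1)| ≤ (n : ℤ) - 1 := by
    have hb1 := v.1.isLt
    have hb2 := v.2.isLt
    rcases abs_cases ((v.1 : ℤ) - v.2) with ⟨e1, e2⟩ | ⟨e1, e2⟩ <;>
      rcases abs_cases ((v.1 : ℤ) + v.2 - ((n : ℤ) - 1)) with ⟨e3, e4⟩ | ⟨e3, e4⟩ <;>
      omega
  have hkey := key n lam hodd h1 h2 ((v.1 : ℤ) - v.2) ((v.1 : ℤ) + v.2 - ((n : ℤ) - 1))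
    hpar hsum
  have hc : ((lam + 4 : ℤ) : ℝ) = (lam : ℝ) + 4 := by push_cast; ring
  rw [hc] at hkey
  linarith
end

section
/- For odd n ≥ 11, the vectors E_{n,(n-9)/2} and E_{n,(n-7)/2} are both the zero vector; equivalently, P_{n,(n-9)/2} = -Q_{n,(n-9)/2} and P_{n,(n-7)/2} = -Q_{n,(n-7)/2}. -/
open Finset Matrix

/-
With `d = i ⊖ j` and `s = i ⊕ j`, the value of `P_{n,λ}` at `(i, j)` is a function of `(d, s)`,
and `Q_{n,λ}` is minus the same function of `(s, d)`; so `E_{n,λ} = 0` amounts to that function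
being symmetric on the pairs `(d, s)` that occur. For odd `n = 2m + 1` these pairs satisfy
`d ≡ s (mod 2)` and `d + s ≤ 2m`. For `λ = (n-9)/2` we have `k = 0` and the function is the
indicator of `d, s < m + 1`, `d ≡ m + 1`, since parity excludes `d = m` and `s = m`. For
`λ = (n-7)/2` we have `k = 1` and it is the indicator of `d, s ≤ m`, `d ≡ m`, since `d = m`
forces `s ≤ m`.
-/

/-- The common shape of `P_{n,λ}` and `-Q_{n,λ}`, with `r = n - (λ + 4)` and `a = λ + 4`. -/
noncomputable def profile (r a k x y : ℤ) : ℝ :=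
  if x = r then (k : ℝ) else if x < r ∧ y < a ∧ x % 2 = r % 2 then 1 else 0

theorem profile_symm_of_eq_sub_one {r a k x y : ℤ} (ha : a = r - 1) (hk : k = 0)
    (hxy : x % 2 = y % 2) : profile r a k x y = profile r a k y x := by
  subst hk
  unfold profile
  split_ifs <;> first | rfl | (exfalso; omega) | simp

theorem profile_symm_of_eq_add_one {r a k x y : ℤ} (ha : a = r + 1) (hk : k = 1)
    (hxy : x % 2 = y % 2) (hsum : x + y ≤ 2 * r) : profile r a k x y = profile r a k y x := by
  subst hk
  unfold profile
  split_ifs <;> first | rfl | (exfalso; omega) | simp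

theorem Pvec_eq_profile (n : ℕ) (lam : ℤ) (v : Fin n × Fin n) :
    Pvec n lam v = profile (n - (lam + 4)) (lam + 4) (lam + 4 - ((n : ℤ) - 1) / 2)
      |((v.1 : ℤ) + 1) - ((v.2 : ℤ) + 1)|
      |((v.1 : ℤ) + 1) + ((v.2 : ℤ) + 1) - ((n : ℤ) + 1)| :=
  rfl

theorem Qvec_eq_neg_profile (n : ℕ) (lam : ℤ) (v : Fin n × Fin n) :
    Qvec n lam v = -profile (n - (lam + 4)) (lam + 4) (lam + 4 - ((n : ℤ) - 1) / 2)
      |((v.1 : ℤ) + 1) + ((v.2 : ℤ) + 1) - ((n : ℤ) + 1)|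
      |((v.1 : ℤ) + 1) - ((v.2 : ℤ) + 1)| := by
  simp only [Qvec, profile]
  split_ifs <;> simp

theorem abs_sub_add_abs_add_sub_le {n : ℕ} {i j : ℤ} (hi : 1 ≤ i ∧ i ≤ n)
    (hj : 1 ≤ j ∧ j ≤ n) :
    |i - j| + |i + j - ((n : ℤ) + 1)| ≤ n - 1 := by
  rcases abs_cases (i - j) with ⟨h, _⟩ | ⟨h, _⟩ <;>
    rcases abs_cases (i + j - ((n : ℤ) + 1)) with ⟨h', _⟩ | ⟨h', _⟩ <;>
    rw [h, h'] <;> omega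

theorem abs_sub_emod_two_eq {n : ℕ} (hodd : Odd n) (i j : ℤ) :
    |i - j| % 2 = |i + j - ((n : ℤ) + 1)| % 2 := by
  obtain ⟨m, hm⟩ := hodd
  rcases abs_cases (i - j) with ⟨h, _⟩ | ⟨h, _⟩ <;>
    rcases abs_cases (i + j - ((n : ℤ) + 1)) with ⟨h', _⟩ | ⟨h', _⟩ <;>
    rw [h, h'] <;> omega

theorem Pvec_eq_neg_Qvec_of_profile_symm {n : ℕ} (hodd : Odd n) {lam : ℤ}
    (hsymm : ∀ x y : ℤ, x % 2 = y % 2 → x + y ≤ n - 1 →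
      profile (n - (lam + 4)) (lam + 4) (lam + 4 - ((n : ℤ) - 1) / 2) x y =
        profile (n - (lam + 4)) (lam + 4) (lam + 4 - ((n : ℤ) - 1) / 2) y x)
    (v : Fin n × Fin n) : Pvec n lam v = -Qvec n lam v := by
  have hi : 1 ≤ (v.1 : ℤ) + 1 ∧ (v.1 : ℤ) + 1 ≤ n := by omega
  have hj : 1 ≤ (v.2 : ℤ) + 1 ∧ (v.2 : ℤ) + 1 ≤ n := by omega
  rw [Pvec_eq_profile, Qvec_eq_neg_profile, neg_neg]
  exact hsymm _ _ (abs_sub_emod_two_eq hodd _ _) (abs_sub_add_abs_add_sub_le hi hj)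

theorem stmt8_general (n : ℕ) (hodd : Odd n) :
    (∀ v : Fin n × Fin n, Evec n (((n : ℤ) - 9) / 2) v = 0) ∧
    (∀ v : Fin n × Fin n, Evec n (((n : ℤ) - 7) / 2) v = 0) ∧
    (∀ v : Fin n × Fin n, Pvec n (((n : ℤ) - 9) / 2) v = -Qvec n (((n : ℤ) - 9) / 2) v) ∧
    (∀ v : Fin n × Fin n, Pvec n (((n : ℤ) - 7) / 2) v = -Qvec n (((n : ℤ) - 7) / 2) v) := by
  obtain ⟨m, hm⟩ := hodd
  have h9 := Pvec_eq_neg_Qvec_of_profile_symm (lam := ((n : ℤ) - 9) / 2) ⟨m, hm⟩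
    fun _ _ hxy _ => profile_symm_of_eq_sub_one (by omega) (by omega) hxy
  have h7 := Pvec_eq_neg_Qvec_of_profile_symm (lam := ((n : ℤ) - 7) / 2) ⟨m, hm⟩
    fun _ _ hxy hsum => profile_symm_of_eq_add_one (by omega) (by omega) hxy (by omega)
  exact ⟨fun v => by rw [Evec, h9, neg_add_cancel], fun v => by rw [Evec, h7, neg_add_cancel],
    h9, h7⟩

/-- for odd `n ≥ 11`, `E_{n,(n-9)/2}` and `E_{n,(n-7)/2}` are zero;
equivalently `P = -Q` for these two values of `λ`. -/
theorem stmt8 (n : ℕ) (hn : 11 ≤ n) (hodd : Odd n) :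
    (∀ v : Fin n × Fin n, Evec n (((n : ℤ) - 9) / 2) v = 0) ∧
    (∀ v : Fin n × Fin n, Evec n (((n : ℤ) - 7) / 2) v = 0) ∧
    (∀ v : Fin n × Fin n, Pvec n (((n : ℤ) - 9) / 2) v = -Qvec n (((n : ℤ) - 9) / 2) v) ∧
    (∀ v : Fin n × Fin n, Pvec n (((n : ℤ) - 7) / 2) v = -Qvec n (((n : ℤ) - 7) / 2) v) :=
  stmt8_general n hodd
end

section
/- For odd n ≥ 4 and λ ∈ {-3, -2, ..., (n-11)/2} ∪ {(n-5)/2, ..., n-4}, the vector E_{n,λ} is nonzero; hence λ is an eigenvalue of the n-Queens graph Q(n) with eigenvector E_{n,λ}. -/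
set_option maxHeartbeats 4000000

open Finset Matrix

namespace Stmt9Aux

/-- abs-free diagonal profile -/
noncomputable def pf (n : ℕ) (lam : ℤ) (x : ℤ) : ℝ :=
  if x = (n : ℤ) - (lam + 4) ∨ x = -((n : ℤ) - (lam + 4)) then
    (((lam + 4) - ((n : ℤ) - 1) / 2 : ℤ) : ℝ)
  else if -((n : ℤ) - (lam + 4)) < x ∧ x < (n : ℤ) - (lam + 4) ∧
      x % 2 = ((n : ℤ) - (lam + 4)) % 2 then 1
  else 0

/-- abs-free antidiagonal indicator -/
noncomputable def ch (n : ℕ) (lam : ℤ) (x : ℤ) : ℝ :=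
  if -(lam + 4) < x ∧ x < lam + 4 ∧ x % 2 = ((n : ℤ) - (lam + 4)) % 2 then 1 else 0

/-- the constant `C` appearing in line sums -/
noncomputable def cC (n : ℕ) (lam : ℤ) : ℝ :=
  if (n : ℤ) - (lam + 4) = 0 then (((lam + 4) - ((n : ℤ) - 1) / 2 : ℤ) : ℝ)
  else ((lam + 4 : ℤ) : ℝ)

lemma pf_neg (n : ℕ) (lam : ℤ) (x : ℤ) : pf n lam (-x) = pf n lam x := by
  simp only [pf]; split_ifs <;> first | rfl | (exfalso; omega)

lemma ch_neg (n : ℕ) (lam : ℤ) (x : ℤ) : ch n lam (-x) = ch n lam x := by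
  simp only [ch]; split_ifs <;> first | rfl | (exfalso; omega)

lemma Pfact (n : ℕ) (lam : ℤ) (hodd : (n : ℤ) % 2 = 1) (hm : 0 ≤ (n : ℤ) - (lam + 4))
    (w : Fin n × Fin n) :
    Pvec n lam w = pf n lam ((w.1 : ℤ) - w.2) * ch n lam ((w.1 : ℤ) + w.2 + 1 - n) := by
  obtain ⟨a, b⟩ := w
  have ha : (a : ℤ) < n := by exact_mod_cast a.isLt
  have hb : (b : ℤ) < n := by exact_mod_cast b.isLt
  have ha0 : (0 : ℤ) ≤ (a : ℤ) := Int.natCast_nonneg _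
  have hb0 : (0 : ℤ) ≤ (b : ℤ) := Int.natCast_nonneg _
  simp only [Pvec, pf, ch]
  rw [show ((a : ℤ) + 1 - ((b : ℤ) + 1)) = (a : ℤ) - b from by ring,
    show ((a : ℤ) + 1 + ((b : ℤ) + 1) - ((n : ℤ) + 1)) = (a : ℤ) + b + 1 - n from by ring]
  rcases abs_cases ((a : ℤ) - b) with ⟨hu, hu'⟩ | ⟨hu, hu'⟩ <;>
    rcases abs_cases ((a : ℤ) + b + 1 - n) with ⟨ht, ht'⟩ | ⟨ht, ht'⟩ <;>
    rw [hu, ht] <;>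
    split_ifs <;> first | ring1 | (exfalso; omega)

lemma Qfact (n : ℕ) (lam : ℤ) (hodd : (n : ℤ) % 2 = 1) (hm : 0 ≤ (n : ℤ) - (lam + 4))
    (w : Fin n × Fin n) :
    Qvec n lam w = -(pf n lam ((w.1 : ℤ) + w.2 + 1 - n) * ch n lam ((w.1 : ℤ) - w.2)) := by
  obtain ⟨a, b⟩ := w
  have ha : (a : ℤ) < n := by exact_mod_cast a.isLt
  have hb : (b : ℤ) < n := by exact_mod_cast b.isLt
  have ha0 : (0 : ℤ) ≤ (a : ℤ) := Int.natCast_nonneg _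
  have hb0 : (0 : ℤ) ≤ (b : ℤ) := Int.natCast_nonneg _
  simp only [Qvec, pf, ch]
  rw [show ((a : ℤ) + 1 - ((b : ℤ) + 1)) = (a : ℤ) - b from by ring,
    show ((a : ℤ) + 1 + ((b : ℤ) + 1) - ((n : ℤ) + 1)) = (a : ℤ) + b + 1 - n from by ring]
  rcases abs_cases ((a : ℤ) - b) with ⟨hu, hu'⟩ | ⟨hu, hu'⟩ <;>
    rcases abs_cases ((a : ℤ) + b + 1 - n) with ⟨ht, ht'⟩ | ⟨ht, ht'⟩ <;>
    rw [hu, ht] <;>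
    split_ifs <;> first | ring1 | (exfalso; omega)

lemma Efact (n : ℕ) (lam : ℤ) (hodd : (n : ℤ) % 2 = 1) (hm : 0 ≤ (n : ℤ) - (lam + 4))
    (w : Fin n × Fin n) :
    Evec n lam w = pf n lam ((w.1 : ℤ) - w.2) * ch n lam ((w.1 : ℤ) + w.2 + 1 - n)
      - pf n lam ((w.1 : ℤ) + w.2 + 1 - n) * ch n lam ((w.1 : ℤ) - w.2) := by
  rw [Evec, Pfact n lam hodd hm w, Qfact n lam hodd hm w]
  ring

lemma sum_cast (n : ℕ) (f : ℤ → ℝ) :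
    ∑ x : Fin n, f (x : ℤ) = ∑ z ∈ Finset.Icc (0 : ℤ) ((n : ℤ) - 1), f z := by
  have h : Finset.Icc (0 : ℤ) ((n : ℤ) - 1) =
      Finset.map ⟨fun (x : Fin n) => (x : ℤ), fun x y h => by
        apply Fin.ext
        have h' : ((x : ℕ) : ℤ) = ((y : ℕ) : ℤ) := h
        exact_mod_cast h'⟩ Finset.univ := by
    ext z
    simp only [Finset.mem_Icc, Finset.mem_map, Finset.mem_univ, true_and,
      Function.Embedding.coeFn_mk]
    constructor
    · rintro ⟨h1, h2⟩
      refine ⟨⟨z.toNat, by omega⟩, ?_⟩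
      show ((z.toNat : ℕ) : ℤ) = z
      omega
    · rintro ⟨x, rfl⟩
      have := x.isLt
      refine ⟨Int.natCast_nonneg _, by show ((x:ℕ):ℤ) ≤ (n:ℤ)-1; omega⟩
  rw [h, Finset.sum_map]
  rfl

lemma sum_if_eq (n : ℕ) (c : ℤ) (f : ℤ → ℝ) :
    (∑ y : Fin n, if (y : ℤ) = c then f (y : ℤ) else 0)
      = if 0 ≤ c ∧ c < n then f c else 0 := by
  have h := sum_cast n (fun z => if z = c then f z else 0)
  rw [h, Finset.sum_ite_eq' (Finset.Icc (0 : ℤ) ((n : ℤ) - 1)) c f]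
  exact if_congr (by rw [Finset.mem_Icc]; omega) rfl rfl

lemma Lch_sum (n : ℕ) (lam : ℤ) (hodd : (n:ℤ)%2 = 1) (hm : 0 ≤ (n:ℤ)-(lam+4)) (hl : 1 ≤ lam+4)
    (s : ℤ) (hpar : s % 2 = ((n:ℤ)-(lam+4)) % 2)
    (hs1 : (n:ℤ)-1-((n:ℤ)-(lam+4)) ≤ s) (hs2 : s ≤ (n:ℤ)-1+((n:ℤ)-(lam+4))) :
    (∑ z ∈ Finset.Icc (0:ℤ) ((n:ℤ)-1), if 0 ≤ s - z ∧ s - z < n then ch n lam (2*z - s) else 0)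
      = ((lam + 4 : ℤ) : ℝ) := by
  have h1 : ∀ z ∈ Finset.Icc (0:ℤ) ((n:ℤ)-1),
      (if 0 ≤ s - z ∧ s - z < n then ch n lam (2*z - s) else 0)
        = if (s-(lam+3))/2 ≤ z ∧ z ≤ (s+(lam+3))/2 then (1:ℝ) else 0 := by
    intro z hz
    rw [Finset.mem_Icc] at hz
    simp only [ch]
    split_ifs <;> first | rfl | (exfalso; omega)
  rw [Finset.sum_congr rfl h1, Finset.sum_boole]
  have h2 : Finset.filter (fun z => (s-(lam+3))/2 ≤ z ∧ z ≤ (s+(lam+3))/2)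
      (Finset.Icc (0:ℤ) ((n:ℤ)-1)) = Finset.Icc ((s-(lam+3))/2) ((s+(lam+3))/2) := by
    ext z
    simp only [Finset.mem_filter, Finset.mem_Icc]
    omega
  rw [h2, Int.card_Icc]
  have h3 : ((s+(lam+3))/2 + 1 - (s-(lam+3))/2) = lam + 4 := by omega
  rw [h3]
  exact_mod_cast (show (((lam + 4).toNat : ℤ)) = lam + 4 by omega)

lemma Lpf_sum (n : ℕ) (lam : ℤ) (hodd : (n:ℤ)%2 = 1) (hm : 0 ≤ (n:ℤ)-(lam+4)) (hl : 1 ≤ lam+4)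
    (s : ℤ) (hpar : s % 2 = ((n:ℤ)-(lam+4)) % 2)
    (hs1 : (n:ℤ)-1-(lam+3) ≤ s) (hs2 : s ≤ (n:ℤ)-1+(lam+3)) :
    (∑ z ∈ Finset.Icc (0:ℤ) ((n:ℤ)-1), if 0 ≤ s - z ∧ s - z < n then pf n lam (2*z - s) else 0)
      = cC n lam := by
  have h1 : ∀ z ∈ Finset.Icc (0:ℤ) ((n:ℤ)-1),
      (if 0 ≤ s - z ∧ s - z < n then pf n lam (2*z - s) else 0)
        = (((lam + 4) - ((n : ℤ) - 1) / 2 : ℤ) : ℝ) *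
            (if 2*z = s - ((n:ℤ)-(lam+4)) ∨ 2*z = s + ((n:ℤ)-(lam+4)) then 1 else 0)
          + (if (s-((n:ℤ)-(lam+4))+2)/2 ≤ z ∧ z ≤ (s+((n:ℤ)-(lam+4))-2)/2 then (1:ℝ) else 0) := by
    intro z hz
    rw [Finset.mem_Icc] at hz
    simp only [pf]
    split_ifs <;> first | ring1 | (exfalso; omega)
  rw [Finset.sum_congr rfl h1, Finset.sum_add_distrib, ← Finset.mul_sum,
    Finset.sum_boole, Finset.sum_boole]
  have h2 : Finset.filter (fun z => (s-((n:ℤ)-(lam+4))+2)/2 ≤ z ∧ z ≤ (s+((n:ℤ)-(lam+4))-2)/2)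
      (Finset.Icc (0:ℤ) ((n:ℤ)-1)) = Finset.Icc ((s-((n:ℤ)-(lam+4))+2)/2) ((s+((n:ℤ)-(lam+4))-2)/2) := by
    ext z
    simp only [Finset.mem_filter, Finset.mem_Icc]
    omega
  rw [h2, Int.card_Icc]
  by_cases hM : (n:ℤ)-(lam+4) = 0
  · rw [cC, if_pos hM]
    have h4 : Finset.filter (fun z => 2*z = s - ((n:ℤ)-(lam+4)) ∨ 2*z = s + ((n:ℤ)-(lam+4)))
        (Finset.Icc (0:ℤ) ((n:ℤ)-1)) = {s/2} := by
      ext z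
      simp only [Finset.mem_filter, Finset.mem_Icc, Finset.mem_singleton]
      omega
    rw [h4]
    have h5 : (((s+((n:ℤ)-(lam+4))-2)/2 + 1 - (s-((n:ℤ)-(lam+4))+2)/2)).toNat = 0 := by omega
    rw [h5]
    simp
  · rw [cC, if_neg hM]
    have h4 : Finset.filter (fun z => 2*z = s - ((n:ℤ)-(lam+4)) ∨ 2*z = s + ((n:ℤ)-(lam+4)))
        (Finset.Icc (0:ℤ) ((n:ℤ)-1))
        = {(s-((n:ℤ)-(lam+4)))/2, (s+((n:ℤ)-(lam+4)))/2} := by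
      ext z
      simp only [Finset.mem_filter, Finset.mem_Icc, Finset.mem_insert, Finset.mem_singleton]
      omega
    rw [h4]
    have hne : (s-((n:ℤ)-(lam+4)))/2 ∉ ({(s+((n:ℤ)-(lam+4)))/2} : Finset ℤ) := by
      simp only [Finset.mem_singleton]
      omega
    rw [Finset.card_insert_of_notMem hne, Finset.card_singleton]
    have h5 : (((s+((n:ℤ)-(lam+4))-2)/2 + 1 - (s-((n:ℤ)-(lam+4))+2)/2)).toNat
        = ((n:ℤ)-(lam+4) - 1).toNat := by omega
    rw [h5]
    exact_mod_cast (show ((lam + 4 - ((n:ℤ)-1)/2) * 2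
      + ((((n:ℤ)-(lam+4) - 1).toNat : ℤ)) : ℤ) = lam + 4 by omega)

lemma pf_facts (n : ℕ) (lam : ℤ) (x : ℤ) (h : pf n lam x ≠ 0) :
    (x = (n:ℤ)-(lam+4) ∨ x = -((n:ℤ)-(lam+4))) ∨
      (-((n:ℤ)-(lam+4)) < x ∧ x < (n:ℤ)-(lam+4) ∧ x % 2 = ((n:ℤ)-(lam+4)) % 2) := by
  simp only [pf] at h
  split_ifs at h with h1 h2
  · exact Or.inl h1
  · exact Or.inr h2
  · exact absurd rfl h

lemma ch_facts (n : ℕ) (lam : ℤ) (x : ℤ) (h : ch n lam x ≠ 0) :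
    -(lam+4) < x ∧ x < lam+4 ∧ x % 2 = ((n:ℤ)-(lam+4)) % 2 := by
  simp only [ch] at h
  split_ifs at h with h1
  · exact h1
  · exact absurd rfl h

/-- diagonal sum against `ch`, multiplied by `pf u` -/
lemma pf_mul_sum (n : ℕ) (lam : ℤ) (hodd : (n:ℤ)%2 = 1) (hm : 0 ≤ (n:ℤ)-(lam+4))
    (hl : 1 ≤ lam+4) (u : ℤ) :
    pf n lam u * (∑ z ∈ Finset.Icc (0:ℤ) ((n:ℤ)-1),
        if 0 ≤ (u+(n:ℤ)-1) - z ∧ (u+(n:ℤ)-1) - z < n then ch n lam (2*z - (u+(n:ℤ)-1)) else 0)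
      = pf n lam u * ((lam + 4 : ℤ) : ℝ) := by
  by_cases h : pf n lam u = 0
  · rw [h, zero_mul, zero_mul]
  · have hf := pf_facts n lam u h
    rw [Lch_sum n lam hodd hm hl (u+(n:ℤ)-1) (by omega) (by omega) (by omega)]

/-- antidiagonal sum against `pf`, multiplied by `ch t` -/
lemma ch_mul_sum (n : ℕ) (lam : ℤ) (hodd : (n:ℤ)%2 = 1) (hm : 0 ≤ (n:ℤ)-(lam+4))
    (hl : 1 ≤ lam+4) (t : ℤ) :
    (∑ z ∈ Finset.Icc (0:ℤ) ((n:ℤ)-1),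
        if 0 ≤ (t+(n:ℤ)-1) - z ∧ (t+(n:ℤ)-1) - z < n then pf n lam (2*z - (t+(n:ℤ)-1)) else 0)
        * ch n lam t
      = cC n lam * ch n lam t := by
  by_cases h : ch n lam t = 0
  · rw [h, mul_zero, mul_zero]
  · have hf := ch_facts n lam t h
    rw [Lpf_sum n lam hodd hm hl (t+(n:ℤ)-1) (by omega) (by omega) (by omega)]

lemma row_zero (n : ℕ) (lam : ℤ) (A : ℤ) :
    ∑ z ∈ Finset.Icc (0:ℤ) ((n:ℤ)-1),
      (pf n lam (A - z) * ch n lam (A + z + 1 - n) - pf n lam (A + z + 1 - n) * ch n lam (A - z))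
      = 0 := by
  rw [Finset.sum_sub_distrib]
  have h : ∑ z ∈ Finset.Icc (0:ℤ) ((n:ℤ)-1), pf n lam (A + z + 1 - n) * ch n lam (A - z)
      = ∑ z ∈ Finset.Icc (0:ℤ) ((n:ℤ)-1), pf n lam (A - z) * ch n lam (A + z + 1 - n) := by
    refine Finset.sum_nbij' (fun z => (n:ℤ)-1-z) (fun z => (n:ℤ)-1-z) ?_ ?_ ?_ ?_ ?_
    · intro a ha; simp only [Finset.mem_Icc] at ha ⊢; omega
    · intro a ha; simp only [Finset.mem_Icc] at ha ⊢; omega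
    · intro a _; ring
    · intro a _; ring
    · intro a _
      rw [show A - ((n:ℤ)-1-a) = A + a + 1 - n from by ring,
        show A + ((n:ℤ)-1-a) + 1 - n = A - a from by ring]
  rw [h, sub_self]

lemma col_zero (n : ℕ) (lam : ℤ) (B : ℤ) :
    ∑ z ∈ Finset.Icc (0:ℤ) ((n:ℤ)-1),
      (pf n lam (z - B) * ch n lam (z + B + 1 - n) - pf n lam (z + B + 1 - n) * ch n lam (z - B))
      = 0 := by
  rw [Finset.sum_sub_distrib]
  have h : ∑ z ∈ Finset.Icc (0:ℤ) ((n:ℤ)-1), pf n lam (z + B + 1 - n) * ch n lam (z - B)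
      = ∑ z ∈ Finset.Icc (0:ℤ) ((n:ℤ)-1), pf n lam (z - B) * ch n lam (z + B + 1 - n) := by
    refine Finset.sum_nbij' (fun z => (n:ℤ)-1-z) (fun z => (n:ℤ)-1-z) ?_ ?_ ?_ ?_ ?_
    · intro a ha; simp only [Finset.mem_Icc] at ha ⊢; omega
    · intro a ha; simp only [Finset.mem_Icc] at ha ⊢; omega
    · intro a _; ring
    · intro a _; ring
    · intro a _
      rw [show (n:ℤ)-1-a - B = -(a + B + 1 - n) from by ring,
        show (n:ℤ)-1-a + B + 1 - n = -(a - B) from by ring, pf_neg, ch_neg]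
  rw [h, sub_self]

lemma core (n : ℕ) (lam : ℤ) (hodd : (n:ℤ)%2 = 1) (hm : 0 ≤ (n:ℤ)-(lam+4)) (hl : 1 ≤ lam+4)
    (u t : ℤ) (hpar : (u - t) % 2 = 0)
    (hb1 : u + t ≤ (n:ℤ)-1) (hb2 : u - t ≤ (n:ℤ)-1) (hb3 : t - u ≤ (n:ℤ)-1)
    (hb4 : -u - t ≤ (n:ℤ)-1) :
    ((lam + 4 : ℤ) : ℝ) * pf n lam u - cC n lam * ch n lam u
      + (cC n lam * ch n lam t - ((lam + 4 : ℤ) : ℝ) * pf n lam t)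
      = ((lam + 4 : ℤ) : ℝ) * (pf n lam u * ch n lam t - pf n lam t * ch n lam u) := by
  simp only [pf, ch, cC]
  split_ifs <;> first | ring1 | (exfalso; omega)

end Stmt9Aux

open Stmt9Aux in
/-- for odd `n ≥ 4` and `λ ∈ {-3,…,(n-11)/2} ∪ {(n-5)/2,…,n-4}`, the vector
`E_{n,λ}` is nonzero, hence `λ` is an eigenvalue of `Q(n)` with eigenvector `E_{n,λ}`. -/
theorem stmt9 (n : ℕ) (hn : 4 ≤ n) (hodd : Odd n) (lam : ℤ)
    (hlam : (-3 ≤ lam ∧ lam ≤ ((n : ℤ) - 11) / 2) ∨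
            (((n : ℤ) - 5) / 2 ≤ lam ∧ lam ≤ (n : ℤ) - 4)) :
    Evec n lam ≠ 0 ∧
    (queensGraph n).adjMatrix ℝ *ᵥ Evec n lam = (lam : ℝ) • Evec n lam ∧
    Module.End.HasEigenvalue (Matrix.toLin' ((queensGraph n).adjMatrix ℝ)) (lam : ℝ) := by
  have hod : (n : ℤ) % 2 = 1 := by
    obtain ⟨k, hk⟩ := hodd; omega
  have hn5 : 5 ≤ n := by
    obtain ⟨k, hk⟩ := hodd; omega
  have hm : 0 ≤ (n:ℤ) - (lam + 4) := by
    rcases hlam with ⟨h1, h2⟩ | ⟨h1, h2⟩ <;> omega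
  have hl : 1 ≤ lam + 4 := by
    rcases hlam with ⟨h1, h2⟩ | ⟨h1, h2⟩ <;> omega
  -- the eigen-equation
  have hmul : (queensGraph n).adjMatrix ℝ *ᵥ Evec n lam = (lam : ℝ) • Evec n lam := by
    funext v
    obtain ⟨a, b⟩ := v
    have ha : (a : ℤ) < n := by exact_mod_cast a.isLt
    have hb : (b : ℤ) < n := by exact_mod_cast b.isLt
    have ha0 : (0 : ℤ) ≤ (a : ℤ) := Int.natCast_nonneg _
    have hb0 : (0 : ℤ) ≤ (b : ℤ) := Int.natCast_nonneg _
    rw [SimpleGraph.adjMatrix_mulVec_apply, SimpleGraph.neighborFinset_eq_filter,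
      Finset.sum_filter]
    have hsplit : ∀ w : Fin n × Fin n,
        (if (queensGraph n).Adj (a, b) w then Evec n lam w else 0) =
        (if ((a:ℤ)) = (w.1:ℤ) then Evec n lam w else 0)
        + (if ((b:ℤ)) = (w.2:ℤ) then Evec n lam w else 0)
        + (if (a:ℤ) + (b:ℤ) = (w.1:ℤ) + (w.2:ℤ) then Evec n lam w else 0)
        + (if (a:ℤ) - (b:ℤ) = (w.1:ℤ) - (w.2:ℤ) then Evec n lam w else 0)
        - (if w = (a, b) then 4 * Evec n lam w else 0) := by
      intro w
      by_cases hw : w = (a, b)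
      · subst hw
        rw [if_neg (queensGraph n).irrefl, if_pos rfl, if_pos rfl, if_pos rfl, if_pos rfl,
          if_pos rfl]
        ring
      · rw [if_neg hw]
        have hcoord : ¬((w.1:ℤ) = (a:ℤ) ∧ (w.2:ℤ) = (b:ℤ)) := by
          rintro ⟨h1, h2⟩
          exact hw (Prod.ext (Fin.ext (by exact_mod_cast h1)) (Fin.ext (by exact_mod_cast h2)))
        have hAdj : (queensGraph n).Adj (a, b) w ↔
            ((a:ℤ) = (w.1:ℤ) ∨ (b:ℤ) = (w.2:ℤ) ∨ (a:ℤ) + (b:ℤ) = (w.1:ℤ) + (w.2:ℤ) ∨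
              (a:ℤ) - (b:ℤ) = (w.1:ℤ) - (w.2:ℤ)) := by
          constructor
          · exact fun h => h.2
          · exact fun h => ⟨fun he => hw he.symm, h⟩
        rw [if_congr hAdj rfl rfl]
        split_ifs <;> first | ring1 | (exfalso; omega)
    rw [Finset.sum_congr rfl (fun w _ => hsplit w), Finset.sum_sub_distrib,
      Finset.sum_add_distrib, Finset.sum_add_distrib, Finset.sum_add_distrib]
    have hlast : (∑ w : Fin n × Fin n, if w = (a, b) then 4 * Evec n lam w else 0)
        = 4 * Evec n lam (a, b) := by
      rw [Finset.sum_ite_eq' Finset.univ ((a, b) : Fin n × Fin n)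
        (fun w => 4 * Evec n lam w)]
      simp
    -- row sum is zero
    have hrow : (∑ w : Fin n × Fin n, if ((a:ℤ)) = (w.1:ℤ) then Evec n lam w else 0) = 0 := by
      rw [Fintype.sum_prod_type]
      have h1 : ∀ x : Fin n, (∑ y : Fin n, if ((a:ℤ)) = (x:ℤ) then Evec n lam (x, y) else 0)
          = if a = x then (∑ y : Fin n, Evec n lam (a, y)) else 0 := by
        intro x
        by_cases hx : a = x
        · subst hx; simp
        · have hx' : ¬((a:ℤ) = (x:ℤ)) := fun hc => hx (Fin.ext (by exact_mod_cast hc))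
          simp [hx, hx']
      rw [Finset.sum_congr rfl (fun x _ => h1 x), Finset.sum_ite_eq Finset.univ a]
      simp only [Finset.mem_univ, if_true]
      calc ∑ y : Fin n, Evec n lam (a, y)
          = ∑ y : Fin n, (fun z => pf n lam ((a:ℤ) - z) * ch n lam ((a:ℤ) + z + 1 - n)
              - pf n lam ((a:ℤ) + z + 1 - n) * ch n lam ((a:ℤ) - z)) ((y:ℤ)) :=
            Finset.sum_congr rfl (fun y _ => Efact n lam hod hm (a, y))
        _ = ∑ z ∈ Finset.Icc (0:ℤ) ((n:ℤ)-1), (pf n lam ((a:ℤ) - z) * ch n lam ((a:ℤ) + z + 1 - n)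
              - pf n lam ((a:ℤ) + z + 1 - n) * ch n lam ((a:ℤ) - z)) :=
            sum_cast n (fun z => pf n lam ((a:ℤ) - z) * ch n lam ((a:ℤ) + z + 1 - n)
              - pf n lam ((a:ℤ) + z + 1 - n) * ch n lam ((a:ℤ) - z))
        _ = 0 := row_zero n lam _
    -- column sum is zero
    have hcol : (∑ w : Fin n × Fin n, if ((b:ℤ)) = (w.2:ℤ) then Evec n lam w else 0) = 0 := by
      rw [Fintype.sum_prod_type]
      have h1 : ∀ x : Fin n, (∑ y : Fin n, if ((b:ℤ)) = (y:ℤ) then Evec n lam (x, y) else 0)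
          = Evec n lam (x, b) := by
        intro x
        have h2 : ∀ y : Fin n, (if ((b:ℤ)) = (y:ℤ) then Evec n lam (x, y) else 0)
            = if b = y then Evec n lam (x, y) else 0 := by
          intro y
          refine if_congr ?_ rfl rfl
          constructor
          · intro hc; exact Fin.ext (by exact_mod_cast hc)
          · intro hc; rw [hc]
        rw [Finset.sum_congr rfl (fun y _ => h2 y), Finset.sum_ite_eq Finset.univ b]
        simp
      rw [Finset.sum_congr rfl (fun x _ => h1 x)]
      calc ∑ x : Fin n, Evec n lam (x, b)
          = ∑ x : Fin n, (fun z => pf n lam (z - (b:ℤ)) * ch n lam (z + (b:ℤ) + 1 - n)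
              - pf n lam (z + (b:ℤ) + 1 - n) * ch n lam (z - (b:ℤ))) ((x:ℤ)) :=
            Finset.sum_congr rfl (fun x _ => Efact n lam hod hm (x, b))
        _ = ∑ z ∈ Finset.Icc (0:ℤ) ((n:ℤ)-1), (pf n lam (z - (b:ℤ)) * ch n lam (z + (b:ℤ) + 1 - n)
              - pf n lam (z + (b:ℤ) + 1 - n) * ch n lam (z - (b:ℤ))) :=
            sum_cast n (fun z => pf n lam (z - (b:ℤ)) * ch n lam (z + (b:ℤ) + 1 - n)
              - pf n lam (z + (b:ℤ) + 1 - n) * ch n lam (z - (b:ℤ)))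
        _ = 0 := col_zero n lam _
    -- antidiagonal sum
    have hanti : (∑ w : Fin n × Fin n,
          if (a:ℤ) + (b:ℤ) = (w.1:ℤ) + (w.2:ℤ) then Evec n lam w else 0)
        = cC n lam * ch n lam ((a:ℤ) + b + 1 - n)
          - pf n lam ((a:ℤ) + b + 1 - n) * ((lam + 4 : ℤ) : ℝ) := by
      rw [Fintype.sum_prod_type]
      have h1 : ∀ x : Fin n, (∑ y : Fin n, if (a:ℤ) + (b:ℤ) = (x:ℤ) + (y:ℤ)
            then Evec n lam (x, y) else 0)
          = (fun z => if 0 ≤ (((a:ℤ)+b+1-n)+(n:ℤ)-1) - z ∧ (((a:ℤ)+b+1-n)+(n:ℤ)-1) - z < n then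
              (pf n lam (2*z - (((a:ℤ)+b+1-n)+(n:ℤ)-1)) * ch n lam ((a:ℤ) + b + 1 - n)
               - pf n lam ((a:ℤ) + b + 1 - n) * ch n lam (2*z - (((a:ℤ)+b+1-n)+(n:ℤ)-1)))
            else 0) ((x:ℤ)) := by
        intro x
        have h2 : ∀ y : Fin n, (if (a:ℤ) + (b:ℤ) = (x:ℤ) + (y:ℤ) then Evec n lam (x, y) else 0)
            = if (y:ℤ) = (a:ℤ) + b - x then
                (fun z => pf n lam ((x:ℤ) - z) * ch n lam ((x:ℤ) + z + 1 - n)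
                  - pf n lam ((x:ℤ) + z + 1 - n) * ch n lam ((x:ℤ) - z)) ((y:ℤ))
              else 0 := by
          intro y
          exact if_congr (by omega) (Efact n lam hod hm (x, y)) rfl
        rw [Finset.sum_congr rfl (fun y _ => h2 y), sum_if_eq n ((a:ℤ) + b - x)
          (fun z => pf n lam ((x:ℤ) - z) * ch n lam ((x:ℤ) + z + 1 - n)
            - pf n lam ((x:ℤ) + z + 1 - n) * ch n lam ((x:ℤ) - z))]
        simp only []
        refine if_congr (by omega) ?_ rfl
        rw [show (x:ℤ) - ((a:ℤ) + b - x) = 2*(x:ℤ) - (((a:ℤ)+b+1-n)+(n:ℤ)-1) from by ring,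
          show (x:ℤ) + ((a:ℤ) + b - x) + 1 - n = (a:ℤ) + b + 1 - n from by ring]
      rw [Finset.sum_congr rfl (fun x _ => h1 x), sum_cast n
        (fun z => if 0 ≤ (((a:ℤ)+b+1-n)+(n:ℤ)-1) - z ∧ (((a:ℤ)+b+1-n)+(n:ℤ)-1) - z < n then
              (pf n lam (2*z - (((a:ℤ)+b+1-n)+(n:ℤ)-1)) * ch n lam ((a:ℤ) + b + 1 - n)
               - pf n lam ((a:ℤ) + b + 1 - n) * ch n lam (2*z - (((a:ℤ)+b+1-n)+(n:ℤ)-1)))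
            else 0)]
      have h3 : ∀ z ∈ Finset.Icc (0:ℤ) ((n:ℤ)-1),
          (if 0 ≤ (((a:ℤ)+b+1-n)+(n:ℤ)-1) - z ∧ (((a:ℤ)+b+1-n)+(n:ℤ)-1) - z < n then
              (pf n lam (2*z - (((a:ℤ)+b+1-n)+(n:ℤ)-1)) * ch n lam ((a:ℤ) + b + 1 - n)
               - pf n lam ((a:ℤ) + b + 1 - n) * ch n lam (2*z - (((a:ℤ)+b+1-n)+(n:ℤ)-1)))
            else 0)
          = (if 0 ≤ (((a:ℤ)+b+1-n)+(n:ℤ)-1) - z ∧ (((a:ℤ)+b+1-n)+(n:ℤ)-1) - z < n then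
              pf n lam (2*z - (((a:ℤ)+b+1-n)+(n:ℤ)-1)) else 0) * ch n lam ((a:ℤ) + b + 1 - n)
            - pf n lam ((a:ℤ) + b + 1 - n) *
              (if 0 ≤ (((a:ℤ)+b+1-n)+(n:ℤ)-1) - z ∧ (((a:ℤ)+b+1-n)+(n:ℤ)-1) - z < n then
                ch n lam (2*z - (((a:ℤ)+b+1-n)+(n:ℤ)-1)) else 0) := by
        intro z _
        split_ifs <;> ring1
      rw [Finset.sum_congr rfl h3, Finset.sum_sub_distrib, ← Finset.sum_mul, ← Finset.mul_sum]
      rw [ch_mul_sum n lam hod hm hl ((a:ℤ)+b+1-n),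
        pf_mul_sum n lam hod hm hl ((a:ℤ)+b+1-n)]
    -- diagonal sum
    have hdiag : (∑ w : Fin n × Fin n,
          if (a:ℤ) - (b:ℤ) = (w.1:ℤ) - (w.2:ℤ) then Evec n lam w else 0)
        = pf n lam ((a:ℤ) - b) * ((lam + 4 : ℤ) : ℝ)
          - cC n lam * ch n lam ((a:ℤ) - b) := by
      rw [Fintype.sum_prod_type]
      have h1 : ∀ x : Fin n, (∑ y : Fin n, if (a:ℤ) - (b:ℤ) = (x:ℤ) - (y:ℤ)
            then Evec n lam (x, y) else 0)
          = (fun z => if 0 ≤ (((a:ℤ)-b)+(n:ℤ)-1) - z ∧ (((a:ℤ)-b)+(n:ℤ)-1) - z < n then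
              (pf n lam ((a:ℤ) - b) * ch n lam (2*z - (((a:ℤ)-b)+(n:ℤ)-1))
               - pf n lam (2*z - (((a:ℤ)-b)+(n:ℤ)-1)) * ch n lam ((a:ℤ) - b))
            else 0) ((x:ℤ)) := by
        intro x
        have h2 : ∀ y : Fin n, (if (a:ℤ) - (b:ℤ) = (x:ℤ) - (y:ℤ) then Evec n lam (x, y) else 0)
            = if (y:ℤ) = (x:ℤ) - ((a:ℤ) - b) then
                (fun z => pf n lam ((x:ℤ) - z) * ch n lam ((x:ℤ) + z + 1 - n)
                  - pf n lam ((x:ℤ) + z + 1 - n) * ch n lam ((x:ℤ) - z)) ((y:ℤ))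
              else 0 := by
          intro y
          exact if_congr (by omega) (Efact n lam hod hm (x, y)) rfl
        rw [Finset.sum_congr rfl (fun y _ => h2 y), sum_if_eq n ((x:ℤ) - ((a:ℤ) - b))
          (fun z => pf n lam ((x:ℤ) - z) * ch n lam ((x:ℤ) + z + 1 - n)
            - pf n lam ((x:ℤ) + z + 1 - n) * ch n lam ((x:ℤ) - z))]
        simp only []
        refine if_congr (by omega) ?_ rfl
        rw [show (x:ℤ) - ((x:ℤ) - ((a:ℤ) - b)) = (a:ℤ) - b from by ring,
          show (x:ℤ) + ((x:ℤ) - ((a:ℤ) - b)) + 1 - n = 2*(x:ℤ) - (((a:ℤ)-b)+(n:ℤ)-1) from by ring]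
      rw [Finset.sum_congr rfl (fun x _ => h1 x), sum_cast n
        (fun z => if 0 ≤ (((a:ℤ)-b)+(n:ℤ)-1) - z ∧ (((a:ℤ)-b)+(n:ℤ)-1) - z < n then
              (pf n lam ((a:ℤ) - b) * ch n lam (2*z - (((a:ℤ)-b)+(n:ℤ)-1))
               - pf n lam (2*z - (((a:ℤ)-b)+(n:ℤ)-1)) * ch n lam ((a:ℤ) - b))
            else 0)]
      have h3 : ∀ z ∈ Finset.Icc (0:ℤ) ((n:ℤ)-1),
          (if 0 ≤ (((a:ℤ)-b)+(n:ℤ)-1) - z ∧ (((a:ℤ)-b)+(n:ℤ)-1) - z < n then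
              (pf n lam ((a:ℤ) - b) * ch n lam (2*z - (((a:ℤ)-b)+(n:ℤ)-1))
               - pf n lam (2*z - (((a:ℤ)-b)+(n:ℤ)-1)) * ch n lam ((a:ℤ) - b))
            else 0)
          = pf n lam ((a:ℤ) - b) *
              (if 0 ≤ (((a:ℤ)-b)+(n:ℤ)-1) - z ∧ (((a:ℤ)-b)+(n:ℤ)-1) - z < n then
                ch n lam (2*z - (((a:ℤ)-b)+(n:ℤ)-1)) else 0)
            - (if 0 ≤ (((a:ℤ)-b)+(n:ℤ)-1) - z ∧ (((a:ℤ)-b)+(n:ℤ)-1) - z < n then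
                pf n lam (2*z - (((a:ℤ)-b)+(n:ℤ)-1)) else 0) * ch n lam ((a:ℤ) - b) := by
        intro z _
        split_ifs <;> ring1
      rw [Finset.sum_congr rfl h3, Finset.sum_sub_distrib, ← Finset.mul_sum, ← Finset.sum_mul]
      rw [pf_mul_sum n lam hod hm hl ((a:ℤ)-b), ch_mul_sum n lam hod hm hl ((a:ℤ)-b)]
    rw [hrow, hcol, hanti, hdiag, hlast]
    have hE : Evec n lam (a, b) = pf n lam ((a:ℤ) - b) * ch n lam ((a:ℤ) + b + 1 - n)
        - pf n lam ((a:ℤ) + b + 1 - n) * ch n lam ((a:ℤ) - b) := Efact n lam hod hm (a, b)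
    rw [Pi.smul_apply, smul_eq_mul, hE]
    have hcore := core n lam hod hm hl ((a:ℤ) - b) ((a:ℤ) + b + 1 - n)
      (by omega) (by omega) (by omega) (by omega) (by omega)
    have hc : ((lam + 4 : ℤ) : ℝ) = (lam : ℝ) + 4 := by push_cast; ring
    rw [hc] at hcore ⊢
    linarith [hcore]
  -- nonvanishing
  have hne : Evec n lam ≠ 0 := by
    intro h0
    rcases hlam with ⟨h1, h2⟩ | ⟨h1, h2⟩
    · -- left branch: k ≤ -1, witness (n-1, lam+3)
      have hb' : (lam + 3).toNat < n := by omega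
      have ha' : n - 1 < n := by omega
      set v : Fin n × Fin n := (⟨n - 1, ha'⟩, ⟨(lam + 3).toNat, hb'⟩) with hv
      have hzero := congrFun h0 v
      have hE := Efact n lam hod hm v
      have hva : ((v.1 : ℕ) : ℤ) = (n:ℤ) - 1 := by
        simp only [hv, Fin.val_mk]
        omega
      have hvb : ((v.2 : ℕ) : ℤ) = lam + 3 := by
        simp only [hv, Fin.val_mk]
        omega
      rw [hva, hvb] at hE
      rw [show ((n:ℤ) - 1 - (lam + 3)) = (n:ℤ) - (lam + 4) from by ring,
        show ((n:ℤ) - 1 + (lam + 3) + 1 - n) = lam + 3 from by ring] at hE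
      have e1 : pf n lam ((n:ℤ) - (lam + 4)) = (((lam + 4) - ((n : ℤ) - 1) / 2 : ℤ) : ℝ) := by
        simp [pf]
      have e2 : ch n lam (lam + 3) = 1 := by
        simp only [ch]
        rw [if_pos (by omega)]
      have e3 : ch n lam ((n:ℤ) - (lam + 4)) = 0 := by
        simp only [ch]
        rw [if_neg (by omega)]
      rw [e1, e2, e3] at hE
      rw [hE, Pi.zero_apply] at hzero
      have h5 : (((lam + 4) - ((n : ℤ) - 1) / 2 : ℤ) : ℝ) = 0 := by linarith [hzero]
      have h6 : ((lam + 4) - ((n : ℤ) - 1) / 2 : ℤ) = 0 := by exact_mod_cast h5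
      omega
    · -- right branch: k ≥ 2, witness (M + (n+1)/2, (n+1)/2) 0-based
      have ha' : ((n:ℤ) - (lam + 4) + ((n:ℤ)+1)/2).toNat < n := by omega
      have hb' : (((n:ℤ)+1)/2).toNat < n := by omega
      set v : Fin n × Fin n := (⟨((n:ℤ) - (lam + 4) + ((n:ℤ)+1)/2).toNat, ha'⟩,
        ⟨(((n:ℤ)+1)/2).toNat, hb'⟩) with hv
      have hzero := congrFun h0 v
      have hE := Efact n lam hod hm v
      have hva : ((v.1 : ℕ) : ℤ) = (n:ℤ) - (lam + 4) + ((n:ℤ)+1)/2 := by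
        simp only [hv, Fin.val_mk]
        omega
      have hvb : ((v.2 : ℕ) : ℤ) = ((n:ℤ)+1)/2 := by
        simp only [hv, Fin.val_mk]
        omega
      rw [hva, hvb] at hE
      rw [show ((n:ℤ) - (lam + 4) + ((n:ℤ)+1)/2 - ((n:ℤ)+1)/2) = (n:ℤ) - (lam + 4)
          from by ring] at hE
      have hdiv : ((n:ℤ) - (lam + 4) + ((n:ℤ)+1)/2 + ((n:ℤ)+1)/2 + 1 - n)
          = (n:ℤ) - (lam + 4) + 2 := by omega
      rw [hdiv] at hE
      have e1 : pf n lam ((n:ℤ) - (lam + 4)) = (((lam + 4) - ((n : ℤ) - 1) / 2 : ℤ) : ℝ) := by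
        simp [pf]
      have e2 : ch n lam ((n:ℤ) - (lam + 4) + 2) = 1 := by
        simp only [ch]
        rw [if_pos (by omega)]
      have e3 : pf n lam ((n:ℤ) - (lam + 4) + 2) = 0 := by
        simp only [pf]
        rw [if_neg (by omega), if_neg (by omega)]
      rw [e1, e2, e3] at hE
      rw [hE, Pi.zero_apply] at hzero
      have h5 : (((lam + 4) - ((n : ℤ) - 1) / 2 : ℤ) : ℝ) = 0 := by linarith [hzero]
      have h6 : ((lam + 4) - ((n : ℤ) - 1) / 2 : ℤ) = 0 := by exact_mod_cast h5
      omega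
  refine ⟨hne, hmul, ?_⟩
  apply Module.End.hasEigenvalue_of_hasEigenvector (x := Evec n lam)
  refine ⟨Module.End.mem_eigenspace_iff.2 ?_, hne⟩
  rw [Matrix.toLin'_apply, hmul]
end

section
/- For n ≥ 3 and 1 ≤ ℓ ≤ n, the vector F_{n,ℓ} = C_{n,ℓ} + R_{n,ℓ} is an eigenvector of the adjacency matrix of the n-Queens graph Q(n) associated with the eigenvalue n-4. -/
open Finset Matrix

/-- The vector `C_{n,ℓ}` (1-based coordinates: the square of `v` is `(v.1+1, v.2+1)`). -/
noncomputable def Cvec (n : ℕ) (l : ℤ) (v : Fin n × Fin n) : ℝ :=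
  if (v.2 : ℤ) + 1 = l ∨ (v.2 : ℤ) + 1 = (n : ℤ) + 1 - l then 1 else 0

/-- The vector `R_{n,ℓ}`. -/
noncomputable def Rvec (n : ℕ) (l : ℤ) (v : Fin n × Fin n) : ℝ :=
  if (v.1 : ℤ) + 1 = l ∨ (v.1 : ℤ) + 1 = (n : ℤ) + 1 - l then -1 else 0

/-- The vector `F_{n,ℓ} = C_{n,ℓ} + R_{n,ℓ}`. -/
noncomputable def Fvec (n : ℕ) (l : ℤ) (v : Fin n × Fin n) : ℝ :=
  Cvec n l v + Rvec n l v

lemma sum_ind_mul (n : ℕ) (x : ℤ) (hx : 0 ≤ x) (hx' : x < n) (g : Fin n → ℝ) :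
    ∑ q : Fin n, (if (q:ℤ) = x then (1:ℝ) else 0) * g q = g ⟨x.toNat, by omega⟩ := by
  rw [Finset.sum_eq_single (⟨x.toNat, by omega⟩ : Fin n)]
  · simp [Int.toNat_of_nonneg hx]
  · intro b _ hb
    rw [if_neg, zero_mul]
    intro hbx
    apply hb
    apply Fin.ext
    have : (b : ℤ) = x := hbx
    show b.val = x.toNat
    omega
  · simp

lemma sum_ind (n : ℕ) (x : ℤ) :
    ∑ p : Fin n, (if (p:ℤ) = x then (1:ℝ) else 0) = if 0 ≤ x ∧ x < n then 1 else 0 := by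
  by_cases h : 0 ≤ x ∧ x < n
  · rw [if_pos h]
    have := sum_ind_mul n x h.1 h.2 (fun _ => (1:ℝ))
    simpa using this
  · rw [if_neg h]
    apply Finset.sum_eq_zero
    intro p _
    rw [if_neg]
    intro hp
    have : (p : ℤ) = x := hp
    have h0 : (0:ℤ) ≤ (p:ℤ) := by positivity
    have h1 : (p:ℤ) < n := by exact_mod_cast p.2
    omega

lemma colCount (n : ℕ) (v : Fin n × Fin n) (q : Fin n) :
    ∑ p : Fin n, (if (queensGraph n).Adj v (p, q) then (1:ℝ) else 0) =
      if (q:ℤ) = (v.2:ℤ) then (n:ℝ) - 1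
      else 1 + (if 0 ≤ (v.1:ℤ) + v.2 - q ∧ (v.1:ℤ) + v.2 - q < n then 1 else 0)
             + (if 0 ≤ (v.1:ℤ) - v.2 + q ∧ (v.1:ℤ) - v.2 + q < n then 1 else 0) := by
  obtain ⟨i, j⟩ := v
  simp only at *
  by_cases hq : (q:ℤ) = (j:ℤ)
  · rw [if_pos hq]
    have hq' : q = j := by apply Fin.ext; omega
    subst hq'
    have key : ∀ p : Fin n, (if (queensGraph n).Adj (i, q) (p, q) then (1:ℝ) else 0)
        = 1 - (if (p:ℤ) = (i:ℤ) then 1 else 0) := by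
      intro p
      by_cases hp : (p:ℤ) = (i:ℤ)
      · have hp' : p = i := by apply Fin.ext; omega
        subst hp'
        simp [queensGraph]
      · have hA : (queensGraph n).Adj (i, q) (p, q) := by
          refine ⟨?_, Or.inr (Or.inl rfl)⟩
          intro h
          rw [Prod.mk.injEq] at h
          exact hp (by rw [h.1])
        rw [if_pos hA, if_neg hp]
        ring
    rw [Finset.sum_congr rfl (fun p _ => key p), Finset.sum_sub_distrib, sum_ind]
    have h0 : 0 ≤ (i:ℤ) := by positivity
    have h1 : (i:ℤ) < n := by exact_mod_cast i.2
    rw [if_pos ⟨h0, h1⟩]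
    simp
  · rw [if_neg hq]
    have key : ∀ p : Fin n, (if (queensGraph n).Adj (i, j) (p, q) then (1:ℝ) else 0)
        = (if (p:ℤ) = (i:ℤ) then 1 else 0)
          + (if (p:ℤ) = (i:ℤ) + j - q then 1 else 0)
          + (if (p:ℤ) = (i:ℤ) - j + q then 1 else 0) := by
      intro p
      have hne : ((p, q) : Fin n × Fin n) ≠ (i, j) := by
        intro h
        rw [Prod.mk.injEq] at h
        exact hq (by rw [h.2])
      have hadj : (queensGraph n).Adj (i, j) (p, q) ↔
          ((p:ℤ) = (i:ℤ) ∨ (p:ℤ) = (i:ℤ) + j - q ∨ (p:ℤ) = (i:ℤ) - j + q) := by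
        constructor
        · rintro ⟨-, h⟩
          simp only at h
          omega
        · intro h
          refine ⟨fun he => hne (by rw [he]), ?_⟩
          simp only
          omega
      rw [if_congr hadj rfl rfl]
      split_ifs <;> first | (exfalso; omega) | norm_num
    rw [Finset.sum_congr rfl (fun p _ => key p)]
    rw [Finset.sum_add_distrib, Finset.sum_add_distrib, sum_ind, sum_ind, sum_ind]
    have h0 : 0 ≤ (i:ℤ) := by positivity
    have h1 : (i:ℤ) < n := by exact_mod_cast i.2
    rw [if_pos ⟨h0, h1⟩]

lemma rowCount (n : ℕ) (v : Fin n × Fin n) (p : Fin n) :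
    ∑ q : Fin n, (if (queensGraph n).Adj v (p, q) then (1:ℝ) else 0) =
      if (p:ℤ) = (v.1:ℤ) then (n:ℝ) - 1
      else 1 + (if 0 ≤ (v.1:ℤ) + v.2 - p ∧ (v.1:ℤ) + v.2 - p < n then 1 else 0)
             + (if 0 ≤ (v.2:ℤ) - v.1 + p ∧ (v.2:ℤ) - v.1 + p < n then 1 else 0) := by
  obtain ⟨i, j⟩ := v
  simp only at *
  by_cases hp : (p:ℤ) = (i:ℤ)
  · rw [if_pos hp]
    have hp' : p = i := by apply Fin.ext; omega
    subst hp'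
    have key : ∀ q : Fin n, (if (queensGraph n).Adj (p, j) (p, q) then (1:ℝ) else 0)
        = 1 - (if (q:ℤ) = (j:ℤ) then 1 else 0) := by
      intro q
      by_cases hq : (q:ℤ) = (j:ℤ)
      · have hq' : q = j := by apply Fin.ext; omega
        subst hq'
        simp [queensGraph]
      · have hA : (queensGraph n).Adj (p, j) (p, q) := by
          refine ⟨?_, Or.inl rfl⟩
          intro h
          rw [Prod.mk.injEq] at h
          exact hq (by rw [h.2])
        rw [if_pos hA, if_neg hq]
        ring
    rw [Finset.sum_congr rfl (fun q _ => key q), Finset.sum_sub_distrib, sum_ind]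
    have h0 : 0 ≤ (j:ℤ) := by positivity
    have h1 : (j:ℤ) < n := by exact_mod_cast j.2
    rw [if_pos ⟨h0, h1⟩]
    simp
  · rw [if_neg hp]
    have key : ∀ q : Fin n, (if (queensGraph n).Adj (i, j) (p, q) then (1:ℝ) else 0)
        = (if (q:ℤ) = (j:ℤ) then 1 else 0)
          + (if (q:ℤ) = (i:ℤ) + j - p then 1 else 0)
          + (if (q:ℤ) = (j:ℤ) - i + p then 1 else 0) := by
      intro q
      have hne : ((p, q) : Fin n × Fin n) ≠ (i, j) := by
        intro h
        rw [Prod.mk.injEq] at h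
        exact hp (by rw [h.1])
      have hadj : (queensGraph n).Adj (i, j) (p, q) ↔
          ((q:ℤ) = (j:ℤ) ∨ (q:ℤ) = (i:ℤ) + j - p ∨ (q:ℤ) = (j:ℤ) - i + p) := by
        constructor
        · rintro ⟨-, h⟩
          simp only at h
          omega
        · intro h
          refine ⟨fun he => hne (by rw [he]), ?_⟩
          simp only
          omega
      rw [if_congr hadj rfl rfl]
      split_ifs <;> first | (exfalso; omega) | norm_num
    rw [Finset.sum_congr rfl (fun q _ => key q)]
    rw [Finset.sum_add_distrib, Finset.sum_add_distrib, sum_ind, sum_ind, sum_ind]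
    have h0 : 0 ≤ (j:ℤ) := by positivity
    have h1 : (j:ℤ) < n := by exact_mod_cast j.2
    rw [if_pos ⟨h0, h1⟩]

/-- weighted column evaluation -/
lemma colEval (n : ℕ) (i j : Fin n) (x : ℤ) (hx0 : 0 ≤ x) (hx1 : x < n) :
    ∑ q : Fin n, (if (q:ℤ) = x then (1:ℝ) else 0) *
      (∑ p : Fin n, (if (queensGraph n).Adj (i, j) (p, q) then (1:ℝ) else 0)) =
      if (j:ℤ) = x then (n:ℝ) - 1
      else 1 + (if 0 ≤ (i:ℤ) + j - x ∧ (i:ℤ) + j - x < n then 1 else 0)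
             + (if 0 ≤ (i:ℤ) - j + x ∧ (i:ℤ) - j + x < n then 1 else 0) := by
  rw [sum_ind_mul n x hx0 hx1]
  have hc : ((⟨x.toNat, by omega⟩ : Fin n) : ℤ) = x := by
    simp [Int.toNat_of_nonneg hx0]
  rw [colCount]
  simp only [hc]
  exact if_congr eq_comm rfl rfl

/-- weighted row evaluation -/
lemma rowEval (n : ℕ) (i j : Fin n) (x : ℤ) (hx0 : 0 ≤ x) (hx1 : x < n) :
    ∑ p : Fin n, (if (p:ℤ) = x then (1:ℝ) else 0) *
      (∑ q : Fin n, (if (queensGraph n).Adj (i, j) (p, q) then (1:ℝ) else 0)) =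
      if (i:ℤ) = x then (n:ℝ) - 1
      else 1 + (if 0 ≤ (i:ℤ) + j - x ∧ (i:ℤ) + j - x < n then 1 else 0)
             + (if 0 ≤ (j:ℤ) - i + x ∧ (j:ℤ) - i + x < n then 1 else 0) := by
  rw [sum_ind_mul n x hx0 hx1]
  have hc : ((⟨x.toNat, by omega⟩ : Fin n) : ℤ) = x := by
    simp [Int.toNat_of_nonneg hx0]
  rw [rowCount]
  simp only [hc]
  exact if_congr eq_comm rfl rfl

set_option maxHeartbeats 4000000 in
/-- for `n ≥ 3` and `1 ≤ ℓ ≤ n`, `F_{n,ℓ}` is an eigenvector of the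
adjacency matrix of `Q(n)` for the eigenvalue `n - 4`. -/
theorem stmt10 (n : ℕ) (hn : 3 ≤ n) (l : ℤ) (hl1 : 1 ≤ l) (hl2 : l ≤ (n : ℤ)) :
    (queensGraph n).adjMatrix ℝ *ᵥ Fvec n l = ((n : ℝ) - 4) • Fvec n l ∧ Fvec n l ≠ 0 := by
  have hx10 : (0:ℤ) ≤ l - 1 := by omega
  have hx11 : l - 1 < (n:ℤ) := by omega
  have hx20 : (0:ℤ) ≤ (n:ℤ) - l := by omega
  have hx21 : (n:ℤ) - l < (n:ℤ) := by omega
  constructor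
  · funext v
    obtain ⟨i, j⟩ := v
    have hi0 : (0:ℤ) ≤ (i:ℤ) := by positivity
    have hi1 : (i:ℤ) < n := by exact_mod_cast i.2
    have hj0 : (0:ℤ) ≤ (j:ℤ) := by positivity
    have hj1 : (j:ℤ) < n := by exact_mod_cast j.2
    rw [SimpleGraph.adjMatrix_mulVec_apply]
    rw [show (queensGraph n).neighborFinset (i, j) =
        Finset.univ.filter ((queensGraph n).Adj (i, j)) from by
      ext w; simp [SimpleGraph.mem_neighborFinset]]
    rw [Finset.sum_filter]
    have expand : ∀ w : Fin n × Fin n,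
        (if (queensGraph n).Adj (i, j) w then Fvec n l w else 0)
        = (if (queensGraph n).Adj (i, j) w then (1:ℝ) else 0) * Cvec n l w
        + (if (queensGraph n).Adj (i, j) w then (1:ℝ) else 0) * Rvec n l w := by
      intro w
      by_cases h : (queensGraph n).Adj (i, j) w <;> simp [h, Fvec]
    rw [Finset.sum_congr rfl (fun w _ => expand w), Finset.sum_add_distrib]
    have hCpart : ∑ w : Fin n × Fin n,
        (if (queensGraph n).Adj (i, j) w then (1:ℝ) else 0) * Cvec n l w
        = ∑ q : Fin n, (if (q:ℤ) + 1 = l ∨ (q:ℤ) + 1 = (n:ℤ) + 1 - l then (1:ℝ) else 0) *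
            (∑ p : Fin n, (if (queensGraph n).Adj (i, j) (p, q) then (1:ℝ) else 0)) := by
      rw [Fintype.sum_prod_type, Finset.sum_comm]
      refine Finset.sum_congr rfl fun q _ => ?_
      calc ∑ p : Fin n, (if (queensGraph n).Adj (i, j) (p, q) then (1:ℝ) else 0) * Cvec n l (p, q)
          = ∑ p : Fin n, (if (queensGraph n).Adj (i, j) (p, q) then (1:ℝ) else 0) *
              (if (q:ℤ) + 1 = l ∨ (q:ℤ) + 1 = (n:ℤ) + 1 - l then (1:ℝ) else 0) := rfl
        _ = _ := by rw [← Finset.sum_mul, mul_comm]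
    have hRpart : ∑ w : Fin n × Fin n,
        (if (queensGraph n).Adj (i, j) w then (1:ℝ) else 0) * Rvec n l w
        = ∑ p : Fin n, (if (p:ℤ) + 1 = l ∨ (p:ℤ) + 1 = (n:ℤ) + 1 - l then (-1:ℝ) else 0) *
            (∑ q : Fin n, (if (queensGraph n).Adj (i, j) (p, q) then (1:ℝ) else 0)) := by
      rw [Fintype.sum_prod_type]
      refine Finset.sum_congr rfl fun p _ => ?_
      calc ∑ q : Fin n, (if (queensGraph n).Adj (i, j) (p, q) then (1:ℝ) else 0) * Rvec n l (p, q)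
          = ∑ q : Fin n, (if (queensGraph n).Adj (i, j) (p, q) then (1:ℝ) else 0) *
              (if (p:ℤ) + 1 = l ∨ (p:ℤ) + 1 = (n:ℤ) + 1 - l then (-1:ℝ) else 0) := rfl
        _ = _ := by rw [← Finset.sum_mul, mul_comm]
    rw [hCpart, hRpart]
    by_cases hmid : 2 * l = (n:ℤ) + 1
    · -- single column/row
      have hcol : ∀ q : Fin n, (if (q:ℤ) + 1 = l ∨ (q:ℤ) + 1 = (n:ℤ) + 1 - l then (1:ℝ) else 0)
          = (if (q:ℤ) = l - 1 then (1:ℝ) else 0) := by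
        intro q; split_ifs <;> first | (exfalso; omega) | rfl
      have hrow : ∀ p : Fin n, (if (p:ℤ) + 1 = l ∨ (p:ℤ) + 1 = (n:ℤ) + 1 - l then (-1:ℝ) else 0)
          = -(if (p:ℤ) = l - 1 then (1:ℝ) else 0) := by
        intro p; split_ifs <;> first | (exfalso; omega) | norm_num
      simp only [hcol, hrow, neg_mul, Finset.sum_neg_distrib]
      rw [colEval n i j (l-1) hx10 hx11, rowEval n i j (l-1) hx10 hx11]
      have hauxm : (if 0 ≤ (j:ℤ) - i + (l - 1) ∧ (j:ℤ) - i + (l - 1) < n then (1:ℝ) else 0)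
          = (if 0 ≤ (i:ℤ) - j + (l - 1) ∧ (i:ℤ) - j + (l - 1) < n then (1:ℝ) else 0) := by
        split_ifs <;> first | (exfalso; omega) | rfl
      rw [hauxm]
      simp only [Fvec, Cvec, Rvec, Pi.smul_apply, smul_eq_mul]
      rw [hcol j, hrow i]
      split_ifs <;> first | (exfalso; omega) | (push_cast; ring)
    · have hcol : ∀ q : Fin n, (if (q:ℤ) + 1 = l ∨ (q:ℤ) + 1 = (n:ℤ) + 1 - l then (1:ℝ) else 0)
          = (if (q:ℤ) = l - 1 then (1:ℝ) else 0) + (if (q:ℤ) = (n:ℤ) - l then (1:ℝ) else 0) := by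
        intro q; split_ifs <;> first | (exfalso; omega) | norm_num
      have hrow : ∀ p : Fin n, (if (p:ℤ) + 1 = l ∨ (p:ℤ) + 1 = (n:ℤ) + 1 - l then (-1:ℝ) else 0)
          = -(if (p:ℤ) = l - 1 then (1:ℝ) else 0) - (if (p:ℤ) = (n:ℤ) - l then (1:ℝ) else 0) := by
        intro p; split_ifs <;> first | (exfalso; omega) | norm_num
      simp only [hcol, hrow, add_mul, sub_mul, neg_mul, Finset.sum_add_distrib,
        Finset.sum_sub_distrib, Finset.sum_neg_distrib]
      rw [colEval n i j (l-1) hx10 hx11, colEval n i j ((n:ℤ)-l) hx20 hx21,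
        rowEval n i j (l-1) hx10 hx11, rowEval n i j ((n:ℤ)-l) hx20 hx21]
      have haux1 : (if 0 ≤ (j:ℤ) - i + (l - 1) ∧ (j:ℤ) - i + (l - 1) < n then (1:ℝ) else 0)
          = (if 0 ≤ (i:ℤ) - j + ((n:ℤ) - l) ∧ (i:ℤ) - j + ((n:ℤ) - l) < n then (1:ℝ) else 0) := by
        split_ifs <;> first | (exfalso; omega) | rfl
      have haux2 : (if 0 ≤ (j:ℤ) - i + ((n:ℤ) - l) ∧ (j:ℤ) - i + ((n:ℤ) - l) < n then (1:ℝ) else 0)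
          = (if 0 ≤ (i:ℤ) - j + (l - 1) ∧ (i:ℤ) - j + (l - 1) < n then (1:ℝ) else 0) := by
        split_ifs <;> first | (exfalso; omega) | rfl
      rw [haux1, haux2]
      simp only [Fvec, Cvec, Rvec, Pi.smul_apply, smul_eq_mul]
      rw [hcol j, hrow i]
      split_ifs <;> first | (exfalso; omega) | (push_cast; ring)
  · intro h0
    have hex : ∃ i₀ : Fin n, ¬((i₀:ℤ) + 1 = l ∨ (i₀:ℤ) + 1 = (n:ℤ) + 1 - l) := by
      by_contra hc
      push_neg at hc
      have e0 := hc ⟨0, by omega⟩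
      have e1 := hc ⟨1, by omega⟩
      have e2 := hc ⟨2, by omega⟩
      have c0 : (((⟨0, by omega⟩ : Fin n)):ℤ) = 0 := by simp
      have c1 : (((⟨1, by omega⟩ : Fin n)):ℤ) = 1 := by simp
      have c2 : (((⟨2, by omega⟩ : Fin n)):ℤ) = 2 := by simp
      rw [c0] at e0; rw [c1] at e1; rw [c2] at e2
      omega
    obtain ⟨i₀, hi₀⟩ := hex
    have hc₁ : (((⟨(l-1).toNat, by omega⟩ : Fin n)):ℤ) = l - 1 := by
      show (((l-1).toNat : ℕ) : ℤ) = l - 1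
      omega
    have := congrFun h0 (i₀, (⟨(l-1).toNat, by omega⟩ : Fin n))
    simp only [Fvec, Cvec, Rvec, Pi.zero_apply] at this
    rw [if_pos, if_neg hi₀, add_zero] at this
    · exact one_ne_zero this
    · left
      simp only [hc₁]
      omega
end

section
/- For even n ≥ 4, the set {F_{n,1}, F_{n,2}, ..., F_{n,(n-2)/2}} is linearly independent in ℝ^{[n]×[n]}; consequently, n-4 is an eigenvalue of the n-Queens graph Q(n) of multiplicity at least (n-2)/2. -/
open Finset Matrix

lemma queens_pointwise (n : ℕ) (l : ℤ) (v w : Fin n × Fin n) :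
    (if (queensGraph n).Adj v w then Fvec n l w else 0)
    = (if (v.1 : ℤ) = (w.1 : ℤ) then Fvec n l w else 0)
      + (if (v.2 : ℤ) = (w.2 : ℤ) then Fvec n l w else 0)
      + (if (v.1 : ℤ) + v.2 = w.1 + w.2 then Fvec n l w else 0)
      + (if (v.1 : ℤ) - v.2 = w.1 - w.2 then Fvec n l w else 0)
      - (if w = v then 4 * Fvec n l v else 0) := by
  obtain ⟨a, b⟩ := v
  obtain ⟨c, d⟩ := w
  by_cases hv : ((c, d) : Fin n × Fin n) = (a, b)
  · rw [hv]
    simp [queensGraph]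
    ring
  · rw [if_neg hv, sub_zero]
    have hne : ¬((a : ℤ) = c ∧ (b : ℤ) = d) := by
      rintro ⟨p, q⟩
      exact hv (by simp [Prod.ext_iff, Fin.ext_iff]; omega)
    have hadj : (queensGraph n).Adj (a, b) (c, d) ↔
        ((a : ℤ) = c ∨ (b : ℤ) = d ∨ (a : ℤ) + b = c + d ∨ (a : ℤ) - b = c - d) := by
      constructor
      · rintro ⟨_, h⟩; exact h
      · intro h; exact ⟨fun he => hv (by rw [he]), h⟩
    by_cases h1 : (a : ℤ) = c <;> by_cases h2 : (b : ℤ) = d <;>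
      by_cases h3 : (a : ℤ) + b = c + d <;> by_cases h4 : (a : ℤ) - b = c - d <;>
      first
        | (exfalso; omega)
        | simp [hadj, h1, h2, h3, h4]

lemma two_count (n : ℕ) (l : ℤ) (hl1 : 1 ≤ l) (hl2 : 2 * l + 1 ≤ n) :
    ∑ y : Fin n, (if (y : ℤ) + 1 = l ∨ (y : ℤ) + 1 = (n : ℤ) + 1 - l then (1:ℝ) else 0) = 2 := by
  have hn : 0 < n := by omega
  set y1 : Fin n := ⟨l.toNat - 1, by omega⟩ with hy1
  set y2 : Fin n := ⟨n - l.toNat, by omega⟩ with hy2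
  have hcond : ∀ y : Fin n, ((y : ℤ) + 1 = l ∨ (y : ℤ) + 1 = (n : ℤ) + 1 - l) ↔ (y = y1 ∨ y = y2) := by
    intro y
    rw [Fin.ext_iff, Fin.ext_iff]
    simp only [hy1, hy2]
    omega
  have hne : y1 ≠ y2 := by rw [Fin.ne_iff_vne]; simp only [hy1, hy2]; omega
  simp only [hcond]
  have : ∀ y : Fin n, (if y = y1 ∨ y = y2 then (1:ℝ) else 0)
      = (if y = y1 then (1:ℝ) else 0) + (if y = y2 then 1 else 0) := by
    intro y
    by_cases e1 : y = y1 <;> by_cases e2 : y = y2 <;> simp_all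
  rw [Finset.sum_congr rfl fun y _ => this y, Finset.sum_add_distrib]
  simp
  norm_num

lemma row_sum (n : ℕ) (l : ℤ) (hl1 : 1 ≤ l) (hl2 : 2 * l + 1 ≤ n) (a b : Fin n) :
    ∑ w : Fin n × Fin n, (if (a : ℤ) = (w.1 : ℤ) then Fvec n l w else 0)
      = 2 + n * Rvec n l (a, b) := by
  rw [Fintype.sum_prod_type]
  have step : ∀ x : Fin n, ∑ y : Fin n, (if (a : ℤ) = (x : ℤ) then Fvec n l (x, y) else 0)
      = if x = a then (∑ y : Fin n, Fvec n l (x, y)) else 0 := by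
    intro x
    have hiff : ((a : ℤ) = (x : ℤ)) ↔ x = a := by rw [Fin.ext_iff]; omega
    by_cases h : x = a
    · rw [if_pos h]; exact Finset.sum_congr rfl fun y _ => if_pos (hiff.mpr h)
    · rw [if_neg h]
      have := hiff.not.mpr h
      simp [this]
  rw [Finset.sum_congr rfl fun x _ => step x, Finset.sum_ite_eq' Finset.univ a]
  rw [if_pos (Finset.mem_univ a)]
  have : ∀ y : Fin n, Fvec n l (a, y) = Cvec n l (a, y) + Rvec n l (a, b) := fun y => rfl
  rw [Finset.sum_congr rfl fun y _ => this y, Finset.sum_add_distrib]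
  have hC : ∑ y : Fin n, Cvec n l (a, y) = 2 := two_count n l hl1 hl2
  rw [hC, Finset.sum_const, Finset.card_univ, Fintype.card_fin, nsmul_eq_mul]

lemma col_sum (n : ℕ) (l : ℤ) (hl1 : 1 ≤ l) (hl2 : 2 * l + 1 ≤ n) (a b : Fin n) :
    ∑ w : Fin n × Fin n, (if (b : ℤ) = (w.2 : ℤ) then Fvec n l w else 0)
      = n * Cvec n l (a, b) - 2 := by
  rw [Fintype.sum_prod_type_right]
  have step : ∀ y : Fin n, ∑ x : Fin n, (if (b : ℤ) = (y : ℤ) then Fvec n l (x, y) else 0)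
      = if y = b then (∑ x : Fin n, Fvec n l (x, y)) else 0 := by
    intro y
    have hiff : ((b : ℤ) = (y : ℤ)) ↔ y = b := by rw [Fin.ext_iff]; omega
    by_cases h : y = b
    · rw [if_pos h]; exact Finset.sum_congr rfl fun x _ => if_pos (hiff.mpr h)
    · rw [if_neg h]
      have := hiff.not.mpr h
      simp [this]
  rw [Finset.sum_congr rfl fun y _ => step y, Finset.sum_ite_eq' Finset.univ b]
  rw [if_pos (Finset.mem_univ b)]
  have : ∀ x : Fin n, Fvec n l (x, b) = Cvec n l (a, b) + Rvec n l (x, b) := fun x => rfl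
  rw [Finset.sum_congr rfl fun x _ => this x, Finset.sum_add_distrib]
  have hR : ∑ x : Fin n, Rvec n l (x, b) = -2 := by
    have : ∀ x : Fin n, Rvec n l (x, b)
        = -(if (x : ℤ) + 1 = l ∨ (x : ℤ) + 1 = (n : ℤ) + 1 - l then (1:ℝ) else 0) := by
      intro x; unfold Rvec; split_ifs <;> ring
    rw [Finset.sum_congr rfl fun x _ => this x, Finset.sum_neg_distrib, two_count n l hl1 hl2]
  rw [hR, Finset.sum_const, Finset.card_univ, Fintype.card_fin, nsmul_eq_mul]
  ring

lemma diagp_sum (n : ℕ) (l : ℤ) (s : ℤ) :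
    ∑ w : Fin n × Fin n, (if s = (w.1 : ℤ) + (w.2 : ℤ) then Fvec n l w else 0) = 0 := by
  have split : ∀ w : Fin n × Fin n,
      (if s = (w.1 : ℤ) + (w.2 : ℤ) then Fvec n l w else 0)
      = (if s = (w.1 : ℤ) + (w.2 : ℤ) then Cvec n l w else 0)
        + (if s = (w.1 : ℤ) + (w.2 : ℤ) then Rvec n l w else 0) := by
    intro w; unfold Fvec; split_ifs <;> simp
  rw [Finset.sum_congr rfl fun w _ => split w, Finset.sum_add_distrib]
  have key : ∑ w : Fin n × Fin n, (if s = (w.1 : ℤ) + (w.2 : ℤ) then Rvec n l w else 0)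
      = ∑ w : Fin n × Fin n, -(if s = (w.1 : ℤ) + (w.2 : ℤ) then Cvec n l w else 0) := by
    apply Fintype.sum_equiv (Equiv.prodComm (Fin n) (Fin n))
    rintro ⟨x, y⟩
    simp only [Equiv.prodComm_apply, Prod.swap_prod_mk]
    have hc : (s = (x : ℤ) + (y : ℤ)) ↔ (s = (y : ℤ) + (x : ℤ)) := by omega
    show (if s = (x : ℤ) + (y : ℤ) then Rvec n l (x, y) else 0)
      = -(if s = (y : ℤ) + (x : ℤ) then Cvec n l (y, x) else 0)
    by_cases h : s = (x : ℤ) + (y : ℤ)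
    · rw [if_pos h, if_pos (hc.mp h)]
      unfold Rvec Cvec; simp only
      split_ifs <;> simp_all
    · rw [if_neg h, if_neg (hc.not.mp h)]; ring
  rw [key, Finset.sum_neg_distrib]
  ring

lemma diagm_sum (n : ℕ) (l : ℤ) (s : ℤ) :
    ∑ w : Fin n × Fin n, (if s = (w.1 : ℤ) - (w.2 : ℤ) then Fvec n l w else 0) = 0 := by
  have split : ∀ w : Fin n × Fin n,
      (if s = (w.1 : ℤ) - (w.2 : ℤ) then Fvec n l w else 0)
      = (if s = (w.1 : ℤ) - (w.2 : ℤ) then Cvec n l w else 0)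
        + (if s = (w.1 : ℤ) - (w.2 : ℤ) then Rvec n l w else 0) := by
    intro w; unfold Fvec; split_ifs <;> simp
  rw [Finset.sum_congr rfl fun w _ => split w, Finset.sum_add_distrib]
  have hbij : Function.Bijective
      (fun p : Fin n × Fin n => ((p.2.rev, p.1.rev) : Fin n × Fin n)) := by
    apply Function.Involutive.bijective
    rintro ⟨x, y⟩
    simp [Fin.rev_rev]
  have key : (∑ w : Fin n × Fin n, (if s = (w.1 : ℤ) - (w.2 : ℤ) then Rvec n l w else 0))
      = ∑ w : Fin n × Fin n, -(if s = (w.1 : ℤ) - (w.2 : ℤ) then Cvec n l w else 0) := by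
    refine Fintype.sum_bijective _ hbij _ _ ?_
    rintro ⟨x, y⟩
    show (if s = (x : ℤ) - (y : ℤ) then Rvec n l (x, y) else 0)
      = -(if s = ((y.rev : Fin n) : ℤ) - ((x.rev : Fin n) : ℤ) then Cvec n l (y.rev, x.rev) else 0)
    have hx := x.is_lt
    have hy := y.is_lt
    have hrx : ((x.rev : Fin n) : ℤ) = (n : ℤ) - 1 - (x : ℤ) := by
      have h := Fin.val_rev x; omega
    have hry : ((y.rev : Fin n) : ℤ) = (n : ℤ) - 1 - (y : ℤ) := by
      have h := Fin.val_rev y; omega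
    have hc : (s = ((y.rev : Fin n) : ℤ) - ((x.rev : Fin n) : ℤ)) ↔ (s = (x : ℤ) - (y : ℤ)) := by
      rw [hrx, hry]; constructor <;> intro <;> omega
    by_cases h : s = (x : ℤ) - (y : ℤ)
    · rw [if_pos h, if_pos (hc.mpr h)]
      show (if (x : ℤ) + 1 = l ∨ (x : ℤ) + 1 = (n : ℤ) + 1 - l then (-1 : ℝ) else 0)
        = -(if ((x.rev : Fin n) : ℤ) + 1 = l ∨ ((x.rev : Fin n) : ℤ) + 1 = (n : ℤ) + 1 - l
            then (1 : ℝ) else 0)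
      have hcc : (((x.rev : Fin n) : ℤ) + 1 = l ∨ ((x.rev : Fin n) : ℤ) + 1 = (n : ℤ) + 1 - l)
          ↔ ((x : ℤ) + 1 = l ∨ (x : ℤ) + 1 = (n : ℤ) + 1 - l) := by
        rw [hrx]; constructor <;> intro hh <;> omega
      by_cases hcl : (x : ℤ) + 1 = l ∨ (x : ℤ) + 1 = (n : ℤ) + 1 - l
      · rw [if_pos hcl, if_pos (hcc.mpr hcl)]
      · rw [if_neg hcl, if_neg (hcc.not.mpr hcl)]; norm_num
    · rw [if_neg h, if_neg (hc.not.mpr h)]; ring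
  rw [key, Finset.sum_neg_distrib]
  ring

lemma eig_s13 (n : ℕ) (l : ℤ) (hl1 : 1 ≤ l) (hl2 : 2 * l + 1 ≤ n) :
    Matrix.toLin' ((queensGraph n).adjMatrix ℝ) (Fvec n l)
      = ((n : ℝ) - 4) • Fvec n l := by
  funext v
  obtain ⟨a, b⟩ := v
  rw [Matrix.toLin'_apply]
  have expand : ((queensGraph n).adjMatrix ℝ).mulVec (Fvec n l) (a, b)
      = ∑ w : Fin n × Fin n, (if (queensGraph n).Adj (a, b) w then Fvec n l w else 0) := by
    simp [Matrix.mulVec, dotProduct, SimpleGraph.adjMatrix_apply, ite_mul]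
  rw [expand, Finset.sum_congr rfl fun w _ => queens_pointwise n l (a, b) w]
  rw [Finset.sum_sub_distrib, Finset.sum_add_distrib, Finset.sum_add_distrib,
    Finset.sum_add_distrib]
  rw [row_sum n l hl1 hl2 a b, col_sum n l hl1 hl2 a b]
  rw [diagp_sum n l ((a : ℤ) + (b : ℤ)), diagm_sum n l ((a : ℤ) - (b : ℤ))]
  rw [Finset.sum_ite_eq' Finset.univ ((a, b) : Fin n × Fin n)
    (fun _ => 4 * Fvec n l (a, b)), if_pos (Finset.mem_univ _)]
  show 2 + ↑n * Rvec n l (a, b) + (↑n * Cvec n l (a, b) - 2) + 0 + 0 - 4 * Fvec n l (a, b)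
    = ((n : ℝ) - 4) * Fvec n l (a, b)
  unfold Fvec
  ring

lemma probe (n : ℕ) (hn : 4 ≤ n) (heven : Even n) (i l : Fin ((n - 2) / 2)) :
    Fvec n ((l : ℤ) + 1) (⟨n / 2, by omega⟩, ⟨(i : ℕ), by omega⟩)
      = if l = i then 1 else 0 := by
  obtain ⟨m, hm⟩ := heven
  have hi := i.is_lt
  have hl := l.is_lt
  unfold Fvec Cvec Rvec
  simp only
  have hR : ¬(((n / 2 : ℕ) : ℤ) + 1 = (l : ℤ) + 1 ∨
      ((n / 2 : ℕ) : ℤ) + 1 = (n : ℤ) + 1 - ((l : ℤ) + 1)) := by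
    push_cast; omega
  rw [if_neg hR, add_zero]
  have hC : (((i : ℕ) : ℤ) + 1 = (l : ℤ) + 1 ∨
      ((i : ℕ) : ℤ) + 1 = (n : ℤ) + 1 - ((l : ℤ) + 1)) ↔ l = i := by
    rw [Fin.ext_iff]; omega
  by_cases h : l = i
  · rw [if_pos (hC.mpr h), if_pos h]
  · rw [if_neg (hC.not.mpr h), if_neg h]

/-- for even `n ≥ 4`, `{F_{n,1}, …, F_{n,(n-2)/2}}` is linearly independent;
consequently `n-4` is an eigenvalue of `Q(n)` of multiplicity at least `(n-2)/2`. -/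
theorem stmt13 (n : ℕ) (hn : 4 ≤ n) (heven : Even n) :
    LinearIndependent ℝ (fun l : Fin ((n - 2) / 2) => Fvec n ((l : ℤ) + 1)) ∧
    Module.End.HasEigenvalue (Matrix.toLin' ((queensGraph n).adjMatrix ℝ)) ((n : ℝ) - 4) ∧
    (n - 2) / 2 ≤ Module.finrank ℝ
      (Module.End.eigenspace (Matrix.toLin' ((queensGraph n).adjMatrix ℝ)) ((n : ℝ) - 4)) := by
  obtain ⟨m, hm⟩ := heven
  have hbound : ∀ l : Fin ((n - 2) / 2), 1 ≤ (l : ℤ) + 1 ∧ 2 * ((l : ℤ) + 1) + 1 ≤ n := by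
    intro l; have := l.is_lt; constructor <;> omega
  have hmem : ∀ l : Fin ((n - 2) / 2), Fvec n ((l : ℤ) + 1) ∈
      Module.End.eigenspace (Matrix.toLin' ((queensGraph n).adjMatrix ℝ)) ((n : ℝ) - 4) := by
    intro l
    rw [Module.End.mem_eigenspace_iff]
    exact eig_s13 n ((l : ℤ) + 1) (hbound l).1 (hbound l).2
  have hli : LinearIndependent ℝ (fun l : Fin ((n - 2) / 2) => Fvec n ((l : ℤ) + 1)) := by
    rw [Fintype.linearIndependent_iff]
    intro g hg i
    have := congrFun hg (⟨n / 2, by omega⟩, ⟨(i : ℕ), by omega⟩)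
    simp only [Finset.sum_apply, Pi.smul_apply, smul_eq_mul, Pi.zero_apply] at this
    rw [Finset.sum_congr rfl (fun l _ => by
      rw [probe n hn ⟨m, hm⟩ i l])] at this
    simpa using this
  refine ⟨hli, ?_, ?_⟩
  · have h1 : (0 : ℕ) < (n - 2) / 2 := by omega
    set l0 : Fin ((n - 2) / 2) := ⟨0, h1⟩
    apply Module.End.hasEigenvalue_of_hasEigenvector
      (x := Fvec n ((l0 : ℤ) + 1))
    refine ⟨hmem l0, ?_⟩
    intro h0
    have := congrFun h0 (⟨n / 2, by omega⟩, ⟨(l0 : ℕ), by omega⟩)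
    rw [probe n hn ⟨m, hm⟩ l0 l0, if_pos rfl] at this
    simp at this
  · have hli2 : LinearIndependent ℝ (fun l : Fin ((n - 2) / 2) =>
        (⟨Fvec n ((l : ℤ) + 1), hmem l⟩ : Module.End.eigenspace
          (Matrix.toLin' ((queensGraph n).adjMatrix ℝ)) ((n : ℝ) - 4))) := by
      apply LinearIndependent.of_comp (Module.End.eigenspace _ _).subtype
      exact hli
    have := hli2.fintype_card_le_finrank
    simpa using this
end

section
/- For n ≥ 3, n-4 is an eigenvalue of the n-Queens graph Q(n): if n is even its multiplicity is at least (n-2)/2, and if n is odd its multiplicity is at least (n+1)/2. -/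
open Finset Matrix

-- pointwise decomposition
lemma adj_mul_decomp (n : ℕ) (x : Fin n × Fin n → ℝ) (v w : Fin n × Fin n) :
    (queensGraph n).adjMatrix ℝ v w * x w =
      ((if (v.1 : ℤ) = w.1 then 1 else 0) + (if (v.2 : ℤ) = w.2 then 1 else 0) +
       (if (v.1 : ℤ) + v.2 = w.1 + w.2 then 1 else 0) +
       (if (v.1 : ℤ) - v.2 = w.1 - w.2 then 1 else 0)) * x w
      - (if w = v then 4 * x v else 0) := by
  by_cases hw : w = v
  · subst hw
    simp [SimpleGraph.adjMatrix_apply]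
    ring
  · have hvw : v ≠ w := Ne.symm hw
    have hne : (v.1 : ℤ) ≠ w.1 ∨ (v.2 : ℤ) ≠ w.2 := by
      rw [Ne, Prod.ext_iff, not_and_or] at hvw
      rcases hvw with h | h
      · exact Or.inl (fun hc => h (Fin.ext (by exact_mod_cast hc)))
      · exact Or.inr (fun hc => h (Fin.ext (by exact_mod_cast hc)))
    have hAdj : (queensGraph n).Adj v w ↔ ((v.1 : ℤ) = w.1 ∨ (v.2 : ℤ) = w.2 ∨
        (v.1 : ℤ) + v.2 = w.1 + w.2 ∨ (v.1 : ℤ) - v.2 = w.1 - w.2) :=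
      ⟨And.right, fun h => ⟨hvw, h⟩⟩
    rw [SimpleGraph.adjMatrix_apply, if_neg hw]
    simp only [hAdj, sub_zero]
    congr 1
    split_ifs <;> first | (exfalso; omega) | norm_num

lemma mulVec_decomp (n : ℕ) (x : Fin n × Fin n → ℝ) (v : Fin n × Fin n) :
    ((queensGraph n).adjMatrix ℝ).mulVec x v =
      (∑ w : Fin n × Fin n, (if (v.1 : ℤ) = w.1 then 1 else 0) * x w) +
      (∑ w : Fin n × Fin n, (if (v.2 : ℤ) = w.2 then 1 else 0) * x w) +
      (∑ w : Fin n × Fin n, (if (v.1 : ℤ) + v.2 = w.1 + w.2 then 1 else 0) * x w) +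
      (∑ w : Fin n × Fin n, (if (v.1 : ℤ) - v.2 = w.1 - w.2 then 1 else 0) * x w)
      - 4 * x v := by
  have : ((queensGraph n).adjMatrix ℝ).mulVec x v
      = ∑ w : Fin n × Fin n, (queensGraph n).adjMatrix ℝ v w * x w := rfl
  rw [this, Finset.sum_congr rfl (fun w _ => adj_mul_decomp n x v w)]
  rw [Finset.sum_sub_distrib]
  congr 1
  · simp only [add_mul]
    rw [Finset.sum_add_distrib, Finset.sum_add_distrib, Finset.sum_add_distrib]
  · rw [Finset.sum_ite_eq' Finset.univ v (fun _ => 4 * x v)]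
    simp

lemma sum_row (n : ℕ) (g : Fin n → ℝ) (i : Fin n) :
    (∑ w : Fin n × Fin n, (if (i : ℤ) = w.1 then 1 else 0) * (g w.2 - g w.1))
      = (∑ t, g t) - n * g i := by
  rw [Fintype.sum_prod_type]
  have hc : ∀ p : Fin n, ((i : ℤ) = (p : ℤ)) = (p = i) := by
    intro p; simp only [eq_iff_iff, Fin.ext_iff]; omega
  simp only [hc, ite_mul, one_mul, zero_mul]
  have h2 : ∀ p : Fin n, (∑ q : Fin n, if p = i then g q - g p else 0)
      = if p = i then (∑ q : Fin n, (g q - g p)) else 0 := fun p => by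
    split_ifs <;> simp
  rw [Finset.sum_congr rfl fun p _ => h2 p,
    Finset.sum_ite_eq' Finset.univ i (fun p => ∑ q : Fin n, (g q - g p))]
  simp [Finset.sum_sub_distrib, Finset.card_univ, mul_comm]

lemma sum_col (n : ℕ) (g : Fin n → ℝ) (j : Fin n) :
    (∑ w : Fin n × Fin n, (if (j : ℤ) = w.2 then 1 else 0) * (g w.2 - g w.1))
      = n * g j - (∑ t, g t) := by
  rw [Fintype.sum_prod_type]
  have hc : ∀ q : Fin n, ((j : ℤ) = (q : ℤ)) = (q = j) := by
    intro q; simp only [eq_iff_iff, Fin.ext_iff]; omega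
  simp only [hc, ite_mul, one_mul, zero_mul]
  have h2 : ∀ p : Fin n, (∑ q : Fin n, if q = j then g q - g p else 0) = g j - g p :=
    fun p => by
      rw [Finset.sum_ite_eq' Finset.univ j (fun q => g q - g p)]; simp
  rw [Finset.sum_congr rfl fun p _ => h2 p]
  simp [Finset.sum_sub_distrib, Finset.card_univ, mul_comm]

lemma sum_diag1 (n : ℕ) (g : Fin n → ℝ) (i j : Fin n) :
    (∑ w : Fin n × Fin n, (if (i : ℤ) + j = w.1 + w.2 then 1 else 0) * (g w.2 - g w.1))
      = 0 := by
  set F : Fin n × Fin n → ℝ :=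
    fun w => (if (i : ℤ) + j = w.1 + w.2 then 1 else 0) * (g w.2 - g w.1) with hF
  have key : (∑ w : Fin n × Fin n, F w) = ∑ w : Fin n × Fin n, -F w := by
    rw [← Equiv.sum_comp (Equiv.prodComm (Fin n) (Fin n)) F]
    refine Finset.sum_congr rfl fun w _ => ?_
    simp only [hF, Equiv.prodComm_apply, Prod.fst_swap, Prod.snd_swap]
    have hcond : ((i : ℤ) + j = (w.2 : ℤ) + w.1) = ((i : ℤ) + j = (w.1 : ℤ) + w.2) := by
      simp only [eq_iff_iff]; omega
    simp only [hcond]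
    split_ifs <;> ring
  have h0 : (∑ w : Fin n × Fin n, -F w) = -(∑ w : Fin n × Fin n, F w) := by
    rw [Finset.sum_neg_distrib]
  linarith [key.trans h0]

lemma sum_diag2 (n : ℕ) (g : Fin n → ℝ) (hg : ∀ t : Fin n, g (Fin.rev t) = g t) (i j : Fin n) :
    (∑ w : Fin n × Fin n, (if (i : ℤ) - j = w.1 - w.2 then 1 else 0) * (g w.2 - g w.1))
      = 0 := by
  set F : Fin n × Fin n → ℝ :=
    fun w => (if (i : ℤ) - j = w.1 - w.2 then 1 else 0) * (g w.2 - g w.1) with hF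
  set e : Fin n × Fin n ≃ Fin n × Fin n :=
    (Fin.revPerm.prodCongr Fin.revPerm).trans (Equiv.prodComm (Fin n) (Fin n)) with he
  have key : (∑ w : Fin n × Fin n, F w) = ∑ w : Fin n × Fin n, -F w := by
    rw [← Equiv.sum_comp e F]
    refine Finset.sum_congr rfl fun w _ => ?_
    have hew : e w = (Fin.rev w.2, Fin.rev w.1) := rfl
    simp only [hF, hew, hg]
    have h1 := w.1.isLt; have h2 := w.2.isLt
    have hcond : ((i : ℤ) - j = ((Fin.rev w.2 : Fin n) : ℤ) - ((Fin.rev w.1 : Fin n) : ℤ))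
        = ((i : ℤ) - j = (w.1 : ℤ) - w.2) := by
      simp only [eq_iff_iff, Fin.val_rev]; omega
    simp only [hcond]
    split_ifs <;> ring
  have h0 : (∑ w : Fin n × Fin n, -F w) = -(∑ w : Fin n × Fin n, F w) := by
    rw [Finset.sum_neg_distrib]
  linarith [key.trans h0]

lemma eig_gen (n : ℕ) (g : Fin n → ℝ) (hg : ∀ t : Fin n, g (Fin.rev t) = g t) :
    ((queensGraph n).adjMatrix ℝ).mulVec (fun v => g v.2 - g v.1)
      = ((n : ℝ) - 4) • (fun v => g v.2 - g v.1) := by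
  funext v
  rw [mulVec_decomp, sum_row, sum_col, sum_diag1, sum_diag2 n g hg]
  simp only [Pi.smul_apply, smul_eq_mul]
  ring

def yd (n : ℕ) : Fin n × Fin n → ℝ := fun v =>
  (if (v.1 : ℕ) = v.2 then 1 else 0) - (if (v.1 : ℕ) + v.2 = n - 1 then 1 else 0)

lemma ind_mul (P A : Prop) [Decidable P] [Decidable A] :
    (if P then (1:ℝ) else 0) * (if A then 1 else 0) = if P ∧ A then 1 else 0 := by
  by_cases hP : P <;> by_cases hA : A <;> simp [hP, hA]

lemma sum_pair (n : ℕ) (P : Fin n × Fin n → Prop) [DecidablePred P] (σ : Fin n → Fin n)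
    (Q : Fin n → Prop) [DecidablePred Q] (h : ∀ p q : Fin n, P (p, q) ↔ (q = σ p ∧ Q p)) :
    (∑ w : Fin n × Fin n, if P w then (1:ℝ) else 0) = ∑ p : Fin n, if Q p then (1:ℝ) else 0 := by
  rw [Fintype.sum_prod_type]
  refine Finset.sum_congr rfl fun p _ => ?_
  simp only [h, ite_and]
  rw [Finset.sum_ite_eq' Finset.univ (σ p) (fun _ => if Q p then (1:ℝ) else 0)]
  simp

lemma cnt2 (n : ℕ) (c : ℤ) (h0 : 0 ≤ c) (h1 : c ≤ 2*n - 2) :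
    (∑ p : Fin n, if 2*(p:ℤ) = c then (1:ℝ) else 0) = if c % 2 = 0 then 1 else 0 := by
  by_cases hc : c % 2 = 0
  · rw [if_pos hc]
    have hlt : (c/2).toNat < n := by omega
    have hcond : ∀ p : Fin n, (2*(p:ℤ) = c) = (p = (⟨(c/2).toNat, hlt⟩ : Fin n)) := by
      intro p; simp only [eq_iff_iff, Fin.ext_iff]; omega
    simp only [hcond]
    rw [Finset.sum_ite_eq' Finset.univ _ (fun _ => (1:ℝ))]
    simp
  · rw [if_neg hc]
    apply Finset.sum_eq_zero
    intro p _; rw [if_neg]; omega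

lemma sum_const_ind (n : ℕ) (Q : Prop) [Decidable Q] :
    (∑ _p : Fin n, if Q then (1:ℝ) else 0) = if Q then (n:ℝ) else 0 := by
  rw [Finset.sum_const, Finset.card_univ, Fintype.card_fin]
  split_ifs <;> simp

lemma eig_y (n : ℕ) (hodd : n % 2 = 1) :
    ((queensGraph n).adjMatrix ℝ).mulVec (yd n) = ((n : ℝ) - 4) • yd n := by
  funext v
  obtain ⟨i, j⟩ := v
  have hi := i.isLt; have hj := j.isLt
  rw [mulVec_decomp]
  -- row sum
  have hR : (∑ w : Fin n × Fin n, (if ((i,j).1 : ℤ) = w.1 then 1 else 0) * yd n w) = 0 := by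
    rw [Fintype.sum_prod_type]
    have hc : ∀ p : Fin n, (((i,j).1 : ℤ) = (p : ℤ)) = (p = i) := by
      intro p; simp only [eq_iff_iff, Fin.ext_iff]; omega
    simp only [hc, ite_mul, one_mul, zero_mul]
    have h2 : ∀ p : Fin n, (∑ q : Fin n, if p = i then yd n (p, q) else 0)
        = if p = i then (∑ q : Fin n, yd n (p, q)) else 0 := fun p => by split_ifs <;> simp
    rw [Finset.sum_congr rfl fun p _ => h2 p,
      Finset.sum_ite_eq' Finset.univ i (fun p => ∑ q : Fin n, yd n (p, q))]
    simp only [Finset.mem_univ, if_true, yd]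
    rw [Finset.sum_sub_distrib]
    have e1 : (∑ q : Fin n, if ((i : Fin n) : ℕ) = (q : ℕ) then (1:ℝ) else 0) = 1 := by
      have hc2 : ∀ q : Fin n, (((i : Fin n) : ℕ) = (q : ℕ)) = (q = i) := by
        intro q; simp only [eq_iff_iff, Fin.ext_iff]; omega
      simp only [hc2]
      rw [Finset.sum_ite_eq' Finset.univ i (fun _ => (1:ℝ))]; simp
    have e2 : (∑ q : Fin n, if ((i : Fin n) : ℕ) + (q : ℕ) = n - 1 then (1:ℝ) else 0) = 1 := by
      have hc2 : ∀ q : Fin n, (((i : Fin n) : ℕ) + (q : ℕ) = n - 1) = (q = Fin.rev i) := by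
        intro q; have := q.isLt
        simp only [eq_iff_iff, Fin.ext_iff, Fin.val_rev]; omega
      simp only [hc2]
      rw [Finset.sum_ite_eq' Finset.univ (Fin.rev i) (fun _ => (1:ℝ))]; simp
    rw [e1, e2]; ring
  -- column sum
  have hC : (∑ w : Fin n × Fin n, (if ((i,j).2 : ℤ) = w.2 then 1 else 0) * yd n w) = 0 := by
    rw [Fintype.sum_prod_type]
    have hc : ∀ q : Fin n, (((i,j).2 : ℤ) = (q : ℤ)) = (q = j) := by
      intro q; simp only [eq_iff_iff, Fin.ext_iff]; omega
    simp only [hc, ite_mul, one_mul, zero_mul]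
    rw [Finset.sum_comm]
    have h2 : ∀ q : Fin n, (∑ p : Fin n, if q = j then yd n (p, q) else 0)
        = if q = j then (∑ p : Fin n, yd n (p, q)) else 0 := fun q => by split_ifs <;> simp
    rw [Finset.sum_congr rfl fun q _ => h2 q,
      Finset.sum_ite_eq' Finset.univ j (fun q => ∑ p : Fin n, yd n (p, q))]
    simp only [Finset.mem_univ, if_true, yd]
    rw [Finset.sum_sub_distrib]
    have e1 : (∑ p : Fin n, if (p : ℕ) = ((j : Fin n) : ℕ) then (1:ℝ) else 0) = 1 := by
      have hc2 : ∀ p : Fin n, ((p : ℕ) = ((j : Fin n) : ℕ)) = (p = j) := by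
        intro p; simp only [eq_iff_iff, Fin.ext_iff]; try omega
      simp only [hc2]
      rw [Finset.sum_ite_eq' Finset.univ j (fun _ => (1:ℝ))]; simp
    have e2 : (∑ p : Fin n, if (p : ℕ) + ((j : Fin n) : ℕ) = n - 1 then (1:ℝ) else 0) = 1 := by
      have hc2 : ∀ p : Fin n, ((p : ℕ) + ((j : Fin n) : ℕ) = n - 1) = (p = Fin.rev j) := by
        intro p; have := p.isLt
        simp only [eq_iff_iff, Fin.ext_iff, Fin.val_rev]; omega
      simp only [hc2]
      rw [Finset.sum_ite_eq' Finset.univ (Fin.rev j) (fun _ => (1:ℝ))]; simp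
    rw [e1, e2]; ring
  -- plus-diagonal sum
  have hD1 : (∑ w : Fin n × Fin n,
      (if ((i,j).1 : ℤ) + (i,j).2 = w.1 + w.2 then 1 else 0) * yd n w)
      = (if ((i:ℤ) + j) % 2 = 0 then 1 else 0)
        - (if (i : ℤ) + j = (n : ℤ) - 1 then (n:ℝ) else 0) := by
    simp only [yd, mul_sub, ind_mul]
    rw [Finset.sum_sub_distrib]
    have t1 : (∑ w : Fin n × Fin n,
        if ((i,j).1 : ℤ) + (i,j).2 = w.1 + w.2 ∧ (w.1 : ℕ) = w.2 then (1:ℝ) else 0)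
        = if ((i:ℤ) + j) % 2 = 0 then 1 else 0 := by
      rw [sum_pair n _ (fun p => p) (fun p => 2*(p:ℤ) = (i:ℤ) + j)
        (fun p q => by simp only [Fin.ext_iff]; omega)]
      exact cnt2 n ((i:ℤ) + j) (by omega) (by omega)
    have t2 : (∑ w : Fin n × Fin n,
        if ((i,j).1 : ℤ) + (i,j).2 = w.1 + w.2 ∧ (w.1 : ℕ) + w.2 = n - 1 then (1:ℝ) else 0)
        = if (i : ℤ) + j = (n : ℤ) - 1 then (n:ℝ) else 0 := by
      rw [sum_pair n _ (fun p => Fin.rev p) (fun _ => (i : ℤ) + j = (n : ℤ) - 1)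
        (fun p q => by
          have := p.isLt; have := q.isLt
          simp only [Fin.ext_iff, Fin.val_rev]; omega)]
      exact sum_const_ind n _
    rw [t1, t2]
  -- minus-diagonal sum
  have hD2 : (∑ w : Fin n × Fin n,
      (if ((i,j).1 : ℤ) - (i,j).2 = w.1 - w.2 then 1 else 0) * yd n w)
      = (if (i : ℤ) = j then (n:ℝ) else 0)
        - (if ((n:ℤ) - 1 + i - j) % 2 = 0 then 1 else 0) := by
    simp only [yd, mul_sub, ind_mul]
    rw [Finset.sum_sub_distrib]
    have t1 : (∑ w : Fin n × Fin n,
        if ((i,j).1 : ℤ) - (i,j).2 = w.1 - w.2 ∧ (w.1 : ℕ) = w.2 then (1:ℝ) else 0)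
        = if (i : ℤ) = j then (n:ℝ) else 0 := by
      rw [sum_pair n _ (fun p => p) (fun _ => (i : ℤ) = j)
        (fun p q => by simp only [Fin.ext_iff]; omega)]
      exact sum_const_ind n _
    have t2 : (∑ w : Fin n × Fin n,
        if ((i,j).1 : ℤ) - (i,j).2 = w.1 - w.2 ∧ (w.1 : ℕ) + w.2 = n - 1 then (1:ℝ) else 0)
        = if ((n:ℤ) - 1 + i - j) % 2 = 0 then 1 else 0 := by
      rw [sum_pair n _ (fun p => Fin.rev p) (fun p => 2*(p:ℤ) = (n:ℤ) - 1 + i - j)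
        (fun p q => by
          have := p.isLt; have := q.isLt
          simp only [Fin.ext_iff, Fin.val_rev]; omega)]
      exact cnt2 n ((n:ℤ) - 1 + i - j) (by omega) (by omega)
    rw [t1, t2]
  rw [hR, hC, hD1, hD2]
  have hpar : ((((i:ℤ) + j) % 2 = 0) : Prop) = ((((n:ℤ) - 1 + i - j) % 2 = 0) : Prop) := by
    simp only [eq_iff_iff]; omega
  have hq1 : (((i:ℤ) = j) : Prop) = (((i:ℕ) = (j:ℕ)) : Prop) := by
    simp only [eq_iff_iff]; omega
  have hq2 : (((i:ℤ) + j = (n:ℤ) - 1) : Prop) = (((i:ℕ) + (j:ℕ) = n - 1) : Prop) := by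
    simp only [eq_iff_iff]; omega
  simp only [hpar, hq1, hq2, Pi.smul_apply, smul_eq_mul, yd]
  split_ifs <;> ring

def gk (n k : ℕ) : Fin n → ℝ := fun t => if (t : ℕ) = k ∨ (t : ℕ) + k = n - 1 then 1 else 0

def xk (n k : ℕ) : Fin n × Fin n → ℝ := fun v => gk n k v.2 - gk n k v.1

lemma gk_symm (n k : ℕ) (t : Fin n) : gk n k (Fin.rev t) = gk n k t := by
  have := t.isLt
  have hc : ((Fin.rev t : Fin n) : ℕ) = k ∨ ((Fin.rev t : Fin n) : ℕ) + k = n - 1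
      ↔ ((t : ℕ) = k ∨ (t : ℕ) + k = n - 1) := by
    simp only [Fin.val_rev]; omega
  simp only [gk]
  rw [if_congr hc rfl rfl]

lemma eig_xk (n k : ℕ) :
    ((queensGraph n).adjMatrix ℝ).mulVec (xk n k) = ((n : ℝ) - 4) • xk n k :=
  eig_gen n (gk n k) (gk_symm n k)

lemma xk_mem (n k : ℕ) :
    xk n k ∈ Module.End.eigenspace (Matrix.toLin' ((queensGraph n).adjMatrix ℝ))
      ((n : ℝ) - 4) := by
  rw [Module.End.mem_eigenspace_iff, Matrix.toLin'_apply, eig_xk]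

lemma yd_mem (n : ℕ) (hodd : n % 2 = 1) :
    yd n ∈ Module.End.eigenspace (Matrix.toLin' ((queensGraph n).adjMatrix ℝ))
      ((n : ℝ) - 4) := by
  rw [Module.End.mem_eigenspace_iff, Matrix.toLin'_apply, eig_y n hodd]

-- evaluations
lemma gk_eval (n k : ℕ) (t : Fin n) :
    gk n k t = if (t : ℕ) = k ∨ (t : ℕ) + k = n - 1 then 1 else 0 := rfl

lemma has_eig (n : ℕ) (hn : 3 ≤ n) :
    Module.End.HasEigenvalue (Matrix.toLin' ((queensGraph n).adjMatrix ℝ)) ((n : ℝ) - 4) := by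
  apply Module.End.hasEigenvalue_of_hasEigenvector (x := xk n 1)
  refine ⟨xk_mem n 1, ?_⟩
  intro h
  have h1 : (1 : ℕ) < n := by omega
  have h0 : (0 : ℕ) < n := by omega
  have := congrFun h (⟨0, h0⟩, ⟨1, h1⟩)
  simp only [xk, gk, Pi.zero_apply] at this
  rw [if_pos (Or.inl trivial), if_neg (by omega : ¬((0:ℕ) = 1 ∨ (0:ℕ) + 1 = n - 1))] at this
  norm_num at this

lemma xk_eval (n m : ℕ) (hn : 3 ≤ n) (hm : 2*m + 1 ≤ n) (l l' : ℕ) (hl : l < m)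
    (hl' : l' < m) (h0 : (0:ℕ) < n) (hk : l + 1 < n) :
    xk n (l' + 1) (⟨0, h0⟩, ⟨l + 1, hk⟩) = if l' = l then 1 else 0 := by
  simp only [xk, gk]
  rw [if_neg (by omega : ¬((0:ℕ) = l' + 1 ∨ 0 + (l' + 1) = n - 1)),
    if_congr (show (l + 1 = l' + 1 ∨ (l + 1) + (l' + 1) = n - 1) ↔ (l' = l) by omega) rfl rfl]
  split_ifs <;> ring

lemma yd_eval0 (n : ℕ) (hn : 3 ≤ n) (l : ℕ) (hl2 : l + 1 < n - 1) (h0 : (0:ℕ) < n)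
    (hk : l + 1 < n) : yd n (⟨0, h0⟩, ⟨l + 1, hk⟩) = 0 := by
  simp only [yd]
  rw [if_neg (by omega : ¬((0:ℕ) = l + 1)), if_neg (by omega : ¬((0:ℕ) + (l+1) = n - 1))]
  ring

lemma indep_xk (n m : ℕ) (hn : 3 ≤ n) (hm : 2*m + 1 ≤ n) :
    LinearIndependent ℝ (fun l : Fin m => xk n ((l : ℕ) + 1)) := by
  rw [Fintype.linearIndependent_iff]
  intro c hc l
  have hl := l.isLt
  have h0 : (0:ℕ) < n := by omega
  have hk : (l : ℕ) + 1 < n := by omega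
  have hpt := congrFun hc (⟨0, h0⟩, ⟨(l : ℕ) + 1, hk⟩)
  simp only [Finset.sum_apply, Pi.smul_apply, smul_eq_mul, Pi.zero_apply] at hpt
  have hx : ∀ l' : Fin m, xk n ((l' : ℕ) + 1) (⟨0, h0⟩, ⟨(l : ℕ) + 1, hk⟩)
      = if l' = l then 1 else 0 := by
    intro l'
    rw [xk_eval n m hn hm (l : ℕ) (l' : ℕ) hl l'.isLt h0 hk]
    simp [Fin.ext_iff]
  rw [Finset.sum_congr rfl fun l' _ => by rw [hx l']] at hpt
  simp only [mul_ite, mul_one, mul_zero] at hpt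
  rwa [Finset.sum_ite_eq' Finset.univ l c, if_pos (Finset.mem_univ l)] at hpt

lemma indep_odd (n m : ℕ) (hn : 3 ≤ n) (hm : 2*m + 1 = n) :
    LinearIndependent ℝ (fun l : Fin (m+1) =>
      if h : (l : ℕ) < m then xk n ((l : ℕ) + 1) else yd n) := by
  rw [Fintype.linearIndependent_iff]
  intro c hc l
  have h0 : (0:ℕ) < n := by omega
  -- first: the coefficient of yd is zero
  have hlast : c (Fin.last m) = 0 := by
    have hpt := congrFun hc (⟨0, h0⟩, ⟨0, h0⟩)
    simp only [Finset.sum_apply, Pi.smul_apply, smul_eq_mul, Pi.zero_apply] at hpt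
    have hx : ∀ l' : Fin (m+1),
        (if h : (l' : ℕ) < m then xk n ((l' : ℕ) + 1) else yd n) (⟨0, h0⟩, ⟨0, h0⟩)
        = if l' = Fin.last m then 1 else 0 := by
      intro l'
      by_cases h : (l' : ℕ) < m
      · rw [dif_pos h, if_neg (by simp [Fin.ext_iff]; omega)]
        simp [xk]
      · rw [dif_neg h, if_pos (by have := l'.isLt; simp [Fin.ext_iff]; omega)]
        simp only [yd]
        rw [if_neg (by omega : ¬((0:ℕ) + 0 = n - 1))]
        norm_num
    rw [Finset.sum_congr rfl fun l' _ => by rw [hx l']] at hpt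
    simp only [mul_ite, mul_one, mul_zero] at hpt
    rwa [Finset.sum_ite_eq' Finset.univ (Fin.last m) c,
      if_pos (Finset.mem_univ _)] at hpt
  by_cases hl : (l : ℕ) < m
  · have hk : (l : ℕ) + 1 < n := by omega
    have hpt := congrFun hc (⟨0, h0⟩, ⟨(l : ℕ) + 1, hk⟩)
    simp only [Finset.sum_apply, Pi.smul_apply, smul_eq_mul, Pi.zero_apply] at hpt
    have hx : ∀ l' : Fin (m+1),
        (if h : (l' : ℕ) < m then xk n ((l' : ℕ) + 1) else yd n)
          (⟨0, h0⟩, ⟨(l : ℕ) + 1, hk⟩) = if l' = l then 1 else 0 := by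
      intro l'
      by_cases h : (l' : ℕ) < m
      · rw [dif_pos h, xk_eval n m hn (by omega) (l : ℕ) (l' : ℕ) hl h h0 hk]
        simp [Fin.ext_iff]
      · rw [dif_neg h, if_neg (by simp [Fin.ext_iff]; omega),
          yd_eval0 n hn (l : ℕ) (by omega) h0 hk]
    rw [Finset.sum_congr rfl fun l' _ => by rw [hx l']] at hpt
    simp only [mul_ite, mul_one, mul_zero] at hpt
    rwa [Finset.sum_ite_eq' Finset.univ l c, if_pos (Finset.mem_univ l)] at hpt
  · have : l = Fin.last m := by have := l.isLt; simp [Fin.ext_iff]; omega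
    rw [this]; exact hlast

/-- for `n ≥ 3`, `n-4` is an eigenvalue of `Q(n)`; its multiplicity is at
least `(n-2)/2` if `n` is even and at least `(n+1)/2` if `n` is odd. -/
theorem stmt16 (n : ℕ) (hn : 3 ≤ n) :
    Module.End.HasEigenvalue (Matrix.toLin' ((queensGraph n).adjMatrix ℝ)) ((n : ℝ) - 4) ∧
    (Even n → (n - 2) / 2 ≤ Module.finrank ℝ
      (Module.End.eigenspace (Matrix.toLin' ((queensGraph n).adjMatrix ℝ)) ((n : ℝ) - 4))) ∧
    (Odd n → (n + 1) / 2 ≤ Module.finrank ℝ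
      (Module.End.eigenspace (Matrix.toLin' ((queensGraph n).adjMatrix ℝ)) ((n : ℝ) - 4))) := by
  set E := Module.End.eigenspace (Matrix.toLin' ((queensGraph n).adjMatrix ℝ)) ((n : ℝ) - 4)
    with hE
  refine ⟨has_eig n hn, ?_, ?_⟩
  · intro hev
    have h2 : n % 2 = 0 := Nat.even_iff.mp hev
    have hmle : 2*((n - 2) / 2) + 1 ≤ n := by omega
    have li := indep_xk n ((n - 2) / 2) hn hmle
    have li2 : LinearIndependent ℝ (fun l : Fin ((n - 2) / 2) =>
        (⟨xk n ((l : ℕ) + 1), xk_mem n _⟩ : E)) :=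
      LinearIndependent.of_comp E.subtype li
    have hb := li2.fintype_card_le_finrank
    simpa using hb
  · intro hodd
    have h2 : n % 2 = 1 := Nat.odd_iff.mp hodd
    have hmeq : 2*((n - 1) / 2) + 1 = n := by omega
    have li := indep_odd n ((n - 1) / 2) hn hmeq
    have mem : ∀ l : Fin ((n - 1) / 2 + 1),
        (if h : (l : ℕ) < (n - 1) / 2 then xk n ((l : ℕ) + 1) else yd n) ∈ E := by
      intro l; by_cases h : (l : ℕ) < (n - 1) / 2
      · rw [dif_pos h]; exact xk_mem n _
      · rw [dif_neg h]; exact yd_mem n h2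
    have li2 : LinearIndependent ℝ (fun l : Fin ((n - 1) / 2 + 1) =>
        (⟨if h : (l : ℕ) < (n - 1) / 2 then xk n ((l : ℕ) + 1) else yd n, mem l⟩ : E)) :=
      LinearIndependent.of_comp E.subtype li
    have hb := li2.fintype_card_le_finrank
    have hcard : (n + 1) / 2 = (n - 1) / 2 + 1 := by omega
    rw [hcard]
    simpa using hb
end

section
/- For n = 4, the vector X_4 is an eigenvector of the adjacency matrix of the 4-Queens graph Q(4) with eigenvalue -4, and -4 is the least eigenvalue of Q(4). -/
open Finset Matrix

lemma fc0 : ((0 : Fin 4) : ℤ) = 0 := rfl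
lemma fc1 : ((1 : Fin 4) : ℤ) = 1 := rfl
lemma fc2 : ((2 : Fin 4) : ℤ) = 2 := rfl
lemma fc3 : ((3 : Fin 4) : ℤ) = 3 := rfl
lemma fn0 : ((0 : Fin 4) : ℕ) = 0 := rfl
lemma fn1 : ((1 : Fin 4) : ℕ) = 1 := rfl
lemma fn2 : ((2 : Fin 4) : ℕ) = 2 := rfl
lemma fn3 : ((3 : Fin 4) : ℕ) = 3 := rfl

set_option maxHeartbeats 1000000 in
lemma eigvec4 : (queensGraph 4).adjMatrix ℝ *ᵥ Xvec 4 1 1 = (-4 : ℝ) • Xvec 4 1 1 := by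
  funext v
  fin_cases v <;>
    simp [mulVec, dotProduct, Fintype.sum_prod_type, Fin.sum_univ_four, queensGraph, Xvec, X4ent,
      fc0, fc1, fc2, fc3, fn0, fn1, fn2, fn3, Prod.ext_iff] <;>
    norm_num

set_option maxHeartbeats 4000000 in
lemma psd4 (x : Fin 4 × Fin 4 → ℝ) :
    0 ≤ (∑ v, x v * ((queensGraph 4).adjMatrix ℝ *ᵥ x) v) + 4 * ∑ v, (x v)^2 := by
  have h : (∑ v, x v * ((queensGraph 4).adjMatrix ℝ *ᵥ x) v) + 4 * ∑ v, (x v)^2 =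
      (x (0,0)+x (0,1)+x (0,2)+x (0,3))^2 + (x (1,0)+x (1,1)+x (1,2)+x (1,3))^2 +
      (x (2,0)+x (2,1)+x (2,2)+x (2,3))^2 + (x (3,0)+x (3,1)+x (3,2)+x (3,3))^2 +
      (x (0,0)+x (1,0)+x (2,0)+x (3,0))^2 + (x (0,1)+x (1,1)+x (2,1)+x (3,1))^2 +
      (x (0,2)+x (1,2)+x (2,2)+x (3,2))^2 + (x (0,3)+x (1,3)+x (2,3)+x (3,3))^2 +
      (x (0,0))^2 + (x (0,1)+x (1,0))^2 + (x (0,2)+x (1,1)+x (2,0))^2 +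
      (x (0,3)+x (1,2)+x (2,1)+x (3,0))^2 + (x (1,3)+x (2,2)+x (3,1))^2 +
      (x (2,3)+x (3,2))^2 + (x (3,3))^2 +
      (x (0,3))^2 + (x (0,2)+x (1,3))^2 + (x (0,1)+x (1,2)+x (2,3))^2 +
      (x (0,0)+x (1,1)+x (2,2)+x (3,3))^2 + (x (1,0)+x (2,1)+x (3,2))^2 +
      (x (2,0)+x (3,1))^2 + (x (3,0))^2 := by
    simp (config := { decide := true }) only [mulVec, dotProduct, Fintype.sum_prod_type,
      Fin.sum_univ_four, SimpleGraph.adjMatrix_apply, queensGraph, Prod.mk.injEq,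
      fc0, fc1, fc2, fc3, ne_eq, Prod.ext_iff]
    norm_num
    ring
  rw [h]
  positivity

/-- `X₄` (here `Xvec 4 1 1`) is an eigenvector of `Q(4)` for the eigenvalue
`-4`, and `-4` is the least eigenvalue of `Q(4)`. -/
theorem stmt17 :
    (queensGraph 4).adjMatrix ℝ *ᵥ Xvec 4 1 1 = (-4 : ℝ) • Xvec 4 1 1 ∧
    Xvec 4 1 1 ≠ 0 ∧
    (∀ mu : ℝ,
      Module.End.HasEigenvalue (Matrix.toLin' ((queensGraph 4).adjMatrix ℝ)) mu →
        (-4 : ℝ) ≤ mu) := by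
  refine ⟨eigvec4, ?_, ?_⟩
  · intro h
    have := congrFun h ((0 : Fin 4), (1 : Fin 4))
    simp [Xvec, X4ent, fc0, fc1] at this
  · intro mu hmu
    obtain ⟨x, hx⟩ := hmu.exists_hasEigenvector
    have hAx : (queensGraph 4).adjMatrix ℝ *ᵥ x = mu • x := by
      have := hx.apply_eq_smul
      simpa [Matrix.toLin'_apply] using this
    obtain ⟨v0, hv0⟩ : ∃ v, x v ≠ 0 := by
      by_contra h; push_neg at h; exact hx.2 (funext h)
    have hs : 0 < ∑ v, (x v)^2 := by
      have h1 : ∀ v ∈ Finset.univ, (0:ℝ) ≤ (x v)^2 := fun v _ => sq_nonneg _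
      have h2 : (x v0)^2 ≤ ∑ v, (x v)^2 := Finset.single_le_sum h1 (mem_univ v0)
      have h3 : (0:ℝ) < (x v0)^2 :=
        lt_of_le_of_ne (sq_nonneg _) (Ne.symm (pow_ne_zero 2 hv0))
      linarith
    have hq : (∑ v, x v * ((queensGraph 4).adjMatrix ℝ *ᵥ x) v) = mu * ∑ v, (x v)^2 := by
      rw [hAx, Finset.mul_sum]
      exact Finset.sum_congr rfl fun v _ => by simp [Pi.smul_apply, smul_eq_mul]; ring
    have hk := psd4 x
    rw [hq] at hk
    nlinarith
end
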